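/- arXiv:2411.01983 — 10 statements merged into one kernel-verified Lean document; each statement's English description precedes it below -/
import Mathlib

section
/- Let (E, 𝓔, μ) be a measure space, X a normed space, Y a separable Banach space, and f : X × E → Y a function measurable with respect to Borel(X) ⊗ 𝓔. Suppose: (1) for every z ∈ E the function f(·,z) : X → Y is locally Lipschitz in the ball sense; (2) for every z ∈ E there is a Lipschitz function L_{f(·,z)} of f(·,z) such that for every r ≥ 0 the map z ↦ L_{f(·,z)}(r) is μ-integrable; (3) for every z ∈ E there is a boundedness function B_{f(·,z)} of f(·,z) such that for every r ≥ 0 the map z ↦ B_{f(·,z)}(r) is μ-integrable. Then the Bochner integrals g(x) := ∫_E f(x,z) μ(dz) define a locally Lipschitz function g : X → Y in the ball sense, and for every r ≥ 0 and all x₁, x₂, x ∈ X with ‖x₁‖, ‖x₂‖, ‖x‖ ≤ r one has ‖g(x₁) − g(x₂)‖ ≤ (∫_E L_{f(·,z)}(r) μ(dz))·‖x₁ − x₂‖ and ‖g(x)‖ ≤ ∫_E B_{f(·,z)}(r) μ(dz). -/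
open MeasureTheory

/-- Bochner integrals of a jointly measurable family of locally Lipschitz
functions, with integrable Lipschitz and boundedness functions, define a locally Lipschitz
function, with the explicit Lipschitz and boundedness estimates. -/
theorem bochner_integral_locallyLipschitz
    {X : Type*} [NormedAddCommGroup X] [NormedSpace ℝ X]
    [MeasurableSpace X] [BorelSpace X]
    {Y : Type*} [NormedAddCommGroup Y] [NormedSpace ℝ Y] [CompleteSpace Y] [MeasurableSpace Y] [BorelSpace Y]
    [TopologicalSpace.SeparableSpace Y]
    {E : Type*} [MeasurableSpace E] (μ : Measure E)
    (f : X → E → Y) (hf : Measurable (fun p : X × E => f p.1 p.2))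
    (L B : E → ℝ → ℝ)
    (hLmono : ∀ z : E, MonotoneOn (L z) (Set.Ici 0))
    (hLnn : ∀ z : E, ∀ r : ℝ, 0 ≤ r → 0 ≤ L z r)
    (hLip : ∀ z : E, ∀ r : ℝ, 0 ≤ r → ∀ x₁ x₂ : X, ‖x₁‖ ≤ r → ‖x₂‖ ≤ r →
      ‖f x₁ z - f x₂ z‖ ≤ L z r * ‖x₁ - x₂‖)
    (hLint : ∀ r : ℝ, 0 ≤ r → Integrable (fun z => L z r) μ)
    (hBmono : ∀ z : E, MonotoneOn (B z) (Set.Ici 0))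
    (hBnn : ∀ z : E, ∀ r : ℝ, 0 ≤ r → 0 ≤ B z r)
    (hBd : ∀ z : E, ∀ r : ℝ, 0 ≤ r → ∀ x : X, ‖x‖ ≤ r → ‖f x z‖ ≤ B z r)
    (hBint : ∀ r : ℝ, 0 ≤ r → Integrable (fun z => B z r) μ) :
    ∀ r : ℝ, 0 ≤ r →
      (∀ x₁ x₂ : X, ‖x₁‖ ≤ r → ‖x₂‖ ≤ r →
        ‖(∫ z, f x₁ z ∂μ) - ∫ z, f x₂ z ∂μ‖ ≤ (∫ z, L z r ∂μ) * ‖x₁ - x₂‖) ∧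
      (∀ x : X, ‖x‖ ≤ r → ‖∫ z, f x z ∂μ‖ ≤ ∫ z, B z r ∂μ) := by
  intro r hr
  have hmeas : ∀ x : X, AEStronglyMeasurable (fun z => f x z) μ := by
    intro x
    exact (hf.comp (measurable_const.prodMk measurable_id)).aestronglyMeasurable
  have hint : ∀ x : X, ‖x‖ ≤ r → Integrable (fun z => f x z) μ := by
    intro x hx
    refine Integrable.mono' (hBint r hr) (hmeas x) ?_
    exact Filter.Eventually.of_forall fun z => hBd z r hr x hx
  constructor
  · intro x₁ x₂ h1 h2
    rw [← integral_sub (hint x₁ h1) (hint x₂ h2)]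
    calc ‖∫ z, (f x₁ z - f x₂ z) ∂μ‖ ≤ ∫ z, ‖f x₁ z - f x₂ z‖ ∂μ :=
          norm_integral_le_integral_norm _
      _ ≤ ∫ z, L z r * ‖x₁ - x₂‖ ∂μ := by
          refine integral_mono ((hint x₁ h1).sub (hint x₂ h2)).norm
            ((hLint r hr).mul_const _) fun z => ?_
          exact hLip z r hr x₁ x₂ h1 h2
      _ = (∫ z, L z r ∂μ) * ‖x₁ - x₂‖ := integral_mul_const _ _
  · intro x hx
    calc ‖∫ z, f x z ∂μ‖ ≤ ∫ z, ‖f x z‖ ∂μ := norm_integral_le_integral_norm _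
      _ ≤ ∫ z, B z r ∂μ :=
          integral_mono (hint x hx).norm (hBint r hr) fun z => hBd z r hr x hx
end

section
/- Let ρ > 0 and let h : [0,∞) → ℝ belong to the Filipović space H_ρ with derivative g. Then h is bounded, and for every x ≥ 0 one has |h(x)| ≤ C_ρ·‖h‖_ρ, where C_ρ = 1 + 1/√ρ. In particular the embedding of H_ρ into L^∞([0,∞)) has operator norm at most C_ρ. -/
open MeasureTheory Filter

/-- `h : [0,∞) → ℝ` belongs to the Filipović space `H_ρ` with derivative `g`:
`g` is (a.e.) measurable on `[0,∞)`, `h x = h 0 + ∫_0^x g(t) dt` for all `x ≥ 0`, and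
`∫_0^∞ g(t)² e^{ρ t} dt < ∞`. -/
def MemFil (ρ : ℝ) (h g : ℝ → ℝ) : Prop :=
  AEMeasurable g (volume.restrict (Set.Ici (0:ℝ))) ∧
  (∀ x : ℝ, 0 ≤ x → h x = h 0 + ∫ t in (0:ℝ)..x, g t) ∧
  IntegrableOn (fun t => (g t) ^ 2 * Real.exp (ρ * t)) (Set.Ici (0:ℝ))

/-- The Filipović norm `‖h‖_ρ = (h(0)² + ∫_0^∞ g(t)² e^{ρ t} dt)^{1/2}`. -/
noncomputable def filNorm (ρ : ℝ) (h g : ℝ → ℝ) : ℝ :=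
  Real.sqrt ((h 0) ^ 2 + ∫ t in Set.Ici (0:ℝ), (g t) ^ 2 * Real.exp (ρ * t))

lemma ptwise (ρ t c : ℝ) (hc : 0 < c) (g : ℝ) :
    |g| ≤ g ^ 2 * Real.exp (ρ * t) / (2 * c) + c * Real.exp (-(ρ * t)) / 2 := by
  set a := Real.exp (ρ * t / 2) with ha
  set b := Real.exp (-(ρ * t) / 2) with hb
  have h1 : Real.exp (ρ * t) = a ^ 2 := by rw [ha, sq, ← Real.exp_add]; ring_nf
  have h2 : Real.exp (-(ρ * t)) = b ^ 2 := by rw [hb, sq, ← Real.exp_add]; ring_nf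
  have h3 : a * b = 1 := by rw [ha, hb, ← Real.exp_add]; ring_nf; exact Real.exp_zero
  have e : (|g| * a - c * b) ^ 2 = g ^ 2 * a ^ 2 + c ^ 2 * b ^ 2 - 2 * c * |g| * (a * b) := by
    rw [← sq_abs g]; ring
  rw [h3, mul_one] at e
  have key : 2 * c * |g| ≤ g ^ 2 * Real.exp (ρ * t) + c ^ 2 * Real.exp (-(ρ * t)) := by
    rw [h1, h2]; nlinarith [sq_nonneg (|g| * a - c * b)]
  have h4 : |g| ≤ (g ^ 2 * Real.exp (ρ * t) + c ^ 2 * Real.exp (-(ρ * t))) / (2 * c) := by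
    rw [le_div_iff₀ (by positivity)]; linarith
  calc |g| ≤ _ := h4
    _ = g ^ 2 * Real.exp (ρ * t) / (2 * c) + c * Real.exp (-(ρ * t)) / 2 := by
        field_simp

lemma expint (ρ x : ℝ) (hρ : 0 < ρ) (hx : 0 ≤ x) :
    ∫ t in Set.Ioc (0:ℝ) x, Real.exp (-(ρ * t)) ≤ 1 / ρ := by
  rw [← intervalIntegral.integral_of_le hx]
  have h := intervalIntegral.integral_comp_mul_left (f := Real.exp) (a := (0:ℝ)) (b := x)
    (c := -ρ) (by linarith : (-ρ:ℝ) ≠ 0)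
  have heq : (∫ t in (0:ℝ)..x, Real.exp (-(ρ * t))) = (1 - Real.exp (-(ρ * x))) / ρ := by
    have : ∀ t : ℝ, Real.exp (-(ρ * t)) = Real.exp (-ρ * t) := by intro t; ring_nf
    have hne : ρ ≠ 0 := hρ.ne'
    simp_rw [this]
    rw [h]
    simp [smul_eq_mul]
    field_simp
    have h2 : ρ * ρ⁻¹ = 1 := mul_inv_cancel₀ hne
    linear_combination
  rw [heq]
  have : 0 ≤ Real.exp (-(ρ * x)) := (Real.exp_pos _).le
  rw [div_le_div_iff₀ hρ hρ]
  nlinarith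

lemma step (ρ : ℝ) (hρ : 0 < ρ) (g : ℝ → ℝ)
    (hg : AEMeasurable g (volume.restrict (Set.Ici (0:ℝ))))
    (hInt : IntegrableOn (fun t => (g t) ^ 2 * Real.exp (ρ * t)) (Set.Ici (0:ℝ)))
    (x c : ℝ) (hx : 0 ≤ x) (hc : 0 < c) :
    ∫ t in Set.Ioc (0:ℝ) x, |g t| ≤
      (∫ t in Set.Ici (0:ℝ), (g t) ^ 2 * Real.exp (ρ * t)) / (2 * c) + c / (2 * ρ) := by
  have hsub : Set.Ioc (0:ℝ) x ⊆ Set.Ici 0 := fun t ht => ht.1.le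
  have hInt1 : IntegrableOn (fun t => (g t) ^ 2 * Real.exp (ρ * t)) (Set.Ioc 0 x) :=
    hInt.mono_set hsub
  have hInt2 : IntegrableOn (fun t : ℝ => Real.exp (-(ρ * t))) (Set.Ioc 0 x) :=
    (Real.continuous_exp.comp (by continuity)).integrableOn_Ioc
  have hIntA : IntegrableOn (fun t => (g t) ^ 2 * Real.exp (ρ * t) / (2 * c)) (Set.Ioc 0 x) :=
    hInt1.div_const _
  have hIntB : IntegrableOn (fun t : ℝ => c * Real.exp (-(ρ * t)) / 2) (Set.Ioc 0 x) :=
    (hInt2.const_mul c).div_const 2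
  have hgm : AEStronglyMeasurable (fun t => |g t|) (volume.restrict (Set.Ioc (0:ℝ) x)) := by
    have := ((hg.mono_measure (Measure.restrict_mono hsub le_rfl)).aestronglyMeasurable).norm
    simpa [Real.norm_eq_abs] using this
  have hIg : IntegrableOn (fun t => |g t|) (Set.Ioc 0 x) := by
    apply Integrable.mono' (hIntA.add hIntB) hgm
    filter_upwards with t
    rw [Real.norm_eq_abs, abs_abs]
    exact ptwise ρ t c hc (g t)
  have hmono : (∫ t in Set.Ioc (0:ℝ) x, |g t|) ≤
      ∫ t in Set.Ioc (0:ℝ) x, ((g t) ^ 2 * Real.exp (ρ * t) / (2 * c) + c * Real.exp (-(ρ * t)) / 2) :=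
    setIntegral_mono_on hIg (hIntA.add hIntB) measurableSet_Ioc
      (fun t _ => ptwise ρ t c hc (g t))
  rw [integral_add hIntA hIntB] at hmono
  have e1 : (∫ t in Set.Ioc (0:ℝ) x, (g t) ^ 2 * Real.exp (ρ * t) / (2 * c)) ≤
      (∫ t in Set.Ici (0:ℝ), (g t) ^ 2 * Real.exp (ρ * t)) / (2 * c) := by
    rw [integral_div]
    apply div_le_div_of_nonneg_right ?_ (by positivity) |>.trans_eq rfl
    · exact setIntegral_mono_set hInt
        (Filter.Eventually.of_forall (fun t => by positivity))
        (HasSubset.Subset.eventuallyLE hsub)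
  have e2 : (∫ t in Set.Ioc (0:ℝ) x, c * Real.exp (-(ρ * t)) / 2) ≤ c / (2 * ρ) := by
    rw [integral_div, integral_const_mul]
    have := expint ρ x hρ hx
    have h5 : c * (∫ t in Set.Ioc (0:ℝ) x, Real.exp (-(ρ * t))) ≤ c * (1 / ρ) :=
      mul_le_mul_of_nonneg_left this hc.le
    have h6 : c * (1 / ρ) / 2 = c / (2 * ρ) := by rw [mul_one_div, div_div, mul_comm ρ 2]
    linarith
  linarith

lemma key_bound (ρ : ℝ) (hρ : 0 < ρ) (g : ℝ → ℝ)
    (hg : AEMeasurable g (volume.restrict (Set.Ici (0:ℝ))))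
    (hInt : IntegrableOn (fun t => (g t) ^ 2 * Real.exp (ρ * t)) (Set.Ici (0:ℝ)))
    (x : ℝ) (hx : 0 ≤ x) :
    |∫ t in (0:ℝ)..x, g t| ≤
      Real.sqrt (∫ t in Set.Ici (0:ℝ), (g t) ^ 2 * Real.exp (ρ * t)) / Real.sqrt ρ := by
  set I := ∫ t in Set.Ici (0:ℝ), (g t) ^ 2 * Real.exp (ρ * t) with hI
  have hI0 : 0 ≤ I := setIntegral_nonneg measurableSet_Ici (fun t _ => by positivity)
  have habs : |∫ t in (0:ℝ)..x, g t| ≤ ∫ t in Set.Ioc (0:ℝ) x, |g t| := by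
    rw [intervalIntegral.integral_of_le hx]
    simpa [Real.norm_eq_abs] using
      norm_integral_le_integral_norm (μ := volume.restrict (Set.Ioc (0:ℝ) x)) g
  have hsq : 0 ≤ Real.sqrt I / Real.sqrt ρ := by positivity
  rcases eq_or_lt_of_le hI0 with hIz | hIpos
  · have hA : (∫ t in Set.Ioc (0:ℝ) x, |g t|) ≤ 0 := by
      apply le_of_forall_pos_le_add
      intro ε hε
      have hstep := step ρ hρ g hg hInt x (2 * ρ * ε) hx (by positivity)
      rw [← hI, ← hIz] at hstep
      have : (0:ℝ) / (2 * (2 * ρ * ε)) + (2 * ρ * ε) / (2 * ρ) = ε := by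
        rw [zero_div, zero_add, mul_div_assoc]
        field_simp
      linarith
    calc |∫ t in (0:ℝ)..x, g t| ≤ _ := habs
      _ ≤ 0 := hA
      _ ≤ _ := hsq
  · have hsI : 0 < Real.sqrt I := Real.sqrt_pos.mpr hIpos
    have hsρ : 0 < Real.sqrt ρ := Real.sqrt_pos.mpr hρ
    have hstep := step ρ hρ g hg hInt x (Real.sqrt I * Real.sqrt ρ) hx (by positivity)
    rw [← hI] at hstep
    have heq : I / (2 * (Real.sqrt I * Real.sqrt ρ)) + (Real.sqrt I * Real.sqrt ρ) / (2 * ρ)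
        = Real.sqrt I / Real.sqrt ρ := by
      have h1 : Real.sqrt I ^ 2 = I := Real.sq_sqrt hI0
      have h2 : Real.sqrt ρ ^ 2 = ρ := Real.sq_sqrt hρ.le
      field_simp
      linear_combination (-ρ) * h1 + Real.sqrt I ^ 2 * h2
    linarith

theorem filipovic_sup_bound' (ρ : ℝ) (hρ : 0 < ρ) (h g : ℝ → ℝ)
    (hg : AEMeasurable g (volume.restrict (Set.Ici (0:ℝ))))
    (hrep : ∀ x : ℝ, 0 ≤ x → h x = h 0 + ∫ t in (0:ℝ)..x, g t)
    (hInt : IntegrableOn (fun t => (g t) ^ 2 * Real.exp (ρ * t)) (Set.Ici (0:ℝ))) :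
    ∀ x : ℝ, 0 ≤ x → |h x| ≤ (1 + 1 / Real.sqrt ρ) *
      Real.sqrt ((h 0) ^ 2 + ∫ t in Set.Ici (0:ℝ), (g t) ^ 2 * Real.exp (ρ * t)) := by
  intro x hx
  set I := ∫ t in Set.Ici (0:ℝ), (g t) ^ 2 * Real.exp (ρ * t) with hI
  set N := Real.sqrt ((h 0) ^ 2 + I) with hN
  have hI0 : 0 ≤ I := setIntegral_nonneg measurableSet_Ici (fun t _ => by positivity)
  have hsρ : 0 < Real.sqrt ρ := Real.sqrt_pos.mpr hρ
  have h0le : |h 0| ≤ N := by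
    rw [hN, ← Real.sqrt_sq_eq_abs]
    exact Real.sqrt_le_sqrt (by linarith)
  have hIle : Real.sqrt I ≤ N := Real.sqrt_le_sqrt (by nlinarith [sq_nonneg (h 0)])
  have hkey := key_bound ρ hρ g hg hInt x hx
  rw [← hI] at hkey
  have hdiv : Real.sqrt I / Real.sqrt ρ ≤ N / Real.sqrt ρ := by gcongr
  calc |h x| = |h 0 + ∫ t in (0:ℝ)..x, g t| := by rw [hrep x hx]
    _ ≤ |h 0| + |∫ t in (0:ℝ)..x, g t| := abs_add_le _ _
    _ ≤ N + N / Real.sqrt ρ := by linarith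
    _ = (1 + 1 / Real.sqrt ρ) * N := by ring

/-- every `h ∈ H_ρ` is bounded, with `|h(x)| ≤ C_ρ ‖h‖_ρ` for all `x ≥ 0`,
where `C_ρ = 1 + 1/√ρ`. -/
theorem filipovic_sup_bound (ρ : ℝ) (hρ : 0 < ρ) (h g : ℝ → ℝ)
    (hmem : MemFil ρ h g) :
    (∃ M : ℝ, ∀ x : ℝ, 0 ≤ x → |h x| ≤ M) ∧
    ∀ x : ℝ, 0 ≤ x → |h x| ≤ (1 + 1 / Real.sqrt ρ) * filNorm ρ h g := by
  obtain ⟨hg, hrep, hInt⟩ := hmem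
  have main := filipovic_sup_bound' ρ hρ h g hg hrep hInt
  have hfil : filNorm ρ h g =
      Real.sqrt ((h 0) ^ 2 + ∫ t in Set.Ici (0:ℝ), (g t) ^ 2 * Real.exp (ρ * t)) := rfl
  rw [← hfil] at main
  exact ⟨⟨(1 + 1 / Real.sqrt ρ) * filNorm ρ h g, main⟩, main⟩
end

section
/- Let ρ > 0 and let h : [0,∞) → ℝ belong to the Filipović space H_ρ with derivative g. Then the limit h(∞) := lim_{x→∞} h(x) exists in ℝ, i.e., there exists L ∈ ℝ such that h(x) → L as x → ∞. -/
open MeasureTheory Filter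

/-- for every `h ∈ H_ρ`, the limit `h(∞) = lim_{x→∞} h(x)` exists in `ℝ`. -/
theorem filipovic_limit_exists (ρ : ℝ) (hρ : 0 < ρ) (h g : ℝ → ℝ)
    (hmem : MemFil ρ h g) :
    ∃ L : ℝ, Tendsto h atTop (nhds L) := by
  obtain ⟨hmeas, hrep, hint⟩ := hmem
  -- g is integrable on Ici 0
  have hexp : IntegrableOn (fun t => Real.exp (-ρ * t)) (Set.Ici (0:ℝ)) := by
    rw [integrableOn_Ici_iff_integrableOn_Ioi]
    simpa [neg_mul, mul_comm] using exp_neg_integrableOn_Ioi 0 hρ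
  have hgint : IntegrableOn g (Set.Ici (0:ℝ)) := by
    have hbound : IntegrableOn
        (fun t => ((g t) ^ 2 * Real.exp (ρ * t) + Real.exp (-ρ * t)) / 2)
        (Set.Ici (0:ℝ)) := (hint.add hexp).div_const 2
    refine Integrable.mono' hbound hmeas.aestronglyMeasurable ?_
    refine Filter.Eventually.of_forall fun t => ?_
    have ha : 0 < Real.exp (ρ * t / 2) := Real.exp_pos _
    have h1 : Real.exp (ρ * t) = Real.exp (ρ * t / 2) ^ 2 := by
      rw [← Real.exp_nat_mul]; ring_nf
    have h2 : Real.exp (-ρ * t) = (Real.exp (ρ * t / 2))⁻¹ ^ 2 := by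
      rw [← Real.exp_neg, ← Real.exp_nat_mul]; ring_nf
    have key : (|g t| * Real.exp (ρ * t / 2) - (Real.exp (ρ * t / 2))⁻¹) ^ 2 ≥ 0 :=
      sq_nonneg _
    have hinv : Real.exp (ρ * t / 2) * (Real.exp (ρ * t / 2))⁻¹ = 1 :=
      mul_inv_cancel₀ ha.ne'
    have habs : |g t| ^ 2 = (g t) ^ 2 := sq_abs _
    rw [Real.norm_eq_abs, h1, h2]
    nlinarith [abs_nonneg (g t), sq_nonneg (|g t| * Real.exp (ρ * t / 2))]
  -- interval integrals converge
  have hIoi : IntegrableOn g (Set.Ioi (0:ℝ)) :=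
    hgint.mono_set Set.Ioi_subset_Ici_self
  have htend : Tendsto (fun x => ∫ t in (0:ℝ)..x, g t) atTop
      (nhds (∫ t in Set.Ioi (0:ℝ), g t)) :=
    MeasureTheory.intervalIntegral_tendsto_integral_Ioi 0 hIoi tendsto_id
  refine ⟨h 0 + ∫ t in Set.Ioi (0:ℝ), g t, ?_⟩
  have : Tendsto (fun x => h 0 + ∫ t in (0:ℝ)..x, g t) atTop
      (nhds (h 0 + ∫ t in Set.Ioi (0:ℝ), g t)) := tendsto_const_nhds.add htend
  refine this.congr' ?_
  filter_upwards [eventually_ge_atTop (0:ℝ)] with x hx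
  exact (hrep x hx).symm
end

section
/- Let ρ > 0. There exists a constant K > 0, depending only on ρ, such that for all functions h, k : [0,∞) → ℝ belonging to the Filipović space H_ρ with derivatives g_h and g_k respectively, the pointwise product h·k belongs to H_ρ with derivative g_h·k + h·g_k (in particular ∫_0^∞ (g_h(t)k(t) + h(t)g_k(t))² e^{ρt} dt < ∞), and ‖h·k‖_ρ ≤ K·‖h‖_ρ·‖k‖_ρ. Moreover, if lim_{x→∞} h(x) = 0, then lim_{x→∞} (h·k)(x) = 0. -/
open MeasureTheory Filter

namespace FilAux

lemma amgm (c ρ y t : ℝ) (hc : 0 < c) :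
    |y| ≤ (c * (y ^ 2 * Real.exp (ρ * t)) + c⁻¹ * Real.exp (-(ρ * t))) / 2 := by
  set u := Real.sqrt c with hu
  set v := Real.sqrt (Real.exp (ρ * t)) with hv
  have hu0 : 0 < u := Real.sqrt_pos.mpr hc
  have hv0 : 0 < v := Real.sqrt_pos.mpr (Real.exp_pos _)
  have hu2 : u * u = c := Real.mul_self_sqrt hc.le
  have hv2 : v * v = Real.exp (ρ * t) := Real.mul_self_sqrt (Real.exp_pos _).le
  have hvinv : Real.exp (-(ρ * t)) = (v * v)⁻¹ := by rw [hv2, Real.exp_neg]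
  have hcinv : c⁻¹ = (u * u)⁻¹ := by rw [hu2]
  have hy : |y| ^ 2 = y ^ 2 := sq_abs y
  have h2ab := two_mul_le_add_sq (u * |y| * v) (u⁻¹ * v⁻¹)
  have hab : (u * |y| * v) * (u⁻¹ * v⁻¹) = |y| := by
    field_simp
  have ha : (u * |y| * v) ^ 2 = c * (y ^ 2 * Real.exp (ρ * t)) := by
    rw [mul_pow, mul_pow, hy, ← hu2, ← hv2]; ring
  have hb : (u⁻¹ * v⁻¹) ^ 2 = c⁻¹ * Real.exp (-(ρ * t)) := by
    rw [hcinv, hvinv, mul_inv, mul_inv, mul_pow]; ring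
  rw [ha, hb] at h2ab
  have h3 : 2 * (u * |y| * v) * (u⁻¹ * v⁻¹) = 2 * |y| := by
    rw [mul_assoc, hab]
  linarith

lemma expInt {ρ : ℝ} (hρ : 0 < ρ) :
    IntegrableOn (fun t => Real.exp (-(ρ * t))) (Set.Ici (0:ℝ)) := by
  have := exp_neg_integrableOn_Ioi 0 hρ
  rw [integrableOn_Ici_iff_integrableOn_Ioi]
  simpa [neg_mul] using this

lemma expIntVal {ρ : ℝ} (hρ : 0 < ρ) :
    ∫ t in Set.Ici (0:ℝ), Real.exp (-(ρ * t)) ≤ 1 / ρ := by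
  have hderiv : ∀ x ∈ Set.Ici (0:ℝ),
      HasDerivAt (fun x => -Real.exp (-(ρ * x)) / ρ) (Real.exp (-(ρ * x))) x := by
    intro x _
    have h1 : HasDerivAt (fun x : ℝ => -(ρ * x)) (-ρ) x := by
      simpa using ((hasDerivAt_id x).const_mul ρ).fun_neg
    have h2 : HasDerivAt (fun x : ℝ => Real.exp (-(ρ * x))) (Real.exp (-(ρ * x)) * (-ρ)) x :=
      h1.exp
    have h3 : HasDerivAt (fun x => -Real.exp (-(ρ * x)) / ρ) (-(Real.exp (-(ρ * x)) * -ρ) / ρ) x :=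
      (h2.fun_neg).div_const ρ
    convert h3 using 1
    rw [mul_neg, neg_neg, mul_div_assoc, div_self hρ.ne', mul_one]
  have htend : Tendsto (fun x => -Real.exp (-(ρ * x)) / ρ) atTop (nhds 0) := by
    have h1 : Tendsto (fun x : ℝ => -(ρ * x)) atTop atBot := by
      apply tendsto_neg_atBot_iff.mpr
      exact Tendsto.const_mul_atTop hρ tendsto_id
    have h2 : Tendsto (fun x : ℝ => Real.exp (-(ρ * x))) atTop (nhds 0) :=
      Real.tendsto_exp_atBot.comp h1
    have := (h2.neg).div_const ρ
    simpa using this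
  have := integral_Ioi_of_hasDerivAt_of_tendsto' hderiv
    ((expInt hρ).mono_set Set.Ioi_subset_Ici_self) htend
  rw [MeasureTheory.integral_Ici_eq_integral_Ioi, this]
  have : -(ρ * 0) = 0 := by ring
  rw [this, Real.exp_zero]
  have h9 : (0:ℝ) - -1 / ρ = 1 / ρ := by ring
  rw [h9]

lemma deriv_int {ρ : ℝ} (hρ : 0 < ρ) {g : ℝ → ℝ}
    (hmeas : AEMeasurable g (volume.restrict (Set.Ici (0:ℝ))))
    (hint : IntegrableOn (fun t => (g t) ^ 2 * Real.exp (ρ * t)) (Set.Ici (0:ℝ))) :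
    IntegrableOn g (Set.Ici (0:ℝ)) ∧
      ∫ t in Set.Ici (0:ℝ), |g t| ≤
        Real.sqrt (∫ t in Set.Ici (0:ℝ), (g t) ^ 2 * Real.exp (ρ * t)) / Real.sqrt ρ := by
  set A := ∫ t in Set.Ici (0:ℝ), (g t) ^ 2 * Real.exp (ρ * t) with hA
  have hA0 : 0 ≤ A := by
    apply setIntegral_nonneg measurableSet_Ici
    intro t _
    positivity
  have hIg : IntegrableOn g (Set.Ici (0:ℝ)) := by
    apply Integrable.mono' (((hint.const_mul 1).add ((expInt hρ).const_mul 1⁻¹)).div_const 2)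
      hmeas.aestronglyMeasurable
    filter_upwards with t
    rw [Real.norm_eq_abs]
    exact amgm 1 ρ (g t) t one_pos
  refine ⟨hIg, ?_⟩
  have key : ∀ c : ℝ, 0 < c →
      ∫ t in Set.Ici (0:ℝ), |g t| ≤ (c * A + c⁻¹ * (1 / ρ)) / 2 := by
    intro c hc
    have h1 : ∫ t in Set.Ici (0:ℝ), |g t| ≤
        ∫ t in Set.Ici (0:ℝ),
          (c * ((g t) ^ 2 * Real.exp (ρ * t)) + c⁻¹ * Real.exp (-(ρ * t))) / 2 := by
      apply integral_mono_ae hIg.abs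
        (((hint.const_mul c).add ((expInt hρ).const_mul c⁻¹)).div_const 2)
      filter_upwards with t
      exact amgm c ρ (g t) t hc
    have h2 : ∫ t in Set.Ici (0:ℝ),
          (c * ((g t) ^ 2 * Real.exp (ρ * t)) + c⁻¹ * Real.exp (-(ρ * t))) / 2
        = (c * A + c⁻¹ * ∫ t in Set.Ici (0:ℝ), Real.exp (-(ρ * t))) / 2 := by
      rw [integral_div, integral_add (hint.const_mul c) ((expInt hρ).const_mul c⁻¹),
        integral_const_mul, integral_const_mul, hA]
    have h3 : (c * A + c⁻¹ * ∫ t in Set.Ici (0:ℝ), Real.exp (-(ρ * t))) / 2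
        ≤ (c * A + c⁻¹ * (1 / ρ)) / 2 := by
      have := expIntVal hρ
      have hcinv : (0:ℝ) ≤ c⁻¹ := (inv_pos.mpr hc).le
      nlinarith
    rw [h2] at h1
    linarith
  rcases eq_or_lt_of_le hA0 with hA0' | hA0'
  · -- A = 0
    rw [← hA0', Real.sqrt_zero, zero_div]
    refine le_of_forall_pos_le_add ?_
    intro ε hε
    have hc : (0:ℝ) < (2 * ρ * ε)⁻¹ := by positivity
    have := key _ hc
    rw [← hA0'] at this
    calc ∫ t in Set.Ici (0:ℝ), |g t| ≤ ((2 * ρ * ε)⁻¹ * 0 + ((2 * ρ * ε)⁻¹)⁻¹ * (1 / ρ)) / 2 :=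
          this
      _ = ε := by rw [inv_inv]; field_simp; ring
      _ ≤ 0 + ε := by linarith
  · -- 0 < A
    have hsA : 0 < Real.sqrt A := Real.sqrt_pos.mpr hA0'
    have hsρ : 0 < Real.sqrt ρ := Real.sqrt_pos.mpr hρ
    have hc : (0:ℝ) < (Real.sqrt A * Real.sqrt ρ)⁻¹ := by positivity
    have := key _ hc
    have heq : ((Real.sqrt A * Real.sqrt ρ)⁻¹ * A + ((Real.sqrt A * Real.sqrt ρ)⁻¹)⁻¹ * (1 / ρ)) / 2
        = Real.sqrt A / Real.sqrt ρ := by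
      have e1 : Real.sqrt A * Real.sqrt A = A := Real.mul_self_sqrt hA0
      have e2 : Real.sqrt ρ * Real.sqrt ρ = ρ := Real.mul_self_sqrt hρ.le
      have t1 : (Real.sqrt A * Real.sqrt ρ)⁻¹ * A = Real.sqrt A / Real.sqrt ρ := by
        rw [← e1]; field_simp; rw [Real.sqrt_sq hsA.le]
      have t2 : ((Real.sqrt A * Real.sqrt ρ)⁻¹)⁻¹ * (1 / ρ) = Real.sqrt A / Real.sqrt ρ := by
        rw [inv_inv]; rw [show (1:ℝ)/ρ = 1/(Real.sqrt ρ * Real.sqrt ρ) from by rw [e2]]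
        field_simp
      rw [t1, t2]; ring
    rw [heq] at this
    exact this


lemma primitive_bound {f : ℝ → ℝ} (hf : Integrable f (volume : Measure ℝ)) (t : ℝ) :
    |∫ s in (0:ℝ)..t, f s| ≤ ∫ s, |f s| := by
  have h1 : ‖∫ s in (0:ℝ)..t, f s‖ ≤ ∫ s in Set.uIoc 0 t, ‖f s‖ :=
    intervalIntegral.norm_integral_le_integral_norm_uIoc
  have h2 : ∫ s in Set.uIoc 0 t, ‖f s‖ ≤ ∫ s, ‖f s‖ :=
    setIntegral_le_integral hf.norm (Filter.Eventually.of_forall fun s => norm_nonneg _)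
  simpa [Real.norm_eq_abs] using h1.trans h2

lemma triangle_swap {f g : ℝ → ℝ} (hf : Integrable f (volume : Measure ℝ))
    (hg : Integrable g (volume : Measure ℝ)) {x : ℝ} (hx : 0 ≤ x) :
    (∫ t in Set.Ioc (0:ℝ) x, f t * ∫ s in (0:ℝ)..t, g s)
      + (∫ t in Set.Ioc (0:ℝ) x, (∫ s in (0:ℝ)..t, f s) * g t)
      = (∫ t in Set.Ioc (0:ℝ) x, f t) * (∫ t in Set.Ioc (0:ℝ) x, g t) := by
  set I : Set ℝ := Set.Ioc (0:ℝ) x with hI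
  set μ : Measure ℝ := volume.restrict I with hμ
  set Φ : ℝ × ℝ → ℝ := fun p => {q : ℝ × ℝ | q.2 ≤ q.1}.indicator (fun q => f q.1 * g q.2) p
    with hΦ
  have hmeasI : MeasurableSet I := measurableSet_Ioc
  have hΦint : Integrable Φ (μ.prod μ) := by
    apply Integrable.indicator
    · exact (hf.restrict (s := I)).mul_prod (hg.restrict (s := I))
    · exact measurableSet_le measurable_snd measurable_fst
  have hF : Continuous fun t => ∫ s in (0:ℝ)..t, f s := hf.continuous_primitive 0
  set Cf : ℝ := ∫ t in Set.Ioc (0:ℝ) x, f t with hCf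
  -- step 1 : left term equals iterated integral of Φ
  have step1 : (∫ t in I, f t * ∫ s in (0:ℝ)..t, g s) = ∫ t, (∫ s, Φ (t, s) ∂μ) ∂μ := by
    rw [hμ]
    apply setIntegral_congr_fun hmeasI
    intro t ht
    have htI : t ∈ Set.Ioc (0:ℝ) x := ht
    have h1 : ∀ s : ℝ, Φ (t, s) = (Set.Iic t).indicator (fun s => f t * g s) s := by
      intro s
      simp only [hΦ, Set.indicator_apply, Set.mem_setOf_eq, Set.mem_Iic]
    have hset : Set.Iic t ∩ I = Set.Ioc (0:ℝ) t := by
      ext s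
      simp only [hI, Set.mem_inter_iff, Set.mem_Iic, Set.mem_Ioc]
      constructor
      · rintro ⟨h1', h2', _⟩; exact ⟨h2', h1'⟩
      · rintro ⟨h1', h2'⟩; exact ⟨h2', h1', le_trans h2' htI.2⟩
    calc f t * ∫ s in (0:ℝ)..t, g s
        = f t * ∫ s in Set.Ioc (0:ℝ) t, g s := by
          rw [intervalIntegral.integral_of_le htI.1.le]
      _ = ∫ s in Set.Ioc (0:ℝ) t, f t * g s := by rw [integral_const_mul]
      _ = ∫ s, Φ (t, s) ∂μ := by
          simp_rw [h1]
          rw [hμ, integral_indicator measurableSet_Iic,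
            Measure.restrict_restrict measurableSet_Iic, hset]
  -- step 2 : swap the order
  have step2 : ∫ t, (∫ s, Φ (t, s) ∂μ) ∂μ = ∫ s, (∫ t, Φ (t, s) ∂μ) ∂μ := by
    apply integral_integral_swap (f := fun t s => Φ (t, s))
    exact hΦint
  -- step 3 : inner integral computation after swap
  have step3 : ∫ s, (∫ t, Φ (t, s) ∂μ) ∂μ
      = ∫ s in I, (Cf - ∫ u in (0:ℝ)..s, f u) * g s := by
    rw [hμ]
    apply setIntegral_congr_fun hmeasI
    intro s hs
    have hsI : s ∈ Set.Ioc (0:ℝ) x := hs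
    have h1 : ∀ t : ℝ, Φ (t, s) = (Set.Ici s).indicator (fun t => f t * g s) t := by
      intro t
      simp only [hΦ, Set.indicator_apply, Set.mem_setOf_eq, Set.mem_Ici]
    have hset : Set.Ici s ∩ I = Set.Icc s x := by
      ext t
      simp only [hI, Set.mem_inter_iff, Set.mem_Ici, Set.mem_Ioc, Set.mem_Icc]
      constructor
      · rintro ⟨h1', _, h3'⟩; exact ⟨h1', h3'⟩
      · rintro ⟨h1', h2'⟩; exact ⟨h1', lt_of_lt_of_le hsI.1 h1', h2'⟩
    calc ∫ t, Φ (t, s) ∂μ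
        = ∫ t in Set.Icc s x, f t * g s := by
          simp_rw [h1]
          rw [hμ, integral_indicator measurableSet_Ici,
            Measure.restrict_restrict measurableSet_Ici, hset]
      _ = (∫ t in Set.Icc s x, f t) * g s := by rw [integral_mul_const]
      _ = (∫ t in (s:ℝ)..x, f t) * g s := by
          rw [MeasureTheory.integral_Icc_eq_integral_Ioc,
            intervalIntegral.integral_of_le hsI.2]
      _ = (Cf - ∫ u in (0:ℝ)..s, f u) * g s := by
          congr 1
          rw [hCf, ← intervalIntegral.integral_of_le hx]
          rw [← intervalIntegral.integral_interval_sub_left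
            hf.intervalIntegrable hf.intervalIntegrable]
  -- step 4 : split the resulting integral
  have hFg : Integrable (fun s => (∫ u in (0:ℝ)..s, f u) * g s) μ := by
    apply Integrable.bdd_mul (c := ∫ u, |f u|) (hg.restrict (s := I)) hF.aestronglyMeasurable
    exact ae_of_all _ fun s => by simpa [Real.norm_eq_abs] using primitive_bound hf s
  have step4 : ∫ s in I, (Cf - ∫ u in (0:ℝ)..s, f u) * g s
      = Cf * (∫ t in Set.Ioc (0:ℝ) x, g t) - ∫ s in I, (∫ u in (0:ℝ)..s, f u) * g s := by
    simp_rw [sub_mul]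
    rw [integral_sub ((hg.restrict (s := I)).const_mul Cf) hFg, integral_const_mul]
  rw [step1, step2, step3, step4]
  ring


lemma prod_primitive {f g : ℝ → ℝ} (hf : Integrable f (volume : Measure ℝ))
    (hg : Integrable g (volume : Measure ℝ)) (a b : ℝ) {x : ℝ} (hx : 0 ≤ x) :
    (a + ∫ t in (0:ℝ)..x, f t) * (b + ∫ t in (0:ℝ)..x, g t)
      = a * b + ∫ t in (0:ℝ)..x,
          (f t * (b + ∫ s in (0:ℝ)..t, g s) + (a + ∫ s in (0:ℝ)..t, f s) * g t) := by
  have hF : Continuous fun t => ∫ s in (0:ℝ)..t, f s := hf.continuous_primitive 0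
  have hG : Continuous fun t => ∫ s in (0:ℝ)..t, g s := hg.continuous_primitive 0
  set I : Set ℝ := Set.Ioc (0:ℝ) x with hI
  have i1 : Integrable (fun t => f t * b) (volume.restrict I) :=
    (hf.restrict (s := I)).mul_const b
  have i2 : Integrable (fun t => f t * ∫ s in (0:ℝ)..t, g s) (volume.restrict I) := by
    have h1 : Integrable (fun t => (∫ s in (0:ℝ)..t, g s) * f t) (volume.restrict I) :=
      Integrable.bdd_mul (c := ∫ s, |g s|) (hf.restrict (s := I)) hG.aestronglyMeasurable
        (ae_of_all _ fun t => by simpa [Real.norm_eq_abs] using primitive_bound hg t)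
    exact h1.congr (ae_of_all _ fun t => mul_comm _ _)
  have i3 : Integrable (fun t => a * g t) (volume.restrict I) :=
    (hg.restrict (s := I)).const_mul a
  have i4 : Integrable (fun t => (∫ s in (0:ℝ)..t, f s) * g t) (volume.restrict I) :=
    Integrable.bdd_mul (c := ∫ s, |f s|) (hg.restrict (s := I)) hF.aestronglyMeasurable
      (ae_of_all _ fun t => by simpa [Real.norm_eq_abs] using primitive_bound hf t)
  have hTS := triangle_swap hf hg hx
  rw [← hI] at hTS
  rw [intervalIntegral.integral_of_le hx, intervalIntegral.integral_of_le hx,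
    intervalIntegral.integral_of_le hx, ← hI]
  have i12 : Integrable (fun t => f t * b + f t * ∫ s in (0:ℝ)..t, g s)
      (volume.restrict I) := i1.add i2
  have i34 : Integrable (fun t => a * g t + (∫ s in (0:ℝ)..t, f s) * g t)
      (volume.restrict I) := i3.add i4
  have e0 : ∫ t in I, (f t * (b + ∫ s in (0:ℝ)..t, g s)
        + (a + ∫ s in (0:ℝ)..t, f s) * g t)
      = ∫ t in I, ((f t * b + f t * ∫ s in (0:ℝ)..t, g s)
        + (a * g t + (∫ s in (0:ℝ)..t, f s) * g t)) := by
    apply setIntegral_congr_fun measurableSet_Ioc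
    intro t _
    ring
  rw [e0, integral_add i12 i34, integral_add i1 i2, integral_add i3 i4,
    integral_mul_const, integral_const_mul]
  linear_combination -hTS


/-- Extension of the derivative to a measurable, globally integrable function. -/
lemma exists_ext {ρ : ℝ} (hρ : 0 < ρ) {h gh : ℝ → ℝ} (hh : MemFil ρ h gh) :
    ∃ f : ℝ → ℝ, Measurable f ∧ Integrable f (volume : Measure ℝ) ∧
      gh =ᵐ[volume.restrict (Set.Ici (0:ℝ))] f ∧
      (∀ x : ℝ, 0 ≤ x → h x = h 0 + ∫ t in (0:ℝ)..x, f t) ∧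
      (∀ x : ℝ, 0 ≤ x → |h x| ≤ |h 0| + ∫ t, |f t|) ∧
      |h 0| + (∫ t, |f t|) ≤ (1 + 1 / Real.sqrt ρ) * filNorm ρ h gh := by
  obtain ⟨hmeas, hrep, hint⟩ := hh
  obtain ⟨hgInt, hgBound⟩ := deriv_int hρ hmeas hint
  set gh' : ℝ → ℝ := hmeas.mk gh with hgh'
  have hm' : Measurable gh' := hmeas.measurable_mk
  have hae : gh =ᵐ[volume.restrict (Set.Ici (0:ℝ))] gh' := hmeas.ae_eq_mk
  set f : ℝ → ℝ := (Set.Ici (0:ℝ)).indicator gh' with hf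
  have hfm : Measurable f := hm'.indicator measurableSet_Ici
  have haef : gh =ᵐ[volume.restrict (Set.Ici (0:ℝ))] f := by
    refine hae.trans ?_
    filter_upwards [ae_restrict_mem measurableSet_Ici] with t ht
    rw [hf, Set.indicator_of_mem ht]
  have hfInt : Integrable f (volume : Measure ℝ) := by
    rw [hf, integrable_indicator_iff measurableSet_Ici]
    exact (hgInt.congr hae)
  -- the representation with f
  have hrepf : ∀ x : ℝ, 0 ≤ x → h x = h 0 + ∫ t in (0:ℝ)..x, f t := by
    intro x hx
    rw [hrep x hx]
    congr 1
    apply intervalIntegral.integral_congr_ae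
    have h1 : ∀ᵐ t ∂(volume : Measure ℝ), t ∈ Set.Ici (0:ℝ) → gh t = f t :=
      (ae_restrict_iff' measurableSet_Ici).mp haef
    filter_upwards [h1] with t ht htI
    rw [Set.uIoc_of_le hx] at htI
    exact ht (le_of_lt htI.1)
  -- |f| integral equals the integral of |gh| over Ici 0
  have habs : (∫ t, |f t|) = ∫ t in Set.Ici (0:ℝ), |gh t| := by
    have h1 : ∀ t, |f t| = (Set.Ici (0:ℝ)).indicator (fun t => |gh' t|) t := by
      intro t
      rw [hf]
      by_cases ht : t ∈ Set.Ici (0:ℝ)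
      · rw [Set.indicator_of_mem ht, Set.indicator_of_mem ht]
      · rw [Set.indicator_of_notMem ht, Set.indicator_of_notMem ht, abs_zero]
    simp_rw [h1]
    rw [integral_indicator measurableSet_Ici]
    apply integral_congr_ae
    filter_upwards [hae] with t ht
    rw [ht]
  refine ⟨f, hfm, hfInt, haef, hrepf, ?_, ?_⟩
  · intro x hx
    rw [hrepf x hx]
    have := primitive_bound hfInt x
    calc |h 0 + ∫ t in (0:ℝ)..x, f t| ≤ |h 0| + |∫ t in (0:ℝ)..x, f t| := abs_add_le _ _
      _ ≤ |h 0| + ∫ t, |f t| := by linarith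
  · rw [habs]
    set A := ∫ t in Set.Ici (0:ℝ), (gh t) ^ 2 * Real.exp (ρ * t) with hA
    have hA0 : 0 ≤ A := by
      apply setIntegral_nonneg measurableSet_Ici
      intro t _
      positivity
    have hN : filNorm ρ h gh = Real.sqrt ((h 0) ^ 2 + A) := rfl
    have hsρ : 0 < Real.sqrt ρ := Real.sqrt_pos.mpr hρ
    have hb1 : |h 0| ≤ filNorm ρ h gh := by
      rw [hN, ← Real.sqrt_sq_eq_abs]
      apply Real.sqrt_le_sqrt
      linarith
    have hb2 : Real.sqrt A ≤ filNorm ρ h gh := by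
      rw [hN]
      apply Real.sqrt_le_sqrt
      nlinarith [sq_nonneg (h 0)]
    have hb3 : ∫ t in Set.Ici (0:ℝ), |gh t| ≤ Real.sqrt A / Real.sqrt ρ := hgBound
    have hNnn : 0 ≤ filNorm ρ h gh := Real.sqrt_nonneg _
    calc |h 0| + ∫ t in Set.Ici (0:ℝ), |gh t|
        ≤ filNorm ρ h gh + Real.sqrt A / Real.sqrt ρ := by linarith
      _ ≤ filNorm ρ h gh + filNorm ρ h gh / Real.sqrt ρ := by
          apply add_le_add_right
          exact div_le_div_of_nonneg_right hb2 hsρ.le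
      _ = (1 + 1 / Real.sqrt ρ) * filNorm ρ h gh := by ring

end FilAux

open FilAux

/-- `H_ρ` is an algebra for pointwise multiplication: there exists `K > 0`,
depending only on `ρ`, such that for all `h, k ∈ H_ρ` with derivatives `g_h, g_k`, the
product `h·k` belongs to `H_ρ` with derivative `g_h·k + h·g_k` and
`‖h·k‖_ρ ≤ K ‖h‖_ρ ‖k‖_ρ`; moreover if `h(x) → 0` as `x → ∞` then `(h·k)(x) → 0`. -/
theorem filipovic_algebra (ρ : ℝ) (hρ : 0 < ρ) :
    ∃ K : ℝ, 0 < K ∧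
      ∀ h k gh gk : ℝ → ℝ, MemFil ρ h gh → MemFil ρ k gk →
        MemFil ρ (fun x => h x * k x) (fun t => gh t * k t + h t * gk t) ∧
        filNorm ρ (fun x => h x * k x) (fun t => gh t * k t + h t * gk t)
          ≤ K * filNorm ρ h gh * filNorm ρ k gk ∧
        (Tendsto h atTop (nhds 0) →
          Tendsto (fun x => h x * k x) atTop (nhds 0)) := by
  set Cρ : ℝ := 1 + 1 / Real.sqrt ρ with hCρ
  have hsρ : 0 < Real.sqrt ρ := Real.sqrt_pos.mpr hρ
  have hCρ0 : 0 < Cρ := by positivity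
  refine ⟨Real.sqrt (1 + 4 * Cρ ^ 2), Real.sqrt_pos.mpr (by positivity), ?_⟩
  intro h k gh gk hh hk
  obtain ⟨f, hfm, hfInt, haef, hrepf, hfbd, hfnorm⟩ := exists_ext hρ hh
  obtain ⟨g, hgm, hgInt, haeg, hrepg, hgbd, hgnorm⟩ := exists_ext hρ hk
  set Ch : ℝ := |h 0| + ∫ t, |f t| with hCh
  set Ck : ℝ := |k 0| + ∫ t, |g t| with hCk
  have hCh0 : 0 ≤ Ch :=
    add_nonneg (abs_nonneg _) (integral_nonneg fun t => abs_nonneg _)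
  have hCk0 : 0 ≤ Ck :=
    add_nonneg (abs_nonneg _) (integral_nonneg fun t => abs_nonneg _)
  set Nh : ℝ := filNorm ρ h gh with hNh
  set Nk : ℝ := filNorm ρ k gk with hNk
  have hNh0 : 0 ≤ Nh := Real.sqrt_nonneg _
  have hNk0 : 0 ≤ Nk := Real.sqrt_nonneg _
  have hP : Continuous fun s => h 0 + ∫ t in (0:ℝ)..s, f t :=
    continuous_const.add (hfInt.continuous_primitive 0)
  have hQ : Continuous fun s => k 0 + ∫ t in (0:ℝ)..s, g t :=
    continuous_const.add (hgInt.continuous_primitive 0)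
  -- a.e. identification of the derivative of the product
  have haeD : (fun t => gh t * k t + h t * gk t)
      =ᵐ[volume.restrict (Set.Ici (0:ℝ))]
      (fun t => f t * (k 0 + ∫ s in (0:ℝ)..t, g s)
        + (h 0 + ∫ s in (0:ℝ)..t, f s) * g t) := by
    filter_upwards [haef, haeg, ae_restrict_mem measurableSet_Ici] with t h1 h2 ht
    rw [← h1, ← h2, ← hrepf t ht, ← hrepg t ht]
  have hDmeas : AEMeasurable (fun t => gh t * k t + h t * gk t)
      (volume.restrict (Set.Ici (0:ℝ))) := by
    apply AEMeasurable.congr ?_ haeD.symm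
    exact ((hfm.aemeasurable.mul hQ.measurable.aemeasurable).add
      (hP.measurable.aemeasurable.mul hgm.aemeasurable))
  -- pointwise bounds
  have hhb : ∀ t : ℝ, 0 ≤ t → |h t| ≤ Ch := fun t ht => hfbd t ht
  have hkb : ∀ t : ℝ, 0 ≤ t → |k t| ≤ Ck := fun t ht => hgbd t ht
  have hptwise : ∀ t ∈ Set.Ici (0:ℝ),
      (gh t * k t + h t * gk t) ^ 2 * Real.exp (ρ * t)
        ≤ 2 * Ck ^ 2 * ((gh t) ^ 2 * Real.exp (ρ * t))
          + 2 * Ch ^ 2 * ((gk t) ^ 2 * Real.exp (ρ * t)) := by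
    intro t ht
    have h1 := abs_le.mp (hhb t ht)
    have h2 := abs_le.mp (hkb t ht)
    have h3 : (h t) ^ 2 ≤ Ch ^ 2 := sq_le_sq' h1.1 h1.2
    have h4 : (k t) ^ 2 ≤ Ck ^ 2 := sq_le_sq' h2.1 h2.2
    have key : (gh t * k t + h t * gk t) ^ 2
        ≤ 2 * Ck ^ 2 * (gh t) ^ 2 + 2 * Ch ^ 2 * (gk t) ^ 2 := by
      nlinarith [sq_nonneg (gh t * k t - h t * gk t),
        mul_nonneg (sq_nonneg (gh t)) (sub_nonneg.mpr h4),
        mul_nonneg (sq_nonneg (gk t)) (sub_nonneg.mpr h3)]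
    calc (gh t * k t + h t * gk t) ^ 2 * Real.exp (ρ * t)
        ≤ (2 * Ck ^ 2 * (gh t) ^ 2 + 2 * Ch ^ 2 * (gk t) ^ 2) * Real.exp (ρ * t) :=
          mul_le_mul_of_nonneg_right key (Real.exp_pos _).le
      _ = 2 * Ck ^ 2 * ((gh t) ^ 2 * Real.exp (ρ * t))
          + 2 * Ch ^ 2 * ((gk t) ^ 2 * Real.exp (ρ * t)) := by ring
  have hdom : IntegrableOn (fun t => 2 * Ck ^ 2 * ((gh t) ^ 2 * Real.exp (ρ * t))
      + 2 * Ch ^ 2 * ((gk t) ^ 2 * Real.exp (ρ * t))) (Set.Ici (0:ℝ)) :=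
    (hh.2.2.const_mul (2 * Ck ^ 2)).add (hk.2.2.const_mul (2 * Ch ^ 2))
  have hexpMeas : AEMeasurable (fun t => Real.exp (ρ * t))
      (volume.restrict (Set.Ici (0:ℝ))) :=
    (Real.measurable_exp.comp (measurable_id.const_mul ρ)).aemeasurable
  have hDint : IntegrableOn
      (fun t => (gh t * k t + h t * gk t) ^ 2 * Real.exp (ρ * t)) (Set.Ici (0:ℝ)) := by
    apply Integrable.mono' hdom
      (((hDmeas.pow_const 2).mul hexpMeas).aestronglyMeasurable)
    filter_upwards [ae_restrict_mem measurableSet_Ici] with t ht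
    rw [Real.norm_eq_abs, abs_of_nonneg (by simp only [Pi.mul_apply]; positivity)]
    exact hptwise t ht
  -- representation of the product
  have hrepP : ∀ x : ℝ, 0 ≤ x → h x * k x
      = h 0 * k 0 + ∫ t in (0:ℝ)..x, (gh t * k t + h t * gk t) := by
    intro x hx
    have hder_eq : ∫ t in (0:ℝ)..x, (gh t * k t + h t * gk t)
        = ∫ t in (0:ℝ)..x, (f t * (k 0 + ∫ s in (0:ℝ)..t, g s)
          + (h 0 + ∫ s in (0:ℝ)..t, f s) * g t) := by
      apply intervalIntegral.integral_congr_ae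
      filter_upwards [(ae_restrict_iff' measurableSet_Ici).mp haef,
        (ae_restrict_iff' measurableSet_Ici).mp haeg] with t h1 h2 htI
      rw [Set.uIoc_of_le hx] at htI
      have ht0 : t ∈ Set.Ici (0:ℝ) := le_of_lt htI.1
      rw [← h1 ht0, ← h2 ht0, ← hrepf t ht0, ← hrepg t ht0]
    rw [hder_eq, hrepf x hx, hrepg x hx]
    exact prod_primitive hfInt hgInt (h 0) (k 0) hx
  refine ⟨⟨hDmeas, hrepP, hDint⟩, ?_, ?_⟩
  · -- the norm estimate
    set Ah : ℝ := ∫ t in Set.Ici (0:ℝ), (gh t) ^ 2 * Real.exp (ρ * t) with hAh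
    set Ak : ℝ := ∫ t in Set.Ici (0:ℝ), (gk t) ^ 2 * Real.exp (ρ * t) with hAk
    set Ap : ℝ := ∫ t in Set.Ici (0:ℝ),
      (gh t * k t + h t * gk t) ^ 2 * Real.exp (ρ * t) with hAp
    have hAh0 : 0 ≤ Ah := setIntegral_nonneg measurableSet_Ici fun t _ => by positivity
    have hAk0 : 0 ≤ Ak := setIntegral_nonneg measurableSet_Ici fun t _ => by positivity
    have hApbd : Ap ≤ 2 * Ck ^ 2 * Ah + 2 * Ch ^ 2 * Ak := by
      have h1 : Ap ≤ ∫ t in Set.Ici (0:ℝ), (2 * Ck ^ 2 * ((gh t) ^ 2 * Real.exp (ρ * t))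
          + 2 * Ch ^ 2 * ((gk t) ^ 2 * Real.exp (ρ * t))) := by
        apply integral_mono_ae hDint hdom
        filter_upwards [ae_restrict_mem measurableSet_Ici] with t ht
        exact hptwise t ht
      have h2 : ∫ t in Set.Ici (0:ℝ), (2 * Ck ^ 2 * ((gh t) ^ 2 * Real.exp (ρ * t))
          + 2 * Ch ^ 2 * ((gk t) ^ 2 * Real.exp (ρ * t)))
          = 2 * Ck ^ 2 * Ah + 2 * Ch ^ 2 * Ak := by
        rw [integral_add (hh.2.2.const_mul (2 * Ck ^ 2)) (hk.2.2.const_mul (2 * Ch ^ 2)),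
          integral_const_mul, integral_const_mul]
      linarith
    have hNh2 : Nh ^ 2 = (h 0) ^ 2 + Ah := by
      rw [hNh]
      exact Real.sq_sqrt (by positivity)
    have hNk2 : Nk ^ 2 = (k 0) ^ 2 + Ak := by
      rw [hNk]
      exact Real.sq_sqrt (by positivity)
    have hChN : Ch ≤ Cρ * Nh := hfnorm
    have hCkN : Ck ≤ Cρ * Nk := hgnorm
    have hCh2 : Ch ^ 2 ≤ Cρ ^ 2 * Nh ^ 2 := by
      calc Ch ^ 2 ≤ (Cρ * Nh) ^ 2 := pow_le_pow_left₀ hCh0 hChN 2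
        _ = Cρ ^ 2 * Nh ^ 2 := mul_pow _ _ _
    have hCk2 : Ck ^ 2 ≤ Cρ ^ 2 * Nk ^ 2 := by
      calc Ck ^ 2 ≤ (Cρ * Nk) ^ 2 := pow_le_pow_left₀ hCk0 hCkN 2
        _ = Cρ ^ 2 * Nk ^ 2 := mul_pow _ _ _
    have e1 : (h 0) ^ 2 ≤ Nh ^ 2 := by rw [hNh2]; linarith
    have e2 : (k 0) ^ 2 ≤ Nk ^ 2 := by rw [hNk2]; linarith
    have p1 : (h 0) ^ 2 * (k 0) ^ 2 ≤ Nh ^ 2 * Nk ^ 2 :=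
      mul_le_mul e1 e2 (sq_nonneg _) (sq_nonneg _)
    have e3 : Ah ≤ Nh ^ 2 := by rw [hNh2]; linarith [sq_nonneg (h 0)]
    have e4 : Ak ≤ Nk ^ 2 := by rw [hNk2]; linarith [sq_nonneg (k 0)]
    have p2 : Ck ^ 2 * Ah ≤ (Cρ ^ 2 * Nk ^ 2) * Nh ^ 2 :=
      mul_le_mul hCk2 e3 hAh0 (by positivity)
    have p3 : Ch ^ 2 * Ak ≤ (Cρ ^ 2 * Nh ^ 2) * Nk ^ 2 :=
      mul_le_mul hCh2 e4 hAk0 (by positivity)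
    have hfinal : ((fun x => h x * k x) 0) ^ 2 + Ap ≤ (1 + 4 * Cρ ^ 2) * (Nh * Nk) ^ 2 := by
      have q : ((fun x => h x * k x) 0) ^ 2 = (h 0) ^ 2 * (k 0) ^ 2 := by
        simp only
        ring
      have expand : (1 + 4 * Cρ ^ 2) * (Nh * Nk) ^ 2
          = Nh ^ 2 * Nk ^ 2 + 2 * ((Cρ ^ 2 * Nk ^ 2) * Nh ^ 2)
            + 2 * ((Cρ ^ 2 * Nh ^ 2) * Nk ^ 2) := by ring
      rw [q, expand]
      linarith
    calc filNorm ρ (fun x => h x * k x) (fun t => gh t * k t + h t * gk t)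
        = Real.sqrt (((fun x => h x * k x) 0) ^ 2 + Ap) := rfl
      _ ≤ Real.sqrt ((1 + 4 * Cρ ^ 2) * (Nh * Nk) ^ 2) := Real.sqrt_le_sqrt hfinal
      _ = Real.sqrt (1 + 4 * Cρ ^ 2) * (Nh * Nk) := by
          rw [Real.sqrt_mul (by positivity), Real.sqrt_sq (mul_nonneg hNh0 hNk0)]
      _ = Real.sqrt (1 + 4 * Cρ ^ 2) * Nh * Nk := by ring
  · -- the limit statement
    intro hT
    apply Tendsto.zero_mul_isBoundedUnder_le hT
    apply isBoundedUnder_of_eventually_le (a := Ck)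
    filter_upwards [Filter.eventually_ge_atTop (0:ℝ)] with x hx
    simpa [Real.norm_eq_abs] using hkb x hx
end

section
/- Let 0 < ρ < ρ' and let h : [0,∞) → ℝ belong to the Filipović space H_{ρ'} with derivative g, and suppose lim_{x→∞} h(x) = 0. Then the integral operator 𝓘h defined by (𝓘h)(x) := ∫_0^x h(t) dt belongs to H_ρ with derivative h, satisfies (𝓘h)(0) = 0, and ‖𝓘h‖_ρ = (∫_0^∞ h(x)² e^{ρx} dx)^{1/2} ≤ C_{ρ,ρ'}·‖h‖_{ρ'}, where C_{ρ,ρ'} := √(1/(ρ'(ρ'−ρ))). -/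
open MeasureTheory Filter

/-- Cauchy–Schwarz for integrals of real functions in `L²`. -/
lemma cs_integral_aux {α : Type*} [MeasurableSpace α] {μ : Measure α} {u v : α → ℝ}
    (hu : MemLp u 2 μ) (hv : MemLp v 2 μ) :
    (∫ t, u t * v t ∂μ) ^ 2 ≤ (∫ t, u t ^ 2 ∂μ) * (∫ t, v t ^ 2 ∂μ) := by
  have key : ∀ (f w : α → ℝ) (hf : MemLp f 2 μ) (hw : MemLp w 2 μ),
      (inner ℝ (hf.toLp f) (hw.toLp w) : ℝ) = ∫ t, f t * w t ∂μ := by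
    intro f w hf hw
    rw [L2.inner_def]
    apply integral_congr_ae
    filter_upwards [hf.coeFn_toLp, hw.coeFn_toLp] with t h1 h2
    simp [h1, h2, RCLike.inner_apply, conj_trivial, mul_comm]
  have h1 := key u v hu hv
  have h2 := key u u hu hu
  have h3 := key v v hv hv
  have := real_inner_mul_inner_self_le (hu.toLp u) (hv.toLp v)
  rw [h1, h2, h3] at this
  simpa [pow_two] using this

lemma integrable_mul_of_L2_aux {α : Type*} [MeasurableSpace α] {μ : Measure α} {u v : α → ℝ}
    (hu : MemLp u 2 μ) (hv : MemLp v 2 μ) :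
    Integrable (fun t => u t * v t) μ := by
  have : MemLp (u • v) 1 μ := hv.smul hu
  exact memLp_one_iff_integrable.mp this

lemma exp_integral_Ioi_aux (a : ℝ) {b : ℝ} (hb : 0 < b) :
    ∫ t in Set.Ioi a, Real.exp (-(b * t)) = Real.exp (-(b * a)) / b := by
  have := MeasureTheory.integral_comp_mul_left_Ioi (fun x => Real.exp (-x)) a hb
  simp only [smul_eq_mul] at this
  rw [this, integral_exp_neg_Ioi]
  ring

/-- for `0 < ρ < ρ'` and `h ∈ H_{ρ'}` with `lim_{x→∞} h(x) = 0`, the integral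
operator `(𝓘h)(x) = ∫_0^x h(t) dt` belongs to `H_ρ` with derivative `h`, vanishes at `0`,
and `‖𝓘h‖_ρ = (∫_0^∞ h(x)² e^{ρx} dx)^{1/2} ≤ C_{ρ,ρ'} ‖h‖_{ρ'}`, where
`C_{ρ,ρ'} = √(1/(ρ'(ρ'−ρ)))`. -/
theorem filipovic_integral_operator (ρ ρ' : ℝ) (hρ : 0 < ρ) (hρρ' : ρ < ρ')
    (h g : ℝ → ℝ) (hmem : MemFil ρ' h g) (hlim : Tendsto h atTop (nhds 0)) :
    MemFil ρ (fun x => ∫ t in (0:ℝ)..x, h t) h ∧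
    (∫ t in (0:ℝ)..(0:ℝ), h t) = 0 ∧
    filNorm ρ (fun x => ∫ t in (0:ℝ)..x, h t) h
      = Real.sqrt (∫ x in Set.Ici (0:ℝ), (h x) ^ 2 * Real.exp (ρ * x)) ∧
    filNorm ρ (fun x => ∫ t in (0:ℝ)..x, h t) h
      ≤ Real.sqrt (1 / (ρ' * (ρ' - ρ))) * filNorm ρ' h g := by
  obtain ⟨hg_meas, hrep, hg_int⟩ := hmem
  have hρ' : 0 < ρ' := hρ.trans hρρ'
  have hρ'ρ : 0 < ρ' - ρ := by linarith
  set G : ℝ := ∫ t in Set.Ici (0:ℝ), (g t) ^ 2 * Real.exp (ρ' * t) with hG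
  have hG_nonneg : 0 ≤ G := by
    apply setIntegral_nonneg measurableSet_Ici
    intro t _
    positivity
  -- the L² functions u and v
  set u : ℝ → ℝ := fun t => g t * Real.exp (ρ' * t / 2) with hu_def
  set v : ℝ → ℝ := fun t => Real.exp (-ρ' * t / 2) with hv_def
  have huv : ∀ t, u t * v t = g t := by
    intro t
    have harg : ρ' * t / 2 + -ρ' * t / 2 = 0 := by ring
    rw [hu_def, hv_def]
    simp only
    rw [mul_assoc, ← Real.exp_add, harg, Real.exp_zero, mul_one]
  have hu_mem : ∀ x, 0 ≤ x → MemLp u 2 (volume.restrict (Set.Ioi x)) := by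
    intro x hx
    have hsub : Set.Ioi x ⊆ Set.Ici (0:ℝ) :=
      Set.Ioi_subset_Ici_self.trans (Set.Ici_subset_Ici.mpr hx)
    have hgm : AEMeasurable g (volume.restrict (Set.Ioi x)) :=
      hg_meas.mono_measure (Measure.restrict_mono hsub le_rfl)
    have hm : AEStronglyMeasurable u (volume.restrict (Set.Ioi x)) :=
      (hgm.mul (Real.measurable_exp.comp
        ((measurable_const.mul measurable_id).div_const 2)).aemeasurable).aestronglyMeasurable
    rw [memLp_two_iff_integrable_sq hm]
    have heq : (fun t => (u t) ^ 2) = fun t => g t ^ 2 * Real.exp (ρ' * t) := by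
      funext t
      rw [hu_def]
      simp only
      rw [mul_pow]
      congr 1
      rw [sq, ← Real.exp_add]
      congr 1
      ring
    rw [heq]
    exact hg_int.mono_set hsub
  have hv_sq : (fun t => (v t) ^ 2) = fun t => Real.exp (-ρ' * t) := by
    funext t
    rw [hv_def]
    simp only
    rw [sq, ← Real.exp_add]
    congr 1
    ring
  have hv_mem : ∀ x : ℝ, MemLp v 2 (volume.restrict (Set.Ioi x)) := by
    intro x
    have hm : AEStronglyMeasurable v (volume.restrict (Set.Ioi x)) := by
      apply Continuous.aestronglyMeasurable
      rw [hv_def]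
      continuity
    rw [memLp_two_iff_integrable_sq hm, hv_sq]
    exact exp_neg_integrableOn_Ioi x hρ'
  -- g is integrable on Ioi x for x ≥ 0
  have hgi : ∀ x, 0 ≤ x → IntegrableOn g (Set.Ioi x) := by
    intro x hx
    exact (integrable_mul_of_L2_aux (hu_mem x hx) (hv_mem x)).congr
      (Filter.Eventually.of_forall huv)
  -- representation h x = -∫_{Ioi x} g
  have hrep' : ∀ x, 0 ≤ x → h x = -∫ t in Set.Ioi x, g t := by
    have key : h 0 + ∫ t in Set.Ioi (0:ℝ), g t = 0 := by
      have t1 : Tendsto (fun x => h 0 + ∫ t in (0:ℝ)..x, g t) atTop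
          (nhds (h 0 + ∫ t in Set.Ioi (0:ℝ), g t)) :=
        (intervalIntegral_tendsto_integral_Ioi 0 (hgi 0 le_rfl) tendsto_id).const_add _
      have t2 : Tendsto h atTop (nhds (h 0 + ∫ t in Set.Ioi (0:ℝ), g t)) := by
        apply t1.congr'
        filter_upwards [mem_atTop (0:ℝ)] with x hx
        exact (hrep x hx).symm
      exact tendsto_nhds_unique t2 hlim
    intro x hx
    have hsplit : ∫ t in Set.Ioi (0:ℝ), g t
        = (∫ t in Set.Ioc 0 x, g t) + ∫ t in Set.Ioi x, g t := by
      rw [← setIntegral_union (Set.Ioc_disjoint_Ioi le_rfl) measurableSet_Ioi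
        ((hgi 0 le_rfl).mono_set Set.Ioc_subset_Ioi_self) (hgi x hx),
        Set.Ioc_union_Ioi_eq_Ioi hx]
    have hr := hrep x hx
    rw [intervalIntegral.integral_of_le hx] at hr
    rw [hr]
    linarith [hsplit, key]
  -- pointwise bound on h²
  have hbound : ∀ x, 0 ≤ x → h x ^ 2 ≤ G * (Real.exp (-(ρ' * x)) / ρ') := by
    intro x hx
    have e1 : h x ^ 2 = (∫ t in Set.Ioi x, u t * v t) ^ 2 := by
      rw [hrep' x hx, neg_sq]
      congr 1
      exact integral_congr_ae (Filter.Eventually.of_forall fun t => (huv t).symm)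
    have e2 := cs_integral_aux (hu_mem x hx) (hv_mem x)
    have e3 : ∫ t in Set.Ioi x, (u t) ^ 2 ≤ G := by
      have heq : (fun t => (u t) ^ 2) = fun t => g t ^ 2 * Real.exp (ρ' * t) := by
        funext t
        rw [hu_def]
        simp only
        rw [mul_pow]
        congr 1
        rw [sq, ← Real.exp_add]
        congr 1
        ring
      rw [heq, hG]
      apply setIntegral_mono_set hg_int
      · filter_upwards with t
        positivity
      · exact HasSubset.Subset.eventuallyLE
          (Set.Ioi_subset_Ici_self.trans (Set.Ici_subset_Ici.mpr hx))
    have e4 : ∫ t in Set.Ioi x, (v t) ^ 2 = Real.exp (-(ρ' * x)) / ρ' := by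
      rw [hv_sq]
      simp only [neg_mul]
      exact exp_integral_Ioi_aux x hρ'
    have e5 : (0:ℝ) ≤ ∫ t in Set.Ioi x, (v t) ^ 2 := by
      apply setIntegral_nonneg measurableSet_Ioi
      intro t _
      positivity
    calc h x ^ 2 = (∫ t in Set.Ioi x, u t * v t) ^ 2 := e1
      _ ≤ (∫ t in Set.Ioi x, (u t) ^ 2) * (∫ t in Set.Ioi x, (v t) ^ 2) := e2
      _ ≤ G * (Real.exp (-(ρ' * x)) / ρ') := by
          rw [← e4]
          exact mul_le_mul_of_nonneg_right e3 e5
  -- pointwise bound on h² e^{ρ x}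
  have hbound2 : ∀ x, 0 ≤ x →
      h x ^ 2 * Real.exp (ρ * x) ≤ (G / ρ') * Real.exp ((ρ - ρ') * x) := by
    intro x hx
    have := mul_le_mul_of_nonneg_right (hbound x hx) (Real.exp_nonneg (ρ * x))
    calc h x ^ 2 * Real.exp (ρ * x)
        ≤ G * (Real.exp (-(ρ' * x)) / ρ') * Real.exp (ρ * x) := this
      _ = (G / ρ') * (Real.exp (-(ρ' * x)) * Real.exp (ρ * x)) := by ring
      _ = (G / ρ') * Real.exp ((ρ - ρ') * x) := by
          rw [← Real.exp_add]
          congr 2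
          ring
  -- measurability of h on [0, ∞)
  have hgIci : IntegrableOn g (Set.Ici (0:ℝ)) :=
    (hgi 0 le_rfl).congr_set_ae MeasureTheory.Ioi_ae_eq_Ici.symm
  have hh_meas : AEMeasurable h (volume.restrict (Set.Ici (0:ℝ))) := by
    set g₀ : ℝ → ℝ := (Set.Ici (0:ℝ)).indicator g with hg₀
    have hg₀i : Integrable g₀ := hgIci.integrable_indicator measurableSet_Ici
    have hF : Continuous (fun x => ∫ t in (0:ℝ)..x, g₀ t) :=
      intervalIntegral.continuous_primitive (fun a b => hg₀i.intervalIntegrable) 0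
    have heq : ∀ x ∈ Set.Ici (0:ℝ), h x = h 0 + ∫ t in (0:ℝ)..x, g₀ t := by
      intro x hx
      rw [hrep x hx]
      congr 1
      apply intervalIntegral.integral_congr
      intro t ht
      rw [Set.uIcc_of_le hx] at ht
      exact (Set.indicator_of_mem (Set.mem_Ici.mpr ht.1) g).symm
    have hae : h =ᵐ[volume.restrict (Set.Ici (0:ℝ))] fun x => h 0 + ∫ t in (0:ℝ)..x, g₀ t :=
      (ae_restrict_iff' measurableSet_Ici).mpr (Filter.Eventually.of_forall heq)
    exact ((measurable_const.add hF.measurable).aemeasurable).congr hae.symm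
  -- integrability of the dominator
  have hD_int : IntegrableOn (fun x => (G / ρ') * Real.exp ((ρ - ρ') * x)) (Set.Ici (0:ℝ)) := by
    have : IntegrableOn (fun x => Real.exp (-(ρ' - ρ) * x)) (Set.Ioi (0:ℝ)) :=
      exp_neg_integrableOn_Ioi 0 hρ'ρ
    have h2 : IntegrableOn (fun x => Real.exp ((ρ - ρ') * x)) (Set.Ici (0:ℝ)) := by
      have := this.congr_set_ae MeasureTheory.Ioi_ae_eq_Ici.symm
      convert this using 2 with x
      ring_nf
    exact h2.const_mul _
  -- integrability of h² e^{ρ x}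
  have hh2_meas : AEStronglyMeasurable (fun x => h x ^ 2 * Real.exp (ρ * x))
      (volume.restrict (Set.Ici (0:ℝ))) :=
    ((hh_meas.pow_const 2).mul
      (Real.measurable_exp.comp (measurable_const.mul measurable_id)).aemeasurable).aestronglyMeasurable
  have hh2_int : IntegrableOn (fun x => h x ^ 2 * Real.exp (ρ * x)) (Set.Ici (0:ℝ)) := by
    apply Integrable.mono' hD_int hh2_meas
    rw [ae_restrict_iff' measurableSet_Ici]
    apply Filter.Eventually.of_forall
    intro x hx
    rw [Real.norm_eq_abs, abs_of_nonneg (by positivity)]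
    exact hbound2 x hx
  -- integral bound
  have hint_bound : ∫ x in Set.Ici (0:ℝ), h x ^ 2 * Real.exp (ρ * x)
      ≤ G / (ρ' * (ρ' - ρ)) := by
    have step1 : ∫ x in Set.Ici (0:ℝ), h x ^ 2 * Real.exp (ρ * x)
        ≤ ∫ x in Set.Ici (0:ℝ), (G / ρ') * Real.exp ((ρ - ρ') * x) :=
      setIntegral_mono_on hh2_int hD_int measurableSet_Ici hbound2
    have step2 : ∫ x in Set.Ici (0:ℝ), (G / ρ') * Real.exp ((ρ - ρ') * x)
        = G / (ρ' * (ρ' - ρ)) := by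
      rw [MeasureTheory.integral_Ici_eq_integral_Ioi, integral_const_mul]
      have : (fun x => Real.exp ((ρ - ρ') * x)) = fun x => Real.exp (-((ρ' - ρ) * x)) := by
        funext x
        congr 1
        ring
      rw [this, exp_integral_Ioi_aux 0 hρ'ρ]
      rw [mul_zero, neg_zero, Real.exp_zero]
      field_simp
    linarith
  have hint_nonneg : 0 ≤ ∫ x in Set.Ici (0:ℝ), h x ^ 2 * Real.exp (ρ * x) := by
    apply setIntegral_nonneg measurableSet_Ici
    intro t _
    positivity
  refine ⟨⟨hh_meas, ?_, hh2_int⟩, intervalIntegral.integral_same, ?_, ?_⟩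
  · intro x _
    show (∫ t in (0:ℝ)..x, h t) = (∫ t in (0:ℝ)..(0:ℝ), h t) + ∫ t in (0:ℝ)..x, h t
    rw [intervalIntegral.integral_same, zero_add]
  · simp only [filNorm, intervalIntegral.integral_same]
    norm_num
  · simp only [filNorm, intervalIntegral.integral_same, ← hG]
    rw [show ((0:ℝ))^2 = 0 by norm_num, zero_add]
    have hC : 0 < ρ' * (ρ' - ρ) := by positivity
    have key : ∫ x in Set.Ici (0:ℝ), h x ^ 2 * Real.exp (ρ * x)
        ≤ (1 / (ρ' * (ρ' - ρ))) * ((h 0) ^ 2 + G) := by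
      have : G / (ρ' * (ρ' - ρ)) ≤ (1 / (ρ' * (ρ' - ρ))) * ((h 0) ^ 2 + G) := by
        rw [div_eq_mul_inv, one_div, mul_comm G]
        apply mul_le_mul_of_nonneg_left _ (by positivity)
        nlinarith [sq_nonneg (h 0)]
      linarith [hint_bound]
    calc Real.sqrt (∫ x in Set.Ici (0:ℝ), h x ^ 2 * Real.exp (ρ * x))
        ≤ Real.sqrt ((1 / (ρ' * (ρ' - ρ))) * ((h 0) ^ 2 + G)) := Real.sqrt_le_sqrt key
      _ = Real.sqrt (1 / (ρ' * (ρ' - ρ))) * Real.sqrt ((h 0) ^ 2 + G) :=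
          Real.sqrt_mul (by positivity) _
end

section
/- Let ρ > 0 and define, for h in the Filipović space H_ρ with lim_{x→∞} h(x) = 0, the map 𝓢h := h · 𝓘h, where (𝓘h)(x) = ∫_0^x h(t) dt. Then: (1) there exists a constant C > 0, depending only on ρ, such that for every h ∈ H_ρ with derivative g and h(∞) = 0, the function 𝓢h belongs to H_ρ (with derivative g·𝓘h + h·h), satisfies lim_{x→∞}(𝓢h)(x) = 0, and ‖𝓢h‖_ρ ≤ C·‖h‖_ρ²; (2) 𝓢 is locally Lipschitz in the ball sense: there is an increasing function L : [0,∞) → [0,∞) such that ‖𝓢h − 𝓢k‖_ρ ≤ L(r)·‖h − k‖_ρ for every r ≥ 0 and all h, k ∈ H_ρ with vanishing limit at infinity and ‖h‖_ρ ≤ r, ‖k‖_ρ ≤ r. -/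
open MeasureTheory Filter

namespace FilAux

open Set Real

variable {ρ : ℝ} {h g k gh gk : ℝ → ℝ}


lemma integral_exp_neg_mul_Ioi {b : ℝ} (hb : 0 < b) (a : ℝ) :
    ∫ x in Ioi a, Real.exp (-(b * x)) = Real.exp (-(b * a)) / b := by
  have h := MeasureTheory.integral_comp_mul_left_Ioi (fun u => Real.exp (-u)) a hb
  simp only [smul_eq_mul] at h
  rw [h, integral_exp_neg_Ioi]
  ring

lemma integrableOn_exp_neg_mul {b : ℝ} (hb : 0 < b) (a : ℝ) :
    IntegrableOn (fun x => Real.exp (-(b * x))) (Ioi a) := by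
  have := exp_neg_integrableOn_Ioi a hb
  simpa using this

lemma integrableOn_exp_neg_mul_Ici {b : ℝ} (hb : 0 < b) (a : ℝ) :
    IntegrableOn (fun x => Real.exp (-(b * x))) (Ici a) := by
  rw [IntegrableOn, Measure.restrict_congr_set Ioi_ae_eq_Ici.symm]
  exact integrableOn_exp_neg_mul hb a

lemma integral_exp_neg_mul_Ici {b : ℝ} (hb : 0 < b) (a : ℝ) :
    ∫ x in Ici a, Real.exp (-(b * x)) = Real.exp (-(b * a)) / b := by
  rw [MeasureTheory.integral_Ici_eq_integral_Ioi]
  exact integral_exp_neg_mul_Ioi hb a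




/-- The energy integral. -/
noncomputable def En (ρ : ℝ) (g : ℝ → ℝ) : ℝ := ∫ t in Set.Ici (0:ℝ), (g t) ^ 2 * Real.exp (ρ * t)

lemma En_nonneg : 0 ≤ En ρ g :=
  setIntegral_nonneg measurableSet_Ici fun t _ => mul_nonneg (sq_nonneg _) (exp_nonneg _)

lemma filNorm_nonneg : 0 ≤ filNorm ρ h g := Real.sqrt_nonneg _

lemma filNorm_sq : (filNorm ρ h g) ^ 2 = (h 0) ^ 2 + En ρ g := by
  rw [filNorm, Real.sq_sqrt]
  · rfl
  · exact add_nonneg (sq_nonneg _) En_nonneg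

lemma En_le_filNorm_sq : En ρ g ≤ (filNorm ρ h g) ^ 2 := by
  rw [filNorm_sq]; nlinarith [sq_nonneg (h 0)]

/-- a.e.-strong-measurability of `g` on subsets of `[0,∞)`. -/
lemma aesm_mono (hm : AEMeasurable g (volume.restrict (Set.Ici (0:ℝ)))) {s : Set ℝ}
    (hs : s ⊆ Ici (0:ℝ)) : AEStronglyMeasurable g (volume.restrict s) :=
  (hm.mono_measure (Measure.restrict_mono hs le_rfl)).aestronglyMeasurable

/-- `g` is integrable on bounded subintervals of `[0,∞)`. -/
lemma integrableOn_g_Ioc (hρ : 0 < ρ) (hm : MemFil ρ h g) {a b : ℝ} (ha : 0 ≤ a) :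
    IntegrableOn g (Ioc a b) := by
  have hsub : Ioc a b ⊆ Ici (0:ℝ) := fun t ht => le_trans ha (le_of_lt ht.1)
  refine Integrable.mono' (g := fun t => 1/2 + (g t) ^ 2 * Real.exp (ρ * t) / 2) ?_
    (aesm_mono hm.1 hsub) ?_
  · exact (integrableOn_const measure_Ioc_lt_top.ne).add
      ((hm.2.2.mono_set hsub).div_const 2)
  · refine (ae_restrict_iff' measurableSet_Ioc).mpr (ae_of_all _ fun t ht => ?_)
    have h0t : (0:ℝ) ≤ t := le_trans ha ht.1.le
    have he : (1:ℝ) ≤ Real.exp (ρ * t) := by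
      rw [← Real.exp_zero]
      exact Real.exp_le_exp.mpr (mul_nonneg hρ.le h0t)
    have : |g t| ≤ 1/2 + (g t)^2 / 2 := by nlinarith [sq_nonneg (|g t| - 1), abs_nonneg (g t), sq_abs (g t)]
    rw [Real.norm_eq_abs]
    nlinarith [sq_nonneg (g t)]

lemma intervalIntegrable_g (hρ : 0 < ρ) (hm : MemFil ρ h g) {a b : ℝ} (ha : 0 ≤ a) (hab : a ≤ b) :
    IntervalIntegrable g volume a b := by
  rw [intervalIntegrable_iff_integrableOn_Ioc_of_le hab]
  exact integrableOn_g_Ioc hρ hm ha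


/-- Cauchy–Schwarz estimate for the tail integral of `g`. -/
lemma key_cs (hρ : 0 < ρ) (hm : MemFil ρ h g) {t x : ℝ} (ht : 0 ≤ t) :
    ∫ s in Ioc t x, |g s| ≤ Real.sqrt (En ρ g) * Real.exp (-(ρ/2) * t) / Real.sqrt ρ := by
  set μ := volume.restrict (Ioc t x)
  have hsub : Ioc t x ⊆ Ici (0:ℝ) := fun s hs => le_trans ht hs.1.le
  have hgm : AEStronglyMeasurable g μ := aesm_mono hm.1 hsub
  set f₁ : ℝ → ℝ := fun s => |g s| * Real.exp (ρ * s / 2) with hf₁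
  set f₂ : ℝ → ℝ := fun s => Real.exp (-(ρ * s / 2)) with hf₂
  have e1 : ∀ y : ℝ, Real.exp y ^ 2 = Real.exp (2 * y) := fun y => by
    rw [sq, ← Real.exp_add, two_mul]
  have hsq₁ : ∀ s, f₁ s ^ 2 = (g s) ^ 2 * Real.exp (ρ * s) := by
    intro s
    rw [hf₁, mul_pow, sq_abs, e1, show (2:ℝ) * (ρ * s / 2) = ρ * s by ring]
  have hsq₂ : ∀ s, f₂ s ^ 2 = Real.exp (-(ρ * s)) := by
    intro s
    rw [hf₂, e1, show (2:ℝ) * -(ρ * s / 2) = -(ρ * s) by ring]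
  have hint₁ : Integrable (fun s => f₁ s ^ 2) μ := by
    simp only [hsq₁]
    exact hm.2.2.mono_set hsub
  have hf₁m : AEStronglyMeasurable f₁ μ := by
    have hc : Continuous fun s : ℝ => Real.exp (ρ * s / 2) := by fun_prop
    exact ((by simpa [Real.norm_eq_abs] using hgm.norm :
      AEStronglyMeasurable (fun s => |g s|) μ)).mul hc.aestronglyMeasurable
  have hm₁ : MemLp f₁ 2 μ := by
    rw [memLp_two_iff_integrable_sq hf₁m]
    exact hint₁
  have hint₂ : Integrable (fun s => f₂ s ^ 2) μ := by
    simp only [hsq₂]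
    exact ((integrableOn_exp_neg_mul hρ t).mono_set Ioc_subset_Ioi_self).congr_fun
      (fun s _ => by beta_reduce; ring_nf) measurableSet_Ioc
  have hm₂ : MemLp f₂ 2 μ := by
    have : Continuous f₂ := by rw [hf₂]; fun_prop
    rw [memLp_two_iff_integrable_sq this.aestronglyMeasurable]
    exact hint₂
  have hcs := integral_mul_le_Lp_mul_Lq_of_nonneg Real.HolderConjugate.two_two
    (ae_of_all _ fun s => mul_nonneg (abs_nonneg _) (Real.exp_nonneg _))
    (ae_of_all _ fun s => Real.exp_nonneg _)
    (by rwa [show ENNReal.ofReal 2 = 2 by norm_num]) (by rwa [show ENNReal.ofReal 2 = 2 by norm_num])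
  have heq : ∀ s, f₁ s * f₂ s = |g s| := by
    intro s
    rw [hf₁, hf₂, mul_assoc, ← Real.exp_add]
    simp
  have hrw : ∫ s, |g s| ∂μ ≤ (∫ s, f₁ s ^ (2:ℝ) ∂μ) ^ (1/(2:ℝ)) * (∫ s, f₂ s ^ (2:ℝ) ∂μ) ^ (1/(2:ℝ)) := by
    calc ∫ s, |g s| ∂μ = ∫ s, f₁ s * f₂ s ∂μ := by simp_rw [heq]
    _ ≤ _ := hcs
  have hpow : ∀ u : ℝ → ℝ, (fun s => u s ^ (2:ℝ)) = fun s => u s ^ (2:ℕ) := by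
    intro u; funext s; rw [show (2:ℝ) = ((2:ℕ):ℝ) by norm_num, Real.rpow_natCast]
  rw [hpow f₁, hpow f₂] at hrw
  -- bound the two factors
  have hb₁ : ∫ s, f₁ s ^ (2:ℕ) ∂μ ≤ En ρ g := by
    simp_rw [show ∀ s, f₁ s ^ (2:ℕ) = (g s)^2 * Real.exp (ρ * s) from hsq₁]
    exact setIntegral_mono_set hm.2.2 (ae_of_all _ fun s => mul_nonneg (sq_nonneg _) (Real.exp_nonneg _))
      (HasSubset.Subset.eventuallyLE hsub)
  have hb₂ : ∫ s, f₂ s ^ (2:ℕ) ∂μ ≤ Real.exp (-(ρ * t)) / ρ := by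
    simp_rw [show ∀ s, f₂ s ^ (2:ℕ) = Real.exp (-(ρ * s)) from hsq₂]
    calc ∫ s in Ioc t x, Real.exp (-(ρ * s))
        ≤ ∫ s in Ioi t, Real.exp (-(ρ * s)) := setIntegral_mono_set (integrableOn_exp_neg_mul hρ t)
          (ae_of_all _ fun s => Real.exp_nonneg _) (HasSubset.Subset.eventuallyLE Ioc_subset_Ioi_self)
      _ = Real.exp (-(ρ * t)) / ρ := integral_exp_neg_mul_Ioi hρ t
  have h₁nn : (0:ℝ) ≤ ∫ s, f₁ s ^ (2:ℕ) ∂μ :=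
    integral_nonneg fun s => pow_nonneg (mul_nonneg (abs_nonneg _) (Real.exp_nonneg _)) 2
  have h₂nn : (0:ℝ) ≤ ∫ s, f₂ s ^ (2:ℕ) ∂μ :=
    integral_nonneg fun s => pow_nonneg (Real.exp_nonneg _) 2
  rw [← Real.sqrt_eq_rpow, ← Real.sqrt_eq_rpow] at hrw
  refine hrw.trans ?_
  have hsd : Real.sqrt (Real.exp (-(ρ * t)) / ρ) = Real.exp (-(ρ/2) * t) / Real.sqrt ρ := by
    rw [Real.sqrt_div (Real.exp_nonneg _), show Real.exp (-(ρ * t)) = Real.exp (-(ρ/2) * t) ^ 2 by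
      rw [e1, show (2:ℝ) * (-(ρ/2) * t) = -(ρ * t) by ring], Real.sqrt_sq (Real.exp_nonneg _)]
  calc Real.sqrt (∫ s, f₁ s ^ (2:ℕ) ∂μ) * Real.sqrt (∫ s, f₂ s ^ (2:ℕ) ∂μ)
      ≤ Real.sqrt (En ρ g) * Real.sqrt (Real.exp (-(ρ * t)) / ρ) :=
        mul_le_mul (Real.sqrt_le_sqrt hb₁) (Real.sqrt_le_sqrt hb₂) (Real.sqrt_nonneg _)
          (Real.sqrt_nonneg _)
    _ = Real.sqrt (En ρ g) * Real.exp (-(ρ/2) * t) / Real.sqrt ρ := by rw [hsd]; ring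


/-- pointwise decay bound for `h`. -/
lemma h_abs_le (hρ : 0 < ρ) (hm : MemFil ρ h g) (htend : Tendsto h atTop (nhds 0))
    {t : ℝ} (ht : 0 ≤ t) :
    |h t| ≤ Real.sqrt (En ρ g) * Real.exp (-(ρ/2) * t) / Real.sqrt ρ := by
  set B := Real.sqrt (En ρ g) * Real.exp (-(ρ/2) * t) / Real.sqrt ρ with hB
  have hev : ∀ᶠ x in atTop, |h t| ≤ |h x| + B := by
    filter_upwards [eventually_ge_atTop t] with x hx
    have h1 : h x = h 0 + ∫ s in (0:ℝ)..x, g s := hm.2.1 x (ht.trans hx)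
    have h2 : h t = h 0 + ∫ s in (0:ℝ)..t, g s := hm.2.1 t ht
    have h3 : (∫ s in (0:ℝ)..t, g s) + (∫ s in t..x, g s) = ∫ s in (0:ℝ)..x, g s :=
      intervalIntegral.integral_add_adjacent_intervals (intervalIntegrable_g hρ hm le_rfl ht)
        (intervalIntegrable_g hρ hm ht hx)
    have h4 : h t = h x - ∫ s in t..x, g s := by rw [h1, h2, ← h3]; ring
    have h5 : |∫ s in t..x, g s| ≤ B := by
      rw [intervalIntegral.integral_of_le hx]
      calc |∫ s in Ioc t x, g s| ≤ ∫ s in Ioc t x, |g s| := by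
            simpa [Real.norm_eq_abs] using
              norm_integral_le_integral_norm (μ := volume.restrict (Ioc t x)) g
        _ ≤ B := key_cs hρ hm ht
    calc |h t| ≤ |h x| + |∫ s in t..x, g s| := by rw [h4]; exact abs_sub _ _
      _ ≤ |h x| + B := by linarith
  have hlim : Tendsto (fun x => |h x| + B) atTop (nhds B) := by
    have : Tendsto (fun x => |h x|) atTop (nhds 0) := by
      simpa using htend.abs
    simpa using this.add (tendsto_const_nhds (x := B))
  exact ge_of_tendsto hlim hev

lemma integrableOn_g_Icc (hρ : 0 < ρ) (hm : MemFil ρ h g) {b : ℝ} : IntegrableOn g (Icc 0 b) := by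
  rw [IntegrableOn, Measure.restrict_congr_set Ioc_ae_eq_Icc.symm]
  exact integrableOn_g_Ioc hρ hm le_rfl

lemma h_contOn (hρ : 0 < ρ) (hm : MemFil ρ h g) {b : ℝ} : ContinuousOn h (Icc 0 b) := by
  have hc : ContinuousOn (fun x => h 0 + ∫ s in Ioc 0 x, g s) (Icc 0 b) :=
    continuousOn_const.add (intervalIntegral.continuousOn_primitive (integrableOn_g_Icc hρ hm))
  refine hc.congr fun x hx => ?_
  rw [hm.2.1 x hx.1, intervalIntegral.integral_of_le hx.1]

lemma integrableOn_h_Icc (hρ : 0 < ρ) (hm : MemFil ρ h g) {b : ℝ} : IntegrableOn h (Icc 0 b) :=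
  (h_contOn hρ hm).integrableOn_Icc

lemma integrableOn_h_Ioc (hρ : 0 < ρ) (hm : MemFil ρ h g) {b : ℝ} : IntegrableOn h (Ioc 0 b) :=
  (integrableOn_h_Icc hρ hm).mono_set Ioc_subset_Icc_self

lemma Ih_contOn (hρ : 0 < ρ) (hm : MemFil ρ h g) {b : ℝ} :
    ContinuousOn (fun x => ∫ t in (0:ℝ)..x, h t) (Icc 0 b) := by
  have hc : ContinuousOn (fun x => ∫ s in Ioc 0 x, h s) (Icc 0 b) :=
    intervalIntegral.continuousOn_primitive (integrableOn_h_Icc hρ hm)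
  exact hc.congr fun x hx => intervalIntegral.integral_of_le hx.1

lemma aesm_of_contOn {f : ℝ → ℝ} (hf : ∀ b : ℝ, ContinuousOn f (Icc 0 b)) :
    AEStronglyMeasurable f (volume.restrict (Ici (0:ℝ))) := by
  have hc : ContinuousOn f (Ici 0) := by
    intro x hx
    have hmem : Icc (0:ℝ) (x+1) ∈ nhdsWithin x (Ici 0) := by
      rw [← Ici_inter_Iic]
      exact Filter.inter_mem self_mem_nhdsWithin
        (mem_nhdsWithin_of_mem_nhds (Iic_mem_nhds (by linarith [mem_Ici.mp hx])))
    exact ((hf (x+1)) x (by simp [mem_Ici.mp hx, le_of_lt (lt_add_one x)]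
      )).mono_of_mem_nhdsWithin hmem
  exact hc.aestronglyMeasurable measurableSet_Ici

/-- Bound on the primitive `𝓘h`. -/
lemma Ih_abs_le (hρ : 0 < ρ) (hm : MemFil ρ h g) (htend : Tendsto h atTop (nhds 0))
    {x : ℝ} (hx : 0 ≤ x) :
    |∫ t in (0:ℝ)..x, h t| ≤ Real.sqrt (En ρ g) * (2 / (ρ * Real.sqrt ρ)) := by
  rw [intervalIntegral.integral_of_le hx]
  have hbint : IntegrableOn (fun t => Real.sqrt (En ρ g) * Real.exp (-(ρ/2 * t)) / Real.sqrt ρ)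
      (Ioi (0:ℝ)) := ((integrableOn_exp_neg_mul (by linarith) 0).const_mul _).div_const _
  calc |∫ t in Ioc 0 x, h t| ≤ ∫ t in Ioc 0 x, |h t| := by
        simpa [Real.norm_eq_abs] using
          norm_integral_le_integral_norm (μ := volume.restrict (Ioc 0 x)) h
    _ ≤ ∫ t in Ioc 0 x, Real.sqrt (En ρ g) * Real.exp (-(ρ/2 * t)) / Real.sqrt ρ := by
        refine setIntegral_mono_on ((integrableOn_h_Ioc hρ hm).abs) (hbint.mono_set
          Ioc_subset_Ioi_self) measurableSet_Ioc fun t ht => ?_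
        have := h_abs_le hρ hm htend ht.1.le
        calc |h t| ≤ Real.sqrt (En ρ g) * Real.exp (-(ρ/2) * t) / Real.sqrt ρ := this
          _ = Real.sqrt (En ρ g) * Real.exp (-(ρ/2 * t)) / Real.sqrt ρ := by ring_nf
    _ ≤ ∫ t in Ioi 0, Real.sqrt (En ρ g) * Real.exp (-(ρ/2 * t)) / Real.sqrt ρ := by
        refine setIntegral_mono_set hbint (ae_of_all _ fun t => ?_)
          (HasSubset.Subset.eventuallyLE Ioc_subset_Ioi_self)
        positivity
    _ = Real.sqrt (En ρ g) * (2 / (ρ * Real.sqrt ρ)) := by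
        rw [integral_div, integral_const_mul, integral_exp_neg_mul_Ioi (by linarith : (0:ℝ) < ρ/2)]
        have hs : (0:ℝ) < Real.sqrt ρ := Real.sqrt_pos.mpr (by linarith)
        rw [mul_zero, neg_zero, Real.exp_zero]
        field_simp


/-- Product of two integrals as integral of partial primitives (integration by parts, Fubini). -/
lemma integral_mul_integral {x : ℝ} {f₁ f₂ : ℝ → ℝ}
    (h₁ : IntegrableOn f₁ (Ioc 0 x)) (h₂ : IntegrableOn f₂ (Ioc 0 x)) :
    (∫ t in Ioc (0:ℝ) x, f₁ t) * (∫ t in Ioc (0:ℝ) x, f₂ t) =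
      (∫ t in Ioc (0:ℝ) x, f₁ t * ∫ s in Ioc (0:ℝ) t, f₂ s) +
      (∫ t in Ioc (0:ℝ) x, f₂ t * ∫ s in Ioc (0:ℝ) t, f₁ s) := by
  set μ := volume.restrict (Ioc (0:ℝ) x) with hμ
  set F : ℝ × ℝ → ℝ := fun p => f₁ p.1 * f₂ p.2 with hFdef
  have hF : Integrable F (μ.prod μ) := h₁.mul_prod h₂
  set A : Set (ℝ × ℝ) := {p | p.2 ≤ p.1} with hAdef
  have hA : MeasurableSet A := measurableSet_le measurable_snd measurable_fst
  have hLHS : ∫ p, F p ∂(μ.prod μ) = (∫ t in Ioc (0:ℝ) x, f₁ t) * ∫ t in Ioc (0:ℝ) x, f₂ t := by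
    rw [integral_prod _ hF]
    simp only [hFdef]
    rw [← integral_mul_const]
    exact integral_congr_ae (ae_of_all _ fun t => integral_const_mul _ _)
  have hsplit : ∫ p, F p ∂(μ.prod μ) =
      (∫ p in A, F p ∂(μ.prod μ)) + ∫ p in Aᶜ, F p ∂(μ.prod μ) :=
    (integral_add_compl hA hF).symm
  -- first piece
  have hfirst : ∫ p in A, F p ∂(μ.prod μ) =
      ∫ t in Ioc (0:ℝ) x, f₁ t * ∫ s in Ioc (0:ℝ) t, f₂ s := by
    rw [← integral_indicator hA, integral_prod _ (hF.indicator hA)]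
    refine integral_congr_ae ((ae_restrict_iff' measurableSet_Ioc).mpr (ae_of_all _ fun t ht => ?_))
    have : (fun s => A.indicator F (t, s)) = (Iic t).indicator (fun s => f₁ t * f₂ s) := by
      funext s
      simp only [Set.indicator_apply, hAdef, Set.mem_setOf_eq, Set.mem_Iic, hFdef]
    show (∫ s, A.indicator F (t, s) ∂μ) = f₁ t * ∫ s in Ioc (0:ℝ) t, f₂ s
    rw [this, integral_indicator measurableSet_Iic, hμ, Measure.restrict_restrict measurableSet_Iic,
      show Iic t ∩ Ioc 0 x = Ioc 0 t by
        rw [Set.inter_comm, Set.Ioc_inter_Iic, min_eq_right ht.2],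
      integral_const_mul]
  -- second piece
  have hsec : ∫ p in Aᶜ, F p ∂(μ.prod μ) =
      ∫ t in Ioc (0:ℝ) x, f₂ t * ∫ s in Ioc (0:ℝ) t, f₁ s := by
    rw [← integral_indicator hA.compl]
    set G : ℝ × ℝ → ℝ := Aᶜ.indicator F with hGdef
    have hswap : ∫ p, G p ∂(μ.prod μ) = ∫ p, G p.swap ∂(μ.prod μ) :=
      (integral_prod_swap G).symm
    have hGs : (fun p : ℝ × ℝ => G p.swap) = {p : ℝ × ℝ | p.2 < p.1}.indicator
        (fun p => f₂ p.1 * f₁ p.2) := by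
      funext p
      simp only [hGdef, Set.indicator_apply, Set.mem_compl_iff, hAdef, Set.mem_setOf_eq,
        Prod.snd_swap, Prod.fst_swap, not_le, hFdef]
      rcases lt_or_ge p.2 p.1 with hc | hc
      · simp [hc, mul_comm]
      · simp [not_lt.mpr hc]
    have hB : MeasurableSet {p : ℝ × ℝ | p.2 < p.1} := measurableSet_lt measurable_snd measurable_fst
    have hGint : Integrable (fun p : ℝ × ℝ => G p.swap) (μ.prod μ) :=
      (hF.indicator hA.compl).swap
    rw [hswap]
    calc ∫ p, G p.swap ∂(μ.prod μ)
        = ∫ p, {p : ℝ × ℝ | p.2 < p.1}.indicator (fun p => f₂ p.1 * f₁ p.2) p ∂(μ.prod μ) := by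
          rw [hGs]
      _ = ∫ t in Ioc (0:ℝ) x, f₂ t * ∫ s in Ioc (0:ℝ) t, f₁ s := by
          rw [integral_prod _ (hGs ▸ hGint)]
          refine integral_congr_ae ((ae_restrict_iff' measurableSet_Ioc).mpr
            (ae_of_all _ fun t ht => ?_))
          have : (fun s => {p : ℝ × ℝ | p.2 < p.1}.indicator (fun p => f₂ p.1 * f₁ p.2) (t, s)) =
              (Iio t).indicator (fun s => f₂ t * f₁ s) := by
            funext s
            simp only [Set.indicator_apply, Set.mem_setOf_eq, Set.mem_Iio]
          show (∫ s, {p : ℝ × ℝ | p.2 < p.1}.indicator (fun p => f₂ p.1 * f₁ p.2) (t, s) ∂μ)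
            = f₂ t * ∫ s in Ioc (0:ℝ) t, f₁ s
          rw [this, integral_indicator measurableSet_Iio, hμ,
            Measure.restrict_restrict measurableSet_Iio,
            show Iio t ∩ Ioc 0 x = Ioo 0 t by
              ext s
              simp only [Set.mem_inter_iff, Set.mem_Iio, Set.mem_Ioc, Set.mem_Ioo]
              constructor
              · rintro ⟨hs1, hs2, _⟩; exact ⟨hs2, hs1⟩
              · rintro ⟨hs1, hs2⟩; exact ⟨hs2, hs1, le_trans hs2.le ht.2⟩,
            integral_const_mul, ← integral_Ioc_eq_integral_Ioo]
  rw [← hLHS, hsplit, hfirst, hsec]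


/-- Integrability of `g · 𝓘h` on `Ioc 0 x`. -/
lemma integrableOn_g_phi (hρ : 0 < ρ) (hm : MemFil ρ h g) {x : ℝ} :
    IntegrableOn (fun t => g t * ∫ s in Ioc (0:ℝ) t, h s) (Ioc 0 x) := by
  set φ : ℝ → ℝ := fun t => ∫ s in Ioc (0:ℝ) t, h s with hφ
  have hφc : ContinuousOn φ (Icc 0 x) :=
    intervalIntegral.continuousOn_primitive (integrableOn_h_Icc hρ hm)
  obtain ⟨M, hM⟩ := isCompact_Icc.exists_bound_of_continuousOn hφc
  have hgm : AEStronglyMeasurable g (volume.restrict (Ioc (0:ℝ) x)) :=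
    (integrableOn_g_Ioc hρ hm le_rfl (b := x)).aestronglyMeasurable
  have hφm : AEStronglyMeasurable φ (volume.restrict (Ioc (0:ℝ) x)) :=
    (hφc.mono Ioc_subset_Icc_self).aestronglyMeasurable measurableSet_Ioc
  refine Integrable.mono' (((integrableOn_g_Ioc hρ hm le_rfl).abs).mul_const M) (hgm.mul hφm)
    ((ae_restrict_iff' measurableSet_Ioc).mpr (ae_of_all _ fun t ht => ?_))
  have := hM t (Ioc_subset_Icc_self ht)
  rw [Real.norm_eq_abs, abs_mul]
  have h0 : 0 ≤ |g t| := abs_nonneg _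
  calc |g t| * |φ t| ≤ |g t| * M := by
        refine mul_le_mul_of_nonneg_left ?_ h0
        exact le_trans (le_abs_self _) (by simpa [Real.norm_eq_abs] using this)
    _ = |g t| * M := rfl

/-- The fundamental product-rule identity. -/
lemma Sh_eq (hρ : 0 < ρ) (hm : MemFil ρ h g) {x : ℝ} (hx : 0 ≤ x) :
    h x * (∫ t in (0:ℝ)..x, h t) =
      ∫ t in (0:ℝ)..x, (g t * (∫ s in (0:ℝ)..t, h s) + h t * h t) := by
  set φ : ℝ → ℝ := fun t => ∫ s in Ioc (0:ℝ) t, h s with hφ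
  set F : ℝ → ℝ := fun t => ∫ s in Ioc (0:ℝ) t, g s with hF
  have hg : IntegrableOn g (Ioc 0 x) := integrableOn_g_Ioc hρ hm le_rfl
  have hh : IntegrableOn h (Ioc 0 x) := integrableOn_h_Ioc hρ hm
  have hgφ : IntegrableOn (fun t => g t * φ t) (Ioc 0 x) := integrableOn_g_phi hρ hm
  have hFc : ContinuousOn F (Icc 0 x) :=
    intervalIntegral.continuousOn_primitive (integrableOn_g_Icc hρ hm)
  have hhF : IntegrableOn (fun t => h t * F t) (Ioc 0 x) :=
    (((h_contOn hρ hm).mul hFc).integrableOn_Icc).mono_set Ioc_subset_Icc_self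
  have hhh : IntegrableOn (fun t => h t * h t) (Ioc 0 x) :=
    (((h_contOn hρ hm).mul (h_contOn hρ hm)).integrableOn_Icc).mono_set Ioc_subset_Icc_self
  -- Fubini identity
  have hfub := integral_mul_integral hg hh
  -- h t = h 0 + F t on Ioc 0 x
  have hrep : ∀ t ∈ Ioc (0:ℝ) x, h t = h 0 + F t := fun t ht => by
    rw [hm.2.1 t ht.1.le, intervalIntegral.integral_of_le ht.1.le]
  -- ∫ h·h = h 0 * ∫ h + ∫ h F
  have hsq : ∫ t in Ioc (0:ℝ) x, h t * h t =
      h 0 * (∫ t in Ioc (0:ℝ) x, h t) + ∫ t in Ioc (0:ℝ) x, h t * F t := by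
    have : ∫ t in Ioc (0:ℝ) x, h t * h t = ∫ t in Ioc (0:ℝ) x, (h 0 * h t + h t * F t) := by
      refine setIntegral_congr_fun measurableSet_Ioc fun t ht => ?_
      rw [hrep t ht]; ring
    rw [this, integral_add (hh.const_mul _) hhF, integral_const_mul]
  -- main computation
  have hmain : h x * (∫ t in Ioc (0:ℝ) x, h t) =
      ∫ t in Ioc (0:ℝ) x, (g t * φ t + h t * h t) := by
    rw [integral_add hgφ hhh, hsq]
    have hxrep : h x = h 0 + ∫ t in Ioc (0:ℝ) x, g t := by
      rw [hm.2.1 x hx, intervalIntegral.integral_of_le hx]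
    rw [hxrep, add_mul, hfub]
    ring
  rw [intervalIntegral.integral_of_le hx, intervalIntegral.integral_of_le hx, hmain]
  refine setIntegral_congr_fun measurableSet_Ioc fun t ht => ?_
  rw [intervalIntegral.integral_of_le ht.1.le]

/-- Pointwise bound on the weighted square of the derivative of `𝓢h`. -/
lemma dSh_pointwise (hρ : 0 < ρ) (hm : MemFil ρ h g) (htend : Tendsto h atTop (nhds 0))
    {t : ℝ} (ht : 0 ≤ t) :
    (g t * (∫ s in (0:ℝ)..t, h s) + h t * h t) ^ 2 * Real.exp (ρ * t) ≤
      (8 * En ρ g / ρ ^ 3) * ((g t) ^ 2 * Real.exp (ρ * t)) +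
      (2 * (En ρ g) ^ 2 / ρ ^ 2) * Real.exp (-(ρ * t)) := by
  set φ := ∫ s in (0:ℝ)..t, h s
  have hsρ : (0:ℝ) < Real.sqrt ρ := Real.sqrt_pos.mpr hρ
  have hsρ2 : Real.sqrt ρ ^ 2 = ρ := Real.sq_sqrt hρ.le
  have hsE : Real.sqrt (En ρ g) ^ 2 = En ρ g := Real.sq_sqrt En_nonneg
  have hφ : |φ| ≤ Real.sqrt (En ρ g) * (2 / (ρ * Real.sqrt ρ)) := Ih_abs_le hρ hm htend ht
  have hht : |h t| ≤ Real.sqrt (En ρ g) * Real.exp (-(ρ/2) * t) / Real.sqrt ρ :=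
    h_abs_le hρ hm htend ht
  have hφsq : φ ^ 2 ≤ 4 * En ρ g / ρ ^ 3 := by
    have h1 : φ ^ 2 ≤ (Real.sqrt (En ρ g) * (2 / (ρ * Real.sqrt ρ))) ^ 2 := by
      rw [← sq_abs φ]
      exact pow_le_pow_left₀ (abs_nonneg _) hφ 2
    refine h1.trans_eq ?_
    rw [mul_pow, div_pow, mul_pow, hsE]
    field_simp
    nlinarith [hsρ2, sq_nonneg (Real.sqrt ρ), hρ]
  have hhsq : (h t) ^ 2 ≤ (En ρ g / ρ) * Real.exp (-(ρ * t)) := by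
    have h1 : (h t) ^ 2 ≤ (Real.sqrt (En ρ g) * Real.exp (-(ρ/2) * t) / Real.sqrt ρ) ^ 2 := by
      rw [← sq_abs (h t)]
      exact pow_le_pow_left₀ (abs_nonneg _) hht 2
    refine h1.trans_eq ?_
    rw [div_pow, mul_pow, hsE, hsρ2, sq, ← Real.exp_add, show -(ρ/2) * t + -(ρ/2) * t = -(ρ*t) by ring]
    ring
  have hexp : (0:ℝ) < Real.exp (ρ * t) := Real.exp_pos _
  have hid : Real.exp (-(ρ * t)) * Real.exp (ρ * t) = 1 := by
    rw [← Real.exp_add]; simp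
  have hsum : (g t * φ + h t * h t) ^ 2 ≤ 2 * (g t) ^ 2 * φ ^ 2 + 2 * (h t) ^ 2 * (h t) ^ 2 := by
    nlinarith [sq_nonneg (g t * φ - h t * h t)]
  have hEρ : 0 ≤ En ρ g := En_nonneg
  calc (g t * φ + h t * h t) ^ 2 * Real.exp (ρ * t)
      ≤ (2 * (g t) ^ 2 * φ ^ 2 + 2 * (h t) ^ 2 * (h t) ^ 2) * Real.exp (ρ * t) := by
        exact mul_le_mul_of_nonneg_right hsum hexp.le
    _ ≤ (2 * (g t) ^ 2 * (4 * En ρ g / ρ ^ 3) +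
          2 * ((En ρ g / ρ) * Real.exp (-(ρ * t))) * ((En ρ g / ρ) * Real.exp (-(ρ * t)))) *
          Real.exp (ρ * t) := by
        refine mul_le_mul_of_nonneg_right ?_ hexp.le
        have hg2 : (0:ℝ) ≤ (g t) ^ 2 := sq_nonneg _
        have hh2 : (0:ℝ) ≤ (h t) ^ 2 := sq_nonneg _
        have hb2 : (0:ℝ) ≤ (En ρ g / ρ) * Real.exp (-(ρ * t)) :=
          mul_nonneg (div_nonneg hEρ hρ.le) (Real.exp_nonneg _)
        nlinarith [mul_le_mul hhsq hhsq hh2 hb2]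
    _ = (8 * En ρ g / ρ ^ 3) * ((g t) ^ 2 * Real.exp (ρ * t)) +
          (2 * (En ρ g) ^ 2 / ρ ^ 2) * (Real.exp (-(ρ * t)) * (Real.exp (-(ρ * t)) * Real.exp (ρ * t))) := by
        ring
    _ = _ := by rw [hid, mul_one]

/-- The bound function for the weighted square of `d𝓢h`. -/
noncomputable def dshBound (ρ : ℝ) (g : ℝ → ℝ) : ℝ → ℝ := fun t =>
  (8 * En ρ g / ρ ^ 3) * ((g t) ^ 2 * Real.exp (ρ * t)) +
  (2 * (En ρ g) ^ 2 / ρ ^ 2) * Real.exp (-(ρ * t))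

lemma dshBound_integrable (hρ : 0 < ρ) (hm : MemFil ρ h g) :
    IntegrableOn (dshBound ρ g) (Ici (0:ℝ)) :=
  (hm.2.2.const_mul _).add ((integrableOn_exp_neg_mul_Ici hρ 0).const_mul _)

lemma dshBound_integral (hρ : 0 < ρ) (hm : MemFil ρ h g) :
    ∫ t in Ici (0:ℝ), dshBound ρ g t ≤ 10 / ρ ^ 3 * (En ρ g) ^ 2 := by
  have : ∫ t in Ici (0:ℝ), dshBound ρ g t =
      (8 * En ρ g / ρ ^ 3) * En ρ g + (2 * (En ρ g) ^ 2 / ρ ^ 2) * (1 / ρ) := by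
    rw [show dshBound ρ g = fun t => (8 * En ρ g / ρ ^ 3) * ((g t) ^ 2 * Real.exp (ρ * t)) +
        (2 * (En ρ g) ^ 2 / ρ ^ 2) * Real.exp (-(ρ * t)) from rfl,
      integral_add (hm.2.2.const_mul _) ((integrableOn_exp_neg_mul_Ici hρ 0).const_mul _),
      integral_const_mul, integral_const_mul, integral_exp_neg_mul_Ici hρ 0]
    simp [En]
  rw [this]
  have hEρ : 0 ≤ En ρ g := En_nonneg
  rw [show (8 * En ρ g / ρ ^ 3) * En ρ g + (2 * (En ρ g) ^ 2 / ρ ^ 2) * (1 / ρ)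
      = 10 / ρ ^ 3 * (En ρ g) ^ 2 by field_simp; ring]

lemma dSh_aesm (hρ : 0 < ρ) (hm : MemFil ρ h g) :
    AEStronglyMeasurable (fun t => g t * (∫ s in (0:ℝ)..t, h s) + h t * h t)
      (volume.restrict (Ici (0:ℝ))) := by
  have hg : AEStronglyMeasurable g (volume.restrict (Ici (0:ℝ))) := hm.1.aestronglyMeasurable
  have hIh : AEStronglyMeasurable (fun x => ∫ t in (0:ℝ)..x, h t) (volume.restrict (Ici (0:ℝ))) :=
    aesm_of_contOn fun b => Ih_contOn hρ hm
  have hh : AEStronglyMeasurable h (volume.restrict (Ici (0:ℝ))) :=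
    aesm_of_contOn fun b => h_contOn hρ hm
  exact (hg.mul hIh).add (hh.mul hh)

lemma dSh_sq_integrable (hρ : 0 < ρ) (hm : MemFil ρ h g) (htend : Tendsto h atTop (nhds 0)) :
    IntegrableOn (fun t => (g t * (∫ s in (0:ℝ)..t, h s) + h t * h t) ^ 2 * Real.exp (ρ * t))
      (Ici (0:ℝ)) := by
  refine Integrable.mono' (dshBound_integrable hρ hm)
    ((((dSh_aesm hρ hm).mul (dSh_aesm hρ hm)).congr ?_).mul
      (Real.continuous_exp.comp (by fun_prop)).aestronglyMeasurable)
    ((ae_restrict_iff' measurableSet_Ici).mpr (ae_of_all _ fun t ht => ?_))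
  · exact ae_of_all _ fun t => (sq (g t * (∫ s in (0:ℝ)..t, h s) + h t * h t)).symm
  · rw [Real.norm_eq_abs, abs_of_nonneg (mul_nonneg (sq_nonneg _) (Real.exp_nonneg _))]
    exact dSh_pointwise hρ hm htend ht

lemma dSh_sq_integral_le (hρ : 0 < ρ) (hm : MemFil ρ h g) (htend : Tendsto h atTop (nhds 0)) :
    ∫ t in Ici (0:ℝ), (g t * (∫ s in (0:ℝ)..t, h s) + h t * h t) ^ 2 * Real.exp (ρ * t) ≤
      10 / ρ ^ 3 * (filNorm ρ h g) ^ 4 := by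
  have h1 : ∫ t in Ici (0:ℝ), (g t * (∫ s in (0:ℝ)..t, h s) + h t * h t) ^ 2 * Real.exp (ρ * t)
      ≤ ∫ t in Ici (0:ℝ), dshBound ρ g t :=
    setIntegral_mono_on (dSh_sq_integrable hρ hm htend) (dshBound_integrable hρ hm)
      measurableSet_Ici fun t ht => dSh_pointwise hρ hm htend ht
  refine (h1.trans (dshBound_integral hρ hm)).trans ?_
  have h2 : En ρ g ≤ (filNorm ρ h g) ^ 2 := En_le_filNorm_sq (h := h)
  have h3 : (En ρ g) ^ 2 ≤ ((filNorm ρ h g) ^ 2) ^ 2 := pow_le_pow_left₀ En_nonneg h2 2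
  calc 10 / ρ ^ 3 * (En ρ g) ^ 2 ≤ 10 / ρ ^ 3 * ((filNorm ρ h g) ^ 2) ^ 2 := by
        refine mul_le_mul_of_nonneg_left h3 (by positivity)
    _ = 10 / ρ ^ 3 * (filNorm ρ h g) ^ 4 := by ring

lemma Sh_zero : (fun x => h x * ∫ t in (0:ℝ)..x, h t) 0 = 0 := by
  simp [intervalIntegral.integral_same]

lemma part1 (hρ : 0 < ρ) (hm : MemFil ρ h g) (htend : Tendsto h atTop (nhds 0)) :
    MemFil ρ (fun x => h x * ∫ t in (0:ℝ)..x, h t)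
      (fun t => g t * (∫ s in (0:ℝ)..t, h s) + h t * h t) ∧
    Tendsto (fun x => h x * ∫ t in (0:ℝ)..x, h t) atTop (nhds 0) ∧
    filNorm ρ (fun x => h x * ∫ t in (0:ℝ)..x, h t)
      (fun t => g t * (∫ s in (0:ℝ)..t, h s) + h t * h t)
      ≤ Real.sqrt (10 / ρ ^ 3) * (filNorm ρ h g) ^ 2 := by
  refine ⟨⟨(dSh_aesm hρ hm).aemeasurable, fun x hx => ?_, dSh_sq_integrable hρ hm htend⟩, ?_, ?_⟩
  · rw [Sh_zero, zero_add]
    exact Sh_eq hρ hm hx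
  · have hc : Tendsto (fun x => |h x| * (Real.sqrt (En ρ g) * (2 / (ρ * Real.sqrt ρ))))
        atTop (nhds 0) := by
      have h0 : Tendsto (fun x => |h x|) atTop (nhds 0) := by simpa using htend.abs
      simpa using h0.mul_const (Real.sqrt (En ρ g) * (2 / (ρ * Real.sqrt ρ)))
    refine squeeze_zero_norm' ?_ hc
    filter_upwards [eventually_ge_atTop (0:ℝ)] with x hx
    rw [Real.norm_eq_abs, abs_mul]
    exact mul_le_mul_of_nonneg_left (Ih_abs_le hρ hm htend hx) (abs_nonneg _)
  · have hN : 0 ≤ filNorm ρ h g := filNorm_nonneg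
    rw [filNorm, show h 0 * (∫ t in (0:ℝ)..0, h t) = 0 by simp [intervalIntegral.integral_same],
      show ((0:ℝ)) ^ 2 = 0 by norm_num, zero_add]
    calc Real.sqrt (∫ t in Ici (0:ℝ), (g t * (∫ s in (0:ℝ)..t, h s) + h t * h t) ^ 2 *
            Real.exp (ρ * t))
        ≤ Real.sqrt (10 / ρ ^ 3 * (filNorm ρ h g) ^ 4) :=
          Real.sqrt_le_sqrt (dSh_sq_integral_le hρ hm htend)
      _ = Real.sqrt (10 / ρ ^ 3) * (filNorm ρ h g) ^ 2 := by
          rw [Real.sqrt_mul (by positivity),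
            show (filNorm ρ h g) ^ 4 = ((filNorm ρ h g) ^ 2) ^ 2 by ring,
            Real.sqrt_sq (by positivity)]


lemma sqrtEn_le : Real.sqrt (En ρ g) ≤ filNorm ρ h g := by
  rw [← Real.sqrt_sq (filNorm_nonneg (ρ := ρ) (h := h) (g := g))]
  exact Real.sqrt_le_sqrt En_le_filNorm_sq

lemma weight_aesm {f : ℝ → ℝ} (hf : AEStronglyMeasurable f (volume.restrict (Ici (0:ℝ)))) :
    AEStronglyMeasurable (fun t => (f t) ^ 2 * Real.exp (ρ * t)) (volume.restrict (Ici (0:ℝ))) :=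
  ((hf.mul hf).congr (ae_of_all _ fun t => (sq (f t)).symm)).mul
    (Real.continuous_exp.comp (by fun_prop)).aestronglyMeasurable

lemma memFil_sub (hρ : 0 < ρ) (hmh : MemFil ρ h gh) (hmk : MemFil ρ k gk) :
    MemFil ρ (fun x => h x - k x) (fun t => gh t - gk t) := by
  refine ⟨hmh.1.sub hmk.1, fun x hx => ?_, ?_⟩
  · have := intervalIntegral.integral_sub (intervalIntegrable_g hρ hmh le_rfl hx)
      (intervalIntegrable_g hρ hmk le_rfl hx)
    simp only []
    rw [hmh.2.1 x hx, hmk.2.1 x hx, this]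
    ring
  · refine Integrable.mono' ((hmh.2.2.const_mul 2).add (hmk.2.2.const_mul 2))
      (weight_aesm (hmh.1.sub hmk.1).aestronglyMeasurable)
      ((ae_restrict_iff' measurableSet_Ici).mpr (ae_of_all _ fun t ht => ?_))
    rw [Real.norm_eq_abs, abs_of_nonneg (mul_nonneg (sq_nonneg _) (Real.exp_nonneg _))]
    have he : (0:ℝ) ≤ Real.exp (ρ * t) := Real.exp_nonneg _
    simp only [Pi.add_apply]
    nlinarith [sq_nonneg (gh t + gk t), sq_nonneg (gh t - gk t),
      mul_nonneg (sq_nonneg (gh t + gk t)) he]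

set_option maxHeartbeats 1000000 in
/-- Pointwise bound for the difference of derivatives of `𝓢h` and `𝓢k`. -/
lemma dS_diff_pointwise (hρ : 0 < ρ) {r : ℝ} (hr : 0 ≤ r)
    (hmh : MemFil ρ h gh) (hmk : MemFil ρ k gk)
    (htendh : Tendsto h atTop (nhds 0)) (htendk : Tendsto k atTop (nhds 0))
    (hNh : filNorm ρ h gh ≤ r) (hNk : filNorm ρ k gk ≤ r) {t : ℝ} (ht : 0 ≤ t) :
    ((gh t * (∫ s in (0:ℝ)..t, h s) + h t * h t)
      - (gk t * (∫ s in (0:ℝ)..t, k s) + k t * k t)) ^ 2 * Real.exp (ρ * t) ≤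
      3 * (r * (2 / (ρ * Real.sqrt ρ))) ^ 2 *
        ((gh t - gk t) ^ 2 * Real.exp (ρ * t)) +
      3 * (filNorm ρ (fun x => h x - k x) (fun t => gh t - gk t) * (2 / (ρ * Real.sqrt ρ))) ^ 2 *
        ((gk t) ^ 2 * Real.exp (ρ * t)) +
      (12 * r ^ 2 * (filNorm ρ (fun x => h x - k x) (fun t => gh t - gk t)) ^ 2 / ρ ^ 2) *
        Real.exp (-(ρ * t)) := by
  set D := filNorm ρ (fun x => h x - k x) (fun t => gh t - gk t) with hD
  have hmd : MemFil ρ (fun x => h x - k x) (fun t => gh t - gk t) := memFil_sub hρ hmh hmk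
  have htendd : Tendsto (fun x => h x - k x) atTop (nhds 0) := by
    simpa using htendh.sub htendk
  have hsρ : (0:ℝ) < Real.sqrt ρ := Real.sqrt_pos.mpr hρ
  have hsρ2 : Real.sqrt ρ * Real.sqrt ρ = ρ := Real.mul_self_sqrt hρ.le
  have hDnn : 0 ≤ D := filNorm_nonneg
  set e0 := Real.exp (-(ρ/2) * t) with he0
  have he0nn : 0 ≤ e0 := Real.exp_nonneg _
  set E := Real.exp (ρ * t) with hE
  have hEnn : (0:ℝ) ≤ E := Real.exp_nonneg _
  have he02 : e0 * e0 = Real.exp (-(ρ * t)) := by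
    rw [he0, ← Real.exp_add, show -(ρ/2) * t + -(ρ/2) * t = -(ρ * t) by ring]
  have heE : Real.exp (-(ρ * t)) * E = 1 := by
    rw [hE, ← Real.exp_add]; simp
  set c1 := 2 / (ρ * Real.sqrt ρ) with hc1
  have hc1nn : 0 ≤ c1 := by positivity
  -- interval integrability of h and k on [0, t]
  have hih : IntervalIntegrable h volume 0 t := by
    rw [intervalIntegrable_iff_integrableOn_Ioc_of_le ht]
    exact integrableOn_h_Ioc hρ hmh
  have hik : IntervalIntegrable k volume 0 t := by
    rw [intervalIntegrable_iff_integrableOn_Ioc_of_le ht]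
    exact integrableOn_h_Ioc hρ hmk
  have hsub : (∫ s in (0:ℝ)..t, h s) - (∫ s in (0:ℝ)..t, k s)
      = ∫ s in (0:ℝ)..t, (h s - k s) := (intervalIntegral.integral_sub hih hik).symm
  set a := (gh t - gk t) * (∫ s in (0:ℝ)..t, h s) with ha
  set b := gk t * (∫ s in (0:ℝ)..t, (h s - k s)) with hb
  set c := (h t - k t) * (h t + k t) with hc
  have hde : (gh t * (∫ s in (0:ℝ)..t, h s) + h t * h t)
      - (gk t * (∫ s in (0:ℝ)..t, k s) + k t * k t) = a + b + c := by
    rw [ha, hb, hc, ← hsub]; ring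
  -- bounds
  have hIh : |∫ s in (0:ℝ)..t, h s| ≤ r * c1 := by
    refine (Ih_abs_le hρ hmh htendh ht).trans ?_
    exact mul_le_mul_of_nonneg_right ((sqrtEn_le (h := h)).trans hNh) hc1nn
  have hId : |∫ s in (0:ℝ)..t, (h s - k s)| ≤ D * c1 := by
    have := Ih_abs_le hρ hmd htendd ht
    exact this.trans (mul_le_mul_of_nonneg_right (sqrtEn_le (h := fun x => h x - k x)) hc1nn)
  have hhd : |h t - k t| ≤ D * e0 / Real.sqrt ρ := by
    have := h_abs_le hρ hmd htendd ht
    refine this.trans ?_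
    gcongr
    exact sqrtEn_le (h := fun x => h x - k x)
  have hht : |h t| ≤ r * e0 / Real.sqrt ρ := by
    refine (h_abs_le hρ hmh htendh ht).trans ?_
    gcongr
    exact (sqrtEn_le (h := h)).trans hNh
  have hkt : |k t| ≤ r * e0 / Real.sqrt ρ := by
    refine (h_abs_le hρ hmk htendk ht).trans ?_
    gcongr
    exact (sqrtEn_le (h := k)).trans hNk
  have hhk : |h t + k t| ≤ 2 * r * e0 / Real.sqrt ρ := by
    refine (abs_add_le _ _).trans ?_
    calc |h t| + |k t| ≤ r * e0 / Real.sqrt ρ + r * e0 / Real.sqrt ρ := add_le_add hht hkt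
      _ = 2 * r * e0 / Real.sqrt ρ := by ring
  -- squares
  have sq_le : ∀ u v : ℝ, |u| ≤ v → u ^ 2 ≤ v ^ 2 := fun u v huv => by
    rw [← sq_abs u]; exact pow_le_pow_left₀ (abs_nonneg u) huv 2
  have ha2 : a ^ 2 ≤ (gh t - gk t) ^ 2 * (r * c1) ^ 2 := by
    rw [ha, mul_pow]
    exact mul_le_mul_of_nonneg_left (sq_le _ _ hIh) (sq_nonneg _)
  have hb2 : b ^ 2 ≤ (gk t) ^ 2 * (D * c1) ^ 2 := by
    rw [hb, mul_pow]
    exact mul_le_mul_of_nonneg_left (sq_le _ _ hId) (sq_nonneg _)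
  have hc2 : c ^ 2 ≤ (2 * r * D / ρ) ^ 2 * (e0 * e0) ^ 2 := by
    have habs : |c| ≤ (2 * r * D / ρ) * (e0 * e0) := by
      rw [hc, abs_mul]
      calc |h t - k t| * |h t + k t|
          ≤ (D * e0 / Real.sqrt ρ) * (2 * r * e0 / Real.sqrt ρ) :=
            mul_le_mul hhd hhk (abs_nonneg _) (by positivity)
        _ = (2 * r * D / ρ) * (e0 * e0) := by
            rw [div_mul_div_comm, hsρ2]
            ring
    calc c ^ 2 ≤ ((2 * r * D / ρ) * (e0 * e0)) ^ 2 := sq_le _ _ habs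
      _ = (2 * r * D / ρ) ^ 2 * (e0 * e0) ^ 2 := by ring
  have h3 : (a + b + c) ^ 2 ≤ 3 * a ^ 2 + 3 * b ^ 2 + 3 * c ^ 2 := by
    nlinarith [sq_nonneg (a - b), sq_nonneg (b - c), sq_nonneg (a - c)]
  calc ((gh t * (∫ s in (0:ℝ)..t, h s) + h t * h t)
      - (gk t * (∫ s in (0:ℝ)..t, k s) + k t * k t)) ^ 2 * E
      = (a + b + c) ^ 2 * E := by rw [hde]
    _ ≤ (3 * a ^ 2 + 3 * b ^ 2 + 3 * c ^ 2) * E := mul_le_mul_of_nonneg_right h3 hEnn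
    _ = 3 * a ^ 2 * E + 3 * b ^ 2 * E + 3 * c ^ 2 * E := by ring
    _ ≤ 3 * ((gh t - gk t) ^ 2 * (r * c1) ^ 2) * E + 3 * ((gk t) ^ 2 * (D * c1) ^ 2) * E
        + 3 * ((2 * r * D / ρ) ^ 2 * (e0 * e0) ^ 2) * E := by
        gcongr
    _ = 3 * (r * c1) ^ 2 * ((gh t - gk t) ^ 2 * E) + 3 * (D * c1) ^ 2 * ((gk t) ^ 2 * E)
        + (12 * r ^ 2 * D ^ 2 / ρ ^ 2) * ((e0 * e0) * ((e0 * e0) * E)) := by ring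
    _ = _ := by rw [he02, heE, mul_one]

set_option maxHeartbeats 1600000 in
lemma part2 (hρ : 0 < ρ) {r : ℝ} (hr : 0 ≤ r)
    (hmh : MemFil ρ h gh) (hmk : MemFil ρ k gk)
    (htendh : Tendsto h atTop (nhds 0)) (htendk : Tendsto k atTop (nhds 0))
    (hNh : filNorm ρ h gh ≤ r) (hNk : filNorm ρ k gk ≤ r) :
    filNorm ρ
      (fun x => h x * (∫ t in (0:ℝ)..x, h t) - k x * ∫ t in (0:ℝ)..x, k t)
      (fun t => (gh t * (∫ s in (0:ℝ)..t, h s) + h t * h t)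
        - (gk t * (∫ s in (0:ℝ)..t, k s) + k t * k t))
      ≤ (6 / (ρ * Real.sqrt ρ) * r) * filNorm ρ (fun x => h x - k x) (fun t => gh t - gk t) := by
  set D := filNorm ρ (fun x => h x - k x) (fun t => gh t - gk t) with hD
  have hmd : MemFil ρ (fun x => h x - k x) (fun t => gh t - gk t) := memFil_sub hρ hmh hmk
  have hDnn : 0 ≤ D := filNorm_nonneg
  have hsρ : (0:ℝ) < Real.sqrt ρ := Real.sqrt_pos.mpr hρ
  have hsρ2 : Real.sqrt ρ * Real.sqrt ρ = ρ := Real.mul_self_sqrt hρ.le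
  set c1 := 2 / (ρ * Real.sqrt ρ) with hc1
  set d : ℝ → ℝ := fun t => (gh t * (∫ s in (0:ℝ)..t, h s) + h t * h t)
    - (gk t * (∫ s in (0:ℝ)..t, k s) + k t * k t) with hd
  set B : ℝ → ℝ := fun t =>
      3 * (r * c1) ^ 2 * ((gh t - gk t) ^ 2 * Real.exp (ρ * t)) +
      3 * (D * c1) ^ 2 * ((gk t) ^ 2 * Real.exp (ρ * t)) +
      (12 * r ^ 2 * D ^ 2 / ρ ^ 2) * Real.exp (-(ρ * t)) with hB
  have hBint : IntegrableOn B (Ici (0:ℝ)) :=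
    ((hmd.2.2.const_mul _).add (hmk.2.2.const_mul _)).add
      ((integrableOn_exp_neg_mul_Ici hρ 0).const_mul _)
  have hdaesm : AEStronglyMeasurable d (volume.restrict (Ici (0:ℝ))) :=
    (dSh_aesm hρ hmh).sub (dSh_aesm hρ hmk)
  have hptw : ∀ t ∈ Ici (0:ℝ), d t ^ 2 * Real.exp (ρ * t) ≤ B t := fun t ht =>
    dS_diff_pointwise hρ hr hmh hmk htendh htendk hNh hNk ht
  have hdint : IntegrableOn (fun t => d t ^ 2 * Real.exp (ρ * t)) (Ici (0:ℝ)) := by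
    refine Integrable.mono' hBint (weight_aesm hdaesm)
      ((ae_restrict_iff' measurableSet_Ici).mpr (ae_of_all _ fun t ht => ?_))
    rw [Real.norm_eq_abs, abs_of_nonneg (mul_nonneg (sq_nonneg _) (Real.exp_nonneg _))]
    exact hptw t ht
  have hBintval : ∫ t in Ici (0:ℝ), B t ≤ 36 * r ^ 2 * D ^ 2 / ρ ^ 3 := by
    have hBeq : ∫ t in Ici (0:ℝ), B t =
        3 * (r * c1) ^ 2 * En ρ (fun t => gh t - gk t) + 3 * (D * c1) ^ 2 * En ρ gk +
        (12 * r ^ 2 * D ^ 2 / ρ ^ 2) * (1 / ρ) := by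
      have i1 : IntegrableOn (fun t => 3 * (r * c1) ^ 2 * ((gh t - gk t) ^ 2 * Real.exp (ρ * t)))
          (Ici (0:ℝ)) := hmd.2.2.const_mul _
      have i2 : IntegrableOn (fun t => 3 * (D * c1) ^ 2 * ((gk t) ^ 2 * Real.exp (ρ * t)))
          (Ici (0:ℝ)) := hmk.2.2.const_mul _
      have i3 : IntegrableOn (fun t => (12 * r ^ 2 * D ^ 2 / ρ ^ 2) * Real.exp (-(ρ * t)))
          (Ici (0:ℝ)) := (integrableOn_exp_neg_mul_Ici hρ 0).const_mul _
      have i12 : IntegrableOn (fun t => 3 * (r * c1) ^ 2 * ((gh t - gk t) ^ 2 * Real.exp (ρ * t))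
          + 3 * (D * c1) ^ 2 * ((gk t) ^ 2 * Real.exp (ρ * t))) (Ici (0:ℝ)) := i1.add i2
      rw [hB, integral_add i12 i3, integral_add i1 i2,
        integral_const_mul, integral_const_mul, integral_const_mul,
        integral_exp_neg_mul_Ici hρ 0]
      simp [En]
    rw [hBeq]
    have h1 : En ρ (fun t => gh t - gk t) ≤ D ^ 2 :=
      En_le_filNorm_sq (h := fun x => h x - k x)
    have h2 : En ρ gk ≤ r ^ 2 := (En_le_filNorm_sq (h := k)).trans
      (pow_le_pow_left₀ filNorm_nonneg hNk 2)
    have hc1sq : c1 ^ 2 = 4 / ρ ^ 3 := by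
      rw [hc1, div_pow, mul_pow]
      rw [show Real.sqrt ρ ^ 2 = ρ by rw [sq]; exact hsρ2]
      ring_nf
    have hEd : 0 ≤ En ρ (fun t => gh t - gk t) := En_nonneg
    have hEk : 0 ≤ En ρ gk := En_nonneg
    calc 3 * (r * c1) ^ 2 * En ρ (fun t => gh t - gk t) + 3 * (D * c1) ^ 2 * En ρ gk +
        (12 * r ^ 2 * D ^ 2 / ρ ^ 2) * (1 / ρ)
        ≤ 3 * (r * c1) ^ 2 * D ^ 2 + 3 * (D * c1) ^ 2 * r ^ 2 +
          (12 * r ^ 2 * D ^ 2 / ρ ^ 2) * (1 / ρ) := by gcongr <;> positivity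
      _ = 6 * c1 ^ 2 * r ^ 2 * D ^ 2 + 12 * r ^ 2 * D ^ 2 / ρ ^ 3 := by
          field_simp
          ring
      _ = 36 * r ^ 2 * D ^ 2 / ρ ^ 3 := by
          rw [hc1sq]
          field_simp
          ring
  have hzero : h 0 * (∫ t in (0:ℝ)..0, h t) - k 0 * (∫ t in (0:ℝ)..0, k t) = 0 := by
    simp [intervalIntegral.integral_same]
  have hsq36 : 36 * r ^ 2 * D ^ 2 / ρ ^ 3 = ((6 / (ρ * Real.sqrt ρ) * r) * D) ^ 2 := by
    rw [mul_pow, mul_pow, div_pow, mul_pow]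
    rw [show Real.sqrt ρ ^ 2 = ρ by rw [sq]; exact hsρ2]
    field_simp
    ring
  rw [filNorm, hzero, show ((0:ℝ)) ^ 2 = 0 by norm_num, zero_add]
  calc Real.sqrt (∫ t in Ici (0:ℝ), ((gh t * (∫ s in (0:ℝ)..t, h s) + h t * h t)
        - (gk t * (∫ s in (0:ℝ)..t, k s) + k t * k t)) ^ 2 * Real.exp (ρ * t))
      ≤ Real.sqrt (((6 / (ρ * Real.sqrt ρ) * r) * D) ^ 2) := by
        refine Real.sqrt_le_sqrt ?_
        rw [← hsq36]
        exact le_trans (setIntegral_mono_on hdint hBint measurableSet_Ici hptw) hBintval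
    _ = (6 / (ρ * Real.sqrt ρ) * r) * D := Real.sqrt_sq (by positivity)


end FilAux

open Set Real in
/-- the map `𝓢h = h · 𝓘h` on `H⁰_ρ` (functions in `H_ρ` vanishing at infinity)
maps into `H⁰_ρ`, satisfies a quadratic growth bound `‖𝓢h‖_ρ ≤ C ‖h‖_ρ²`, and is locally
Lipschitz in the ball sense. -/
theorem filipovic_S_map (ρ : ℝ) (hρ : 0 < ρ) :
    (∃ C : ℝ, 0 < C ∧
      ∀ h g : ℝ → ℝ, MemFil ρ h g → Tendsto h atTop (nhds 0) →
        MemFil ρ (fun x => h x * ∫ t in (0:ℝ)..x, h t)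
          (fun t => g t * (∫ s in (0:ℝ)..t, h s) + h t * h t) ∧
        Tendsto (fun x => h x * ∫ t in (0:ℝ)..x, h t) atTop (nhds 0) ∧
        filNorm ρ (fun x => h x * ∫ t in (0:ℝ)..x, h t)
          (fun t => g t * (∫ s in (0:ℝ)..t, h s) + h t * h t)
          ≤ C * (filNorm ρ h g) ^ 2) ∧
    (∃ L : ℝ → ℝ, MonotoneOn L (Set.Ici 0) ∧ (∀ r : ℝ, 0 ≤ r → 0 ≤ L r) ∧
      ∀ r : ℝ, 0 ≤ r → ∀ h k gh gk : ℝ → ℝ,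
        MemFil ρ h gh → MemFil ρ k gk →
        Tendsto h atTop (nhds 0) → Tendsto k atTop (nhds 0) →
        filNorm ρ h gh ≤ r → filNorm ρ k gk ≤ r →
        filNorm ρ
          (fun x => h x * (∫ t in (0:ℝ)..x, h t) - k x * ∫ t in (0:ℝ)..x, k t)
          (fun t => (gh t * (∫ s in (0:ℝ)..t, h s) + h t * h t)
            - (gk t * (∫ s in (0:ℝ)..t, k s) + k t * k t))
          ≤ L r * filNorm ρ (fun x => h x - k x) (fun t => gh t - gk t)) := by
  constructor
  · exact ⟨Real.sqrt (10 / ρ ^ 3), Real.sqrt_pos.mpr (by positivity),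
      fun h g hm htend => FilAux.part1 hρ hm htend⟩
  · refine ⟨fun r => 6 / (ρ * Real.sqrt ρ) * r, ?_, ?_, ?_⟩
    · intro a _ b _ hab
      have hc : (0:ℝ) ≤ 6 / (ρ * Real.sqrt ρ) := by positivity
      exact mul_le_mul_of_nonneg_left hab hc
    · intro r hr
      have hc : (0:ℝ) ≤ 6 / (ρ * Real.sqrt ρ) := by positivity
      exact mul_nonneg hc hr
    · intro r hr h k gh gk hmh hmk htendh htendk hNh hNk
      exact FilAux.part2 hρ hr hmh hmk htendh htendk hNh hNk
end

section
/- Let ρ > 0, let φ : ℝ → ℝ be continuously differentiable, and let h : [0,∞) → ℝ belong to the Filipović space H_ρ with derivative g. Then φ ∘ h belongs to H_ρ with derivative (φ' ∘ h)·g; that is, ∫_0^∞ (φ'(h(t)) g(t))² e^{ρt} dt < ∞ and φ(h(x)) = φ(h(0)) + ∫_0^x φ'(h(t)) g(t) dt for all x ≥ 0. In particular, exp(h) ∈ H_ρ for every h ∈ H_ρ. -/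
open MeasureTheory Filter

/-- `g` itself is integrable on `[0,∞)` (Cauchy–Schwarz / AM–GM with `e^{-ρt}`). -/
lemma MemFilAux.integrableOn_self (ρ : ℝ) (hρ : 0 < ρ) (g : ℝ → ℝ)
    (hgm : AEMeasurable g (volume.restrict (Set.Ici (0:ℝ))))
    (hint : IntegrableOn (fun t => (g t) ^ 2 * Real.exp (ρ * t)) (Set.Ici (0:ℝ))) :
    IntegrableOn g (Set.Ici (0:ℝ)) := by
  have hexp : IntegrableOn (fun t => Real.exp (-ρ * t)) (Set.Ici (0:ℝ)) := by
    rw [integrableOn_Ici_iff_integrableOn_Ioi]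
    exact exp_neg_integrableOn_Ioi 0 hρ
  have hdom : IntegrableOn (fun t => ((g t) ^ 2 * Real.exp (ρ * t) + Real.exp (-ρ * t)) / 2)
      (Set.Ici (0:ℝ)) := (hint.add hexp).div_const 2
  refine hdom.integrable.mono' hgm.aestronglyMeasurable ?_
  filter_upwards [ae_restrict_mem measurableSet_Ici] with t ht
  have hu : (0:ℝ) < Real.exp (ρ * t / 2) := Real.exp_pos _
  have hu2 : Real.exp (ρ * t) = Real.exp (ρ * t / 2) ^ 2 := by
    rw [sq, ← Real.exp_add]; congr 1; ring
  have hu3 : Real.exp (-ρ * t) = (Real.exp (ρ * t / 2))⁻¹ ^ 2 := by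
    rw [← Real.exp_neg, sq, ← Real.exp_add]; congr 1; ring
  have hu4 : Real.exp (ρ * t / 2) * (Real.exp (ρ * t / 2))⁻¹ = 1 := mul_inv_cancel₀ hu.ne'
  have h1 : |g t| ^ 2 = g t ^ 2 := sq_abs _
  rw [Real.norm_eq_abs, hu2, hu3]
  nlinarith [sq_nonneg (|g t| * Real.exp (ρ * t / 2) - (Real.exp (ρ * t / 2))⁻¹),
    abs_nonneg (g t), sq_nonneg (Real.exp (ρ * t / 2))]

/-- The key composition lemma: `φ ∘ h ∈ H_ρ` with derivative `(φ' ∘ h)·g`. -/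
lemma MemFilAux.comp (ρ : ℝ) (hρ : 0 < ρ) (φ : ℝ → ℝ) (hφ : ContDiff ℝ 1 φ)
    (h g : ℝ → ℝ) (hmem : MemFil ρ h g) :
    MemFil ρ (fun x => φ (h x)) (fun t => deriv φ (h t) * g t) := by
  obtain ⟨hgm, hfc, hint⟩ := hmem
  have hφ' : Continuous (deriv φ) := hφ.continuous_deriv le_rfl
  have hφd : Differentiable ℝ φ := hφ.differentiable one_ne_zero
  have hgint : IntegrableOn g (Set.Ici (0:ℝ)) :=
    MemFilAux.integrableOn_self ρ hρ g hgm hint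
  set I₀ : ℝ := ∫ t in Set.Ici (0:ℝ), |g t| with hI₀def
  have habs_int : IntegrableOn (fun t => |g t|) (Set.Ici (0:ℝ)) := hgint.abs
  have hI₀ : 0 ≤ I₀ := setIntegral_nonneg measurableSet_Ici (fun t _ => abs_nonneg _)
  have hIg : ∀ x : ℝ, 0 ≤ x → (∫ t in (0:ℝ)..x, |g t|) ≤ I₀ := by
    intro x hx
    rw [intervalIntegral.integral_of_le hx]
    exact setIntegral_mono_set habs_int (ae_of_all _ fun t => abs_nonneg _)
      (HasSubset.Subset.eventuallyLE (fun t ht => le_of_lt ht.1))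
  have hbound : ∀ t : ℝ, 0 ≤ t → |h t - h 0| ≤ I₀ := by
    intro t ht
    rw [hfc t ht, add_sub_cancel_left]
    exact le_trans (intervalIntegral.abs_integral_le_integral_abs ht) (hIg t ht)
  set K : Set ℝ := Set.Icc (h 0 - I₀ - 1) (h 0 + I₀ + 1) with hKdef
  have hKh : ∀ t : ℝ, 0 ≤ t → h t ∈ K := by
    intro t ht
    have h1 := hbound t ht
    rw [abs_le] at h1
    exact ⟨by linarith [h1.1], by linarith [h1.2]⟩
  -- continuity of h on [0,∞)
  have hhc : ContinuousOn h (Set.Ici (0:ℝ)) := by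
    intro x hx
    have hx0 : (0:ℝ) ≤ x := hx
    have hx1 : (0:ℝ) ≤ x + 1 := by linarith
    have h1 : IntegrableOn g (Set.uIcc (0:ℝ) (x+1)) := by
      rw [Set.uIcc_of_le hx1]
      exact hgint.mono_set (Set.Icc_subset_Ici_self)
    have h2 := intervalIntegral.continuousOn_primitive_interval h1
    rw [Set.uIcc_of_le hx1] at h2
    have hmem' : Set.Icc (0:ℝ) (x+1) ∈ nhdsWithin x (Set.Ici (0:ℝ)) := by
      rw [← Set.Ici_inter_Iic]
      exact Filter.inter_mem self_mem_nhdsWithin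
        (mem_nhdsWithin_of_mem_nhds (Iic_mem_nhds (by linarith)))
    have h3 : ContinuousWithinAt (fun y => h 0 + ∫ t in (0:ℝ)..y, g t) (Set.Ici (0:ℝ)) x :=
      (continuousWithinAt_const.add (h2 x ⟨hx, by linarith⟩)).mono_of_mem_nhdsWithin hmem'
    exact h3.congr (fun y hy => hfc y hy) (hfc x hx)
  -- bound on deriv φ on K
  obtain ⟨C₀, hC₀⟩ := (isCompact_Icc : IsCompact K).exists_bound_of_continuousOn hφ'.continuousOn
  set C : ℝ := max C₀ 0 with hCdef
  have hC : ∀ y ∈ K, |deriv φ y| ≤ C := fun y hy => le_trans (hC₀ y hy) (le_max_left _ _)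
  have hC0 : (0:ℝ) ≤ C := le_max_right _ _
  have hLip : ∀ a ∈ K, ∀ b ∈ K, |φ b - φ a| ≤ C * |b - a| := by
    intro a ha b hb
    exact (convex_Icc _ _).norm_image_sub_le_of_norm_hasDerivWithin_le
      (fun y _ => (hφd y).hasDerivAt.hasDerivWithinAt) (fun y hy => hC y hy) ha hb
  -- measurability
  have hcompm : AEMeasurable (fun t => deriv φ (h t) * g t) (volume.restrict (Set.Ici (0:ℝ))) :=
    ((hφ'.comp_continuousOn hhc).aemeasurable measurableSet_Ici).mul hgm
  refine ⟨hcompm, ?_, ?_⟩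
  · -- the FTC identity
    intro x hx
    -- interval integrability of the candidate derivative
    have hgII : IntervalIntegrable g volume 0 x := by
      have : IntegrableOn g (Set.uIcc (0:ℝ) x) := by
        rw [Set.uIcc_of_le hx]; exact hgint.mono_set Set.Icc_subset_Ici_self
      exact this.intervalIntegrable
    have hmeas2 : AEStronglyMeasurable (fun t => deriv φ (h t) * g t)
        (volume.restrict (Set.Icc (0:ℝ) x)) :=
      (hcompm.mono_measure (Measure.restrict_mono Set.Icc_subset_Ici_self le_rfl)).aestronglyMeasurable
    have hgabsIcc : IntegrableOn (fun t => |g t|) (Set.Icc (0:ℝ) x) :=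
      habs_int.mono_set Set.Icc_subset_Ici_self
    have hf2 : IntervalIntegrable (fun t => deriv φ (h t) * g t) volume 0 x := by
      rw [intervalIntegrable_iff_integrableOn_Icc_of_le hx]
      refine Integrable.mono' (hgabsIcc.const_mul C) hmeas2 ?_
      filter_upwards [ae_restrict_mem measurableSet_Icc] with t ht
      rw [Real.norm_eq_abs, abs_mul]
      exact mul_le_mul_of_nonneg_right (hC _ (hKh t ht.1)) (abs_nonneg _)
    set A : ℝ := ∫ t in (0:ℝ)..x, deriv φ (h t) * g t with hAdef
    -- it suffices to bound the defect by every ε > 0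
    suffices hkey : ∀ ε : ℝ, 0 < ε → |φ (h x) - (φ (h 0) + A)| ≤ ε by
      by_contra hne
      have hpos : 0 < |φ (h x) - (φ (h 0) + A)| := by
        rcases lt_or_eq_of_le (abs_nonneg (φ (h x) - (φ (h 0) + A))) with h1 | h1
        · exact h1
        · exact absurd (by rw [← sub_eq_zero]; exact (abs_eq_zero.mp h1.symm)) hne
      have := hkey (|φ (h x) - (φ (h 0) + A)| / 2) (by linarith)
      linarith
    intro ε hε
    -- uniform continuity of deriv φ on K
    have hUC := (isCompact_Icc : IsCompact K).uniformContinuousOn_of_continuous hφ'.continuousOn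
    rw [Metric.uniformContinuousOn_iff] at hUC
    have hI₁ : (0:ℝ) < I₀ + 1 := by linarith
    set ε' : ℝ := ε / (3 * (I₀ + 1)) with hε'def
    have hε' : 0 < ε' := by positivity
    obtain ⟨δ', hδ'pos, hδ'⟩ := hUC ε' hε'
    set δ : ℝ := min (δ' / 2) (min 1 (ε / (3 * (C + 1)))) with hδdef
    have hC1 : (0:ℝ) < C + 1 := by linarith
    have hδpos : 0 < δ := lt_min (by positivity) (lt_min one_pos (by positivity))
    have hδ1 : δ ≤ 1 := le_trans (min_le_right _ _) (min_le_left _ _)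
    have hδδ' : δ < δ' := lt_of_le_of_lt (min_le_left _ _) (by linarith)
    have hδε : δ ≤ ε / (3 * (C + 1)) := le_trans (min_le_right _ _) (min_le_right _ _)
    -- continuous approximation of g
    have hg₀ : Integrable ((Set.Icc (0:ℝ) x).indicator g) volume := by
      rw [integrable_indicator_iff measurableSet_Icc]
      exact hgint.mono_set Set.Icc_subset_Ici_self
    obtain ⟨gc, -, hgcd, hgc, hgcint⟩ := hg₀.exists_hasCompactSupport_integral_sub_le hδpos
    have hsub_int : Integrable (fun y => ‖(Set.Icc (0:ℝ) x).indicator g y - gc y‖) volume :=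
      (hg₀.sub hgcint).norm
    have hdiff : (∫ t in (0:ℝ)..x, |g t - gc t|) ≤ δ := by
      rw [intervalIntegral.integral_of_le hx]
      have h1 : (∫ t in Set.Ioc (0:ℝ) x, |g t - gc t|)
          = ∫ t in Set.Ioc (0:ℝ) x, ‖(Set.Icc (0:ℝ) x).indicator g t - gc t‖ :=
        setIntegral_congr_fun measurableSet_Ioc (fun t ht => by
          rw [Set.indicator_of_mem (Set.Ioc_subset_Icc_self ht), Real.norm_eq_abs])
      rw [h1]
      exact le_trans (setIntegral_le_integral hsub_int (ae_of_all _ fun t => norm_nonneg _)) hgcd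
    -- the smooth approximation of h
    set q : ℝ → ℝ := fun y => h 0 + ∫ t in (0:ℝ)..y, gc t with hqdef
    have hq0 : q 0 = h 0 := by simp [hqdef]
    have hqd : ∀ y : ℝ, HasDerivAt q (gc y) y := by
      intro y
      exact (intervalIntegral.integral_hasDerivAt_right (hgc.intervalIntegrable 0 y)
        (hgc.stronglyMeasurableAtFilter volume (nhds y)) hgc.continuousAt).const_add (h 0)
    have hqcont : Continuous q := continuous_iff_continuousAt.mpr fun y => (hqd y).continuousAt
    have hgcII : IntervalIntegrable gc volume 0 x := hgc.intervalIntegrable 0 x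
    have hqh : ∀ t ∈ Set.Icc (0:ℝ) x, |q t - h t| ≤ δ := by
      intro t ht
      have hgII' : IntervalIntegrable g volume 0 t := hgII.mono_set (by
        rw [Set.uIcc_of_le ht.1, Set.uIcc_of_le hx]
        exact Set.Icc_subset_Icc le_rfl ht.2)
      have heq : q t - h t = ∫ s in (0:ℝ)..t, (gc s - g s) := by
        rw [hfc t ht.1]
        simp only [hqdef]
        rw [intervalIntegral.integral_sub (hgc.intervalIntegrable 0 t) hgII']
        ring
      rw [heq]
      calc |∫ s in (0:ℝ)..t, (gc s - g s)| ≤ ∫ s in (0:ℝ)..t, |gc s - g s| :=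
            intervalIntegral.abs_integral_le_integral_abs ht.1
        _ ≤ ∫ s in (0:ℝ)..x, |gc s - g s| :=
            intervalIntegral.integral_mono_interval le_rfl ht.1 ht.2
              (ae_of_all _ fun s => abs_nonneg _) (hgcII.sub hgII).abs
        _ = ∫ s in (0:ℝ)..x, |g s - gc s| := by simp_rw [abs_sub_comm]
        _ ≤ δ := hdiff
    have hqK : ∀ t ∈ Set.Icc (0:ℝ) x, q t ∈ K := by
      intro t ht
      have h1 := hqh t ht
      have h2 := hbound t ht.1
      rw [abs_le] at h1 h2
      exact ⟨by linarith [h1.1, h2.1, hδ1], by linarith [h1.2, h2.2, hδ1]⟩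
    -- FTC for φ ∘ q
    have hFTC : (∫ t in (0:ℝ)..x, deriv φ (q t) * gc t) = φ (q x) - φ (q 0) :=
      intervalIntegral.integral_eq_sub_of_hasDerivAt
        (fun y _ => ((hφd (q y)).hasDerivAt.comp y (hqd y)))
        (((hφ'.comp hqcont).mul hgc).intervalIntegrable 0 x)
    -- interval integrability of f3
    have hf1 : IntervalIntegrable (fun t => deriv φ (q t) * gc t) volume 0 x :=
      ((hφ'.comp hqcont).mul hgc).intervalIntegrable 0 x
    have hf3 : IntervalIntegrable (fun t => deriv φ (h t) * gc t) volume 0 x := by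
      rw [intervalIntegrable_iff_integrableOn_Icc_of_le hx]
      have hmeas3 : AEStronglyMeasurable (fun t => deriv φ (h t) * gc t)
          (volume.restrict (Set.Icc (0:ℝ) x)) :=
        (((hφ'.comp_continuousOn hhc).aemeasurable measurableSet_Ici).mono_measure
            (Measure.restrict_mono Set.Icc_subset_Ici_self le_rfl)).mul
          hgc.aemeasurable |>.aestronglyMeasurable
      refine Integrable.mono' (g := fun t => C * |gc t|) ((continuous_const.mul hgc.abs).integrableOn_Icc) hmeas3 ?_
      filter_upwards [ae_restrict_mem measurableSet_Icc] with t ht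
      rw [Real.norm_eq_abs, abs_mul]
      exact mul_le_mul_of_nonneg_right (hC _ (hKh t ht.1)) (abs_nonneg _)
    -- ∫ |gc| is controlled
    have hgcabs : (∫ t in (0:ℝ)..x, |gc t|) ≤ I₀ + 1 := by
      have h1 : (∫ t in (0:ℝ)..x, |gc t|)
          ≤ ∫ t in (0:ℝ)..x, (|g t| + |g t - gc t|) := by
        refine intervalIntegral.integral_mono_on hx (hgcII.abs)
          (hgII.abs.add (hgII.sub hgcII).abs) (fun t _ => ?_)
        calc |gc t| = |g t - (g t - gc t)| := by ring_nf
          _ ≤ |g t| + |g t - gc t| := abs_sub _ _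
      rw [intervalIntegral.integral_add hgII.abs (hgII.sub hgcII).abs] at h1
      have h2 := hIg x hx
      linarith [hdiff, hδ1]
    -- estimate term 1
    have hb1 : |(∫ t in (0:ℝ)..x, deriv φ (q t) * gc t)
        - ∫ t in (0:ℝ)..x, deriv φ (h t) * gc t| ≤ ε' * (I₀ + 1) := by
      rw [← intervalIntegral.integral_sub hf1 hf3]
      calc |∫ t in (0:ℝ)..x, (deriv φ (q t) * gc t - deriv φ (h t) * gc t)|
          ≤ ∫ t in (0:ℝ)..x, |deriv φ (q t) * gc t - deriv φ (h t) * gc t| :=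
            intervalIntegral.abs_integral_le_integral_abs hx
        _ ≤ ∫ t in (0:ℝ)..x, ε' * |gc t| := by
            refine intervalIntegral.integral_mono_on hx (hf1.sub hf3).abs
              ((continuous_const.mul hgc.abs).intervalIntegrable 0 x) (fun t ht => ?_)
            rw [← sub_mul, abs_mul]
            refine mul_le_mul_of_nonneg_right ?_ (abs_nonneg _)
            have hd := hδ' (q t) (hqK t ht) (h t) (hKh t ht.1)
              (by rw [Real.dist_eq]; exact lt_of_le_of_lt (hqh t ht) hδδ')
            rw [Real.dist_eq] at hd
            exact le_of_lt hd
        _ = ε' * ∫ t in (0:ℝ)..x, |gc t| := by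
            rw [← intervalIntegral.integral_const_mul]
        _ ≤ ε' * (I₀ + 1) := mul_le_mul_of_nonneg_left hgcabs hε'.le
    -- estimate term 2
    have hb2 : |(∫ t in (0:ℝ)..x, deriv φ (h t) * gc t) - A| ≤ C * δ := by
      rw [hAdef, ← intervalIntegral.integral_sub hf3 hf2]
      calc |∫ t in (0:ℝ)..x, (deriv φ (h t) * gc t - deriv φ (h t) * g t)|
          ≤ ∫ t in (0:ℝ)..x, |deriv φ (h t) * gc t - deriv φ (h t) * g t| :=
            intervalIntegral.abs_integral_le_integral_abs hx
        _ ≤ ∫ t in (0:ℝ)..x, C * |g t - gc t| := by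
            refine intervalIntegral.integral_mono_on hx (hf3.sub hf2).abs
              ((hgII.sub hgcII).abs.const_mul C) (fun t ht => ?_)
            rw [← mul_sub, abs_mul, abs_sub_comm (gc t) (g t)]
            exact mul_le_mul_of_nonneg_right (hC _ (hKh t ht.1)) (abs_nonneg _)
        _ = C * ∫ t in (0:ℝ)..x, |g t - gc t| := by
            rw [← intervalIntegral.integral_const_mul]
        _ ≤ C * δ := mul_le_mul_of_nonneg_left hdiff hC0
    -- estimate term 3
    have hb3 : |φ (h x) - φ (q x)| ≤ C * δ := by
      have := hLip (q x) (hqK x ⟨hx, le_rfl⟩) (h x) (hKh x hx)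
      refine le_trans this (mul_le_mul_of_nonneg_left ?_ hC0)
      rw [abs_sub_comm]
      exact hqh x ⟨hx, le_rfl⟩
    -- combine
    have hqFTC : φ (q x) = φ (h 0) + ∫ t in (0:ℝ)..x, deriv φ (q t) * gc t := by
      rw [hFTC, hq0]; ring
    have hdecomp : φ (h x) - (φ (h 0) + A)
        = (φ (h x) - φ (q x))
          + (((∫ t in (0:ℝ)..x, deriv φ (q t) * gc t)
              - ∫ t in (0:ℝ)..x, deriv φ (h t) * gc t)
            + ((∫ t in (0:ℝ)..x, deriv φ (h t) * gc t) - A)) := by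
      rw [hqFTC]; ring
    have hCδ : C * δ ≤ ε / 3 := by
      have h1 : C * δ ≤ C * (ε / (3 * (C + 1))) := mul_le_mul_of_nonneg_left hδε hC0
      have h2 : C * (ε / (3 * (C + 1))) ≤ ε / 3 := by
        rw [← mul_div_assoc, div_le_div_iff₀ (by positivity) (by norm_num : (0:ℝ) < 3)]
        nlinarith
      linarith
    have hε'I : ε' * (I₀ + 1) = ε / 3 := by
      rw [hε'def]; field_simp
    calc |φ (h x) - (φ (h 0) + A)|
        ≤ |φ (h x) - φ (q x)|
          + (|((∫ t in (0:ℝ)..x, deriv φ (q t) * gc t)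
              - ∫ t in (0:ℝ)..x, deriv φ (h t) * gc t)|
            + |((∫ t in (0:ℝ)..x, deriv φ (h t) * gc t) - A)|) := by
          rw [hdecomp]
          exact le_trans (abs_add_le _ _) (by gcongr; exact abs_add_le _ _)
      _ ≤ C * δ + (ε' * (I₀ + 1) + C * δ) := by
          exact add_le_add hb3 (add_le_add hb1 hb2)
      _ ≤ ε := by rw [hε'I]; linarith
  · -- integrability of the square
    have hexpm : AEMeasurable (fun t => Real.exp (ρ * t)) (volume.restrict (Set.Ici (0:ℝ))) :=
      (Real.continuous_exp.comp (continuous_const.mul continuous_id)).aemeasurable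
    have hmeas : AEStronglyMeasurable
        (fun t => (deriv φ (h t) * g t) ^ 2 * Real.exp (ρ * t))
        (volume.restrict (Set.Ici (0:ℝ))) :=
      ((hcompm.pow_const 2).mul hexpm).aestronglyMeasurable
    refine Integrable.mono' (hint.const_mul (C ^ 2)) hmeas ?_
    filter_upwards [ae_restrict_mem measurableSet_Ici] with t ht
    have h1 : |deriv φ (h t)| ≤ C := hC _ (hKh t ht)
    have he : (0:ℝ) < Real.exp (ρ * t) := Real.exp_pos _
    rw [Real.norm_eq_abs, abs_of_nonneg (by positivity)]
    have hd2 : deriv φ (h t) ^ 2 ≤ C ^ 2 := by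
      nlinarith [sq_abs (deriv φ (h t)), abs_nonneg (deriv φ (h t))]
    have h2 : (deriv φ (h t) * g t) ^ 2 ≤ C ^ 2 * g t ^ 2 := by
      nlinarith [mul_le_mul_of_nonneg_right hd2 (sq_nonneg (g t))]
    calc (deriv φ (h t) * g t) ^ 2 * Real.exp (ρ * t)
        ≤ C ^ 2 * g t ^ 2 * Real.exp (ρ * t) := by
          exact mul_le_mul_of_nonneg_right h2 he.le
      _ = C ^ 2 * (g t ^ 2 * Real.exp (ρ * t)) := by ring

/-- if `φ : ℝ → ℝ` is `C¹` and `h ∈ H_ρ` with derivative `g`, then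
`φ ∘ h ∈ H_ρ` with derivative `(φ' ∘ h)·g`; in particular `exp(h) ∈ H_ρ`. -/
theorem filipovic_composition (ρ : ℝ) (hρ : 0 < ρ) (φ : ℝ → ℝ)
    (hφ : ContDiff ℝ 1 φ) (h g : ℝ → ℝ) (hmem : MemFil ρ h g) :
    MemFil ρ (fun x => φ (h x)) (fun t => deriv φ (h t) * g t) ∧
    MemFil ρ (fun x => Real.exp (h x)) (fun t => Real.exp (h t) * g t) := by
  constructor
  · exact MemFilAux.comp ρ hρ φ hφ h g hmem
  · have := MemFilAux.comp ρ hρ Real.exp (Real.contDiff_exp.of_le le_top) h g hmem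
    simpa [Real.deriv_exp] using this
end

section
/- Let ρ > 0, C_ρ = 1 + 1/√ρ, and r ≥ 0. For all functions h, k : [0,∞) → ℝ in the Filipović space H_ρ with derivatives g_h, g_k, with h(0) = k(0) = 0, ‖h‖_ρ ≤ r and ‖k‖_ρ ≤ r, one has ‖exp ∘ h − exp ∘ k‖_ρ ≤ √2 · (C_ρ r + 1) · e^{C_ρ r} · ‖h − k‖_ρ, where exp ∘ h ∈ H_ρ has derivative exp(h(·))·g_h(·). -/
open MeasureTheory Filter

lemma aux_exp_diff (a b M : ℝ) (ha : |a| ≤ M) (hb : |b| ≤ M) :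
    |Real.exp a - Real.exp b| ≤ Real.exp M * |a - b| := by
  wlog hab : b ≤ a generalizing a b
  · have := this b a hb ha (le_of_not_ge hab)
    rwa [abs_sub_comm, abs_sub_comm b a] at this
  have h1 : Real.exp a * ((b - a) + 1) ≤ Real.exp b := by
    have h2 := Real.add_one_le_exp (b - a)
    calc Real.exp a * ((b-a)+1) ≤ Real.exp a * Real.exp (b-a) :=
          mul_le_mul_of_nonneg_left h2 (Real.exp_pos a).le
      _ = Real.exp b := by rw [← Real.exp_add]; ring_nf
  have hba : Real.exp b ≤ Real.exp a := Real.exp_le_exp.2 hab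
  have haM : Real.exp a ≤ Real.exp M := Real.exp_le_exp.2 (le_trans (le_abs_self a) ha)
  rw [abs_of_nonneg (sub_nonneg.2 hba), abs_of_nonneg (sub_nonneg.2 hab)]
  nlinarith [sub_nonneg.2 hab]

lemma aux_intervalIntegrable (ρ : ℝ) (hρ : 0 < ρ) (g : ℝ → ℝ)
    (hg : AEMeasurable g (volume.restrict (Set.Ici (0:ℝ))))
    (hint : IntegrableOn (fun t => g t ^ 2 * Real.exp (ρ * t)) (Set.Ici (0:ℝ)))
    (x : ℝ) (hx : 0 ≤ x) : IntervalIntegrable g volume 0 x := by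
  have hsub : Set.Ioc (0:ℝ) x ⊆ Set.Ici 0 := fun t ht => ht.1.le
  rw [intervalIntegrable_iff_integrableOn_Ioc_of_le hx]
  have hmeas : AEMeasurable g (volume.restrict (Set.Ioc (0:ℝ) x)) :=
    hg.mono_measure (Measure.restrict_mono hsub le_rfl)
  have hbint : IntegrableOn (fun t => (g t ^ 2 * Real.exp (ρ*t) + Real.exp (-(ρ*t)))/2)
      (Set.Ioc (0:ℝ) x) := by
    apply Integrable.div_const
    exact (hint.mono_set hsub).add
      ((Real.continuous_exp.comp (continuous_const.mul continuous_id).neg).integrableOn_Ioc)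
  refine hbint.mono' hmeas.aestronglyMeasurable (Filter.Eventually.of_forall fun t => ?_)
  have h1 : Real.exp (ρ*t) * Real.exp (-(ρ*t)) = 1 := by
    rw [← Real.exp_add]; ring_nf; exact Real.exp_zero
  have h2 := Real.exp_pos (ρ*t)
  have h3 := Real.exp_pos (-(ρ*t))
  have h4 := sq_nonneg (|g t| - Real.exp (-(ρ*t)))
  have h5 : |g t|^2 = g t ^2 := sq_abs (g t)
  simp only [Real.norm_eq_abs]
  nlinarith [abs_nonneg (g t)]

lemma aux_exp_integral (ρ : ℝ) (hρ : 0 < ρ) (x : ℝ) :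
    ∫ t in (0:ℝ)..x, Real.exp (-(ρ*t)) = (1 - Real.exp (-(ρ*x)))/ρ := by
  have hderiv : ∀ t ∈ Set.uIcc (0:ℝ) x,
      HasDerivAt (fun s => -(Real.exp (-(ρ*s))/ρ)) (Real.exp (-(ρ*t))) t := by
    intro t _
    have h1 : HasDerivAt (fun s : ℝ => -(ρ*s)) (-ρ) t := by
      simpa using ((hasDerivAt_id t).const_mul (-ρ))
    have h2 := (Real.hasDerivAt_exp (-(ρ*t))).comp t h1
    have h3 := (h2.div_const ρ).neg
    convert h3 using 1
    · rfl
    · rfl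
    · rfl
    · rw [mul_neg, neg_div, neg_neg, mul_div_assoc, div_self hρ.ne', mul_one]
  have hcont : IntervalIntegrable (fun t => Real.exp (-(ρ*t))) volume 0 x :=
    (Real.continuous_exp.comp (continuous_const.mul continuous_id).neg).intervalIntegrable 0 x
  rw [intervalIntegral.integral_eq_sub_of_hasDerivAt hderiv hcont]
  have : ρ * 0 = 0 := by ring
  rw [show -(ρ*(0:ℝ)) = 0 by ring, Real.exp_zero]
  ring

lemma aux_abs_le (ρ : ℝ) (hρ : 0 < ρ) (g : ℝ → ℝ)
    (hg : AEMeasurable g (volume.restrict (Set.Ici (0:ℝ))))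
    (hint : IntegrableOn (fun t => g t ^ 2 * Real.exp (ρ * t)) (Set.Ici (0:ℝ)))
    (x : ℝ) (hx : 0 ≤ x) :
    |∫ t in (0:ℝ)..x, g t| ≤
      Real.sqrt (∫ t in Set.Ici (0:ℝ), g t ^ 2 * Real.exp (ρ * t)) / Real.sqrt ρ := by
  set I := ∫ t in Set.Ici (0:ℝ), g t ^ 2 * Real.exp (ρ * t) with hIdef
  have hI0 : 0 ≤ I := setIntegral_nonneg measurableSet_Ici (fun t _ => by positivity)
  have hgi := aux_intervalIntegrable ρ hρ g hg hint x hx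
  have hgi2 : IntervalIntegrable (fun t => g t ^ 2 * Real.exp (ρ*t)) volume 0 x := by
    rw [intervalIntegrable_iff_integrableOn_Ioc_of_le hx]
    exact hint.mono_set (fun t ht => ht.1.le)
  have hexpint : IntervalIntegrable (fun t => Real.exp (-(ρ*t))) volume 0 x :=
    (Real.continuous_exp.comp (continuous_const.mul continuous_id).neg).intervalIntegrable 0 x
  have hsq : ∫ t in (0:ℝ)..x, g t ^ 2 * Real.exp (ρ*t) ≤ I := by
    rw [intervalIntegral.integral_of_le hx]
    apply setIntegral_mono_set hint
    · exact Filter.Eventually.of_forall (fun t => by positivity)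
    · exact HasSubset.Subset.eventuallyLE (fun t ht => ht.1.le)
  have hkey : ∀ a : ℝ, 0 < a → |∫ t in (0:ℝ)..x, g t| ≤ I/(2*a) + a/(2*ρ) := by
    intro a ha
    calc |∫ t in (0:ℝ)..x, g t| ≤ ∫ t in (0:ℝ)..x, |g t| :=
          intervalIntegral.abs_integral_le_integral_abs hx
      _ ≤ ∫ t in (0:ℝ)..x, ((1/(2*a)) * (g t ^2 * Real.exp (ρ*t)) + (a/2) * Real.exp (-(ρ*t))) := by
          apply intervalIntegral.integral_mono_on hx hgi.abs
            ((hgi2.const_mul _).add (hexpint.const_mul _))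
          intro t _
          set u := Real.exp (-(ρ*t)) with hu
          have h1 : Real.exp (ρ*t) * u = 1 := by
            rw [hu, ← Real.exp_add]; ring_nf; exact Real.exp_zero
          have h3 : 0 < u := Real.exp_pos _
          have hE : Real.exp (ρ*t) = u⁻¹ := eq_inv_of_mul_eq_one_left (by linarith [h1, mul_comm (Real.exp (ρ*t)) u])
          have hstep : 2*a*u*|g t| ≤ g t ^2 + a^2*u^2 := by
            nlinarith [sq_nonneg (|g t| - a*u), sq_abs (g t)]
          calc |g t| = (2*a*u*|g t|) / (2*a*u) := by field_simp
            _ ≤ (g t ^2 + a^2*u^2)/(2*a*u) := by gcongr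
            _ = 1/(2*a)*(g t ^2 * u⁻¹) + a/2*u := by field_simp
            _ = 1/(2*a)*(g t ^2 * Real.exp (ρ*t)) + a/2*u := by rw [hE]
      _ ≤ I/(2*a) + a/(2*ρ) := by
          have he2 : ∫ t in (0:ℝ)..x, Real.exp (-(ρ*t)) ≤ 1/ρ := by
            rw [aux_exp_integral ρ hρ x]
            gcongr
            · linarith [Real.exp_pos (-(ρ*x))]
          rw [intervalIntegral.integral_add (hgi2.const_mul _) (hexpint.const_mul _),
            intervalIntegral.integral_const_mul, intervalIntegral.integral_const_mul]
          have b1 := mul_le_mul_of_nonneg_left hsq (show (0:ℝ) ≤ 1/(2*a) by positivity)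
          have b2 := mul_le_mul_of_nonneg_left he2 (show (0:ℝ) ≤ a/2 by positivity)
          have e1 : (1/(2*a))*I = I/(2*a) := by ring
          have e2 : (a/2)*(1/ρ) = a/(2*ρ) := by ring
          linarith
  rcases eq_or_lt_of_le hI0 with hI | hI
  · have hb : |∫ t in (0:ℝ)..x, g t| ≤ 0 := by
      by_contra hb
      push_neg at hb
      have h5 := hkey (ρ * |∫ t in (0:ℝ)..x, g t|) (by positivity)
      rw [← hI] at h5
      have h6 : ρ * |∫ t in (0:ℝ)..x, g t|/(2*ρ) = |∫ t in (0:ℝ)..x, g t|/2 := by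
        field_simp
      rw [h6, zero_div, zero_add] at h5
      linarith
    rw [← hI, Real.sqrt_zero, zero_div]
    exact hb
  · have hsI : 0 < Real.sqrt I := Real.sqrt_pos.2 hI
    have hsρ : 0 < Real.sqrt ρ := Real.sqrt_pos.2 hρ
    have hII : Real.sqrt I * Real.sqrt I = I := Real.mul_self_sqrt hI0
    have hρρ : Real.sqrt ρ * Real.sqrt ρ = ρ := Real.mul_self_sqrt hρ.le
    have hk := hkey (Real.sqrt ρ * Real.sqrt I) (by positivity)
    have e1 : I/(2*(Real.sqrt ρ * Real.sqrt I)) = Real.sqrt I/(2*Real.sqrt ρ) := by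
      rw [div_eq_div_iff (by positivity) (by positivity)]; linear_combination (-2*Real.sqrt ρ)*hII
    have e2 : (Real.sqrt ρ * Real.sqrt I)/(2*ρ) = Real.sqrt I/(2*Real.sqrt ρ) := by
      rw [div_eq_div_iff (by positivity) (by positivity)]; linear_combination (2*Real.sqrt I)*hρρ
    rw [e1, e2] at hk
    have e3 : Real.sqrt I/(2*Real.sqrt ρ) + Real.sqrt I/(2*Real.sqrt ρ) = Real.sqrt I / Real.sqrt ρ := by
      field_simp; ring
    linarith [e3 ▸ hk]

lemma aux_num (E D C r Ik : ℝ) (hE : 0 ≤ E) (hD : 0 ≤ D) (hCr : 0 ≤ C*r) (hIk : Ik ≤ r^2) :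
    2 * E ^ 2 * D ^ 2 + 2 * E ^ 2 * (C*D) ^ 2 * Ik ≤ 2 * (C*r+1) ^ 2 * E ^ 2 * D ^ 2 := by
  nlinarith [mul_le_mul_of_nonneg_left (mul_le_mul_of_nonneg_left hIk (sq_nonneg (C*D)))
      (mul_nonneg (by norm_num : (0:ℝ) ≤ 2) (sq_nonneg E)),
    mul_nonneg hCr (mul_nonneg (sq_nonneg E) (sq_nonneg D))]

/-- explicit Lipschitz estimate for the exponential map on `H¹_ρ`:
`‖exp∘h − exp∘k‖_ρ ≤ √2 (C_ρ r + 1) e^{C_ρ r} ‖h − k‖_ρ` for `h, k ∈ H_ρ` with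
`h(0) = k(0) = 0` and norms at most `r`, where `C_ρ = 1 + 1/√ρ`. -/
theorem filipovic_exp_lipschitz (ρ : ℝ) (hρ : 0 < ρ) (r : ℝ) (hr : 0 ≤ r)
    (h k gh gk : ℝ → ℝ) (hh : MemFil ρ h gh) (hk : MemFil ρ k gk)
    (h0 : h 0 = 0) (k0 : k 0 = 0)
    (hhr : filNorm ρ h gh ≤ r) (hkr : filNorm ρ k gk ≤ r) :
    filNorm ρ (fun x => Real.exp (h x) - Real.exp (k x))
      (fun t => Real.exp (h t) * gh t - Real.exp (k t) * gk t)
      ≤ Real.sqrt 2 * ((1 + 1 / Real.sqrt ρ) * r + 1)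
        * Real.exp ((1 + 1 / Real.sqrt ρ) * r)
        * filNorm ρ (fun x => h x - k x) (fun t => gh t - gk t) := by
  obtain ⟨hmh, hfh, hih⟩ := hh
  obtain ⟨hmk, hfk, hik⟩ := hk
  set C : ℝ := 1 + 1 / Real.sqrt ρ with hCdef
  have hsρ : 0 < Real.sqrt ρ := Real.sqrt_pos.2 hρ
  have hC1 : 1 / Real.sqrt ρ ≤ C := by rw [hCdef]; linarith
  have hC0 : 0 < C := by rw [hCdef]; positivity
  set Ih : ℝ := ∫ t in Set.Ici (0:ℝ), gh t ^ 2 * Real.exp (ρ * t) with hIh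
  set Ik : ℝ := ∫ t in Set.Ici (0:ℝ), gk t ^ 2 * Real.exp (ρ * t) with hIk
  set Ihk : ℝ := ∫ t in Set.Ici (0:ℝ), (gh t - gk t) ^ 2 * Real.exp (ρ * t) with hIhk
  set D : ℝ := Real.sqrt Ihk with hDdef
  clear_value C
  have hIh0 : 0 ≤ Ih := by
    rw [hIh]; exact setIntegral_nonneg measurableSet_Ici (fun t _ => by positivity)
  have hIk0 : 0 ≤ Ik := by
    rw [hIk]; exact setIntegral_nonneg measurableSet_Ici (fun t _ => by positivity)
  have hIhk0 : 0 ≤ Ihk := by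
    rw [hIhk]; exact setIntegral_nonneg measurableSet_Ici (fun t _ => by positivity)
  have hD0 : 0 ≤ D := by rw [hDdef]; exact Real.sqrt_nonneg _
  have hD2 : D ^ 2 = Ihk := by rw [hDdef]; exact Real.sq_sqrt hIhk0
  clear_value D
  have hCr : 0 ≤ C * r := mul_nonneg hC0.le hr
  -- measurability and integrability for the difference of derivatives
  have hmhk : AEMeasurable (fun t => gh t - gk t) (volume.restrict (Set.Ici (0:ℝ))) :=
    hmh.sub hmk
  have hexpmeas : AEMeasurable (fun t : ℝ => Real.exp (ρ * t)) (volume.restrict (Set.Ici (0:ℝ))) :=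
    (Real.measurable_exp.comp (measurable_id.const_mul ρ)).aemeasurable
  have hihk : IntegrableOn (fun t => (gh t - gk t) ^ 2 * Real.exp (ρ * t)) (Set.Ici (0:ℝ)) := by
    apply Integrable.mono' ((hih.add hik).const_mul 2)
    · exact ((hmhk.pow_const 2).mul hexpmeas).aestronglyMeasurable
    · refine Filter.Eventually.of_forall fun t => ?_
      have h1 := (Real.exp_pos (ρ * t)).le
      rw [Real.norm_eq_abs, abs_of_nonneg (by positivity)]
      simp only [Pi.add_apply]
      nlinarith [sq_nonneg (gh t + gk t), (Real.exp_pos (ρ * t)).le, sq_nonneg (gh t - gk t)]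
  -- norm bounds squared
  have hnh : Real.sqrt Ih ≤ r := by
    have : filNorm ρ h gh = Real.sqrt Ih := by rw [filNorm, h0, hIh]; norm_num
    rwa [this] at hhr
  have hnk : Real.sqrt Ik ≤ r := by
    have : filNorm ρ k gk = Real.sqrt Ik := by rw [filNorm, k0, hIk]; norm_num
    rwa [this] at hkr
  clear_value Ih Ik Ihk
  have hIkr : Ik ≤ r ^ 2 := by
    have := pow_le_pow_left₀ (Real.sqrt_nonneg Ik) hnk 2
    rwa [Real.sq_sqrt hIk0] at this
  -- sup bounds
  have hhb : ∀ t : ℝ, 0 ≤ t → |h t| ≤ C * r := by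
    intro t ht
    have h2 : h t = ∫ s in (0:ℝ)..t, gh s := by rw [hfh t ht, h0, zero_add]
    rw [h2]
    calc |∫ s in (0:ℝ)..t, gh s| ≤ Real.sqrt Ih / Real.sqrt ρ := by
          rw [hIh]; exact aux_abs_le ρ hρ gh hmh hih t ht
      _ ≤ r / Real.sqrt ρ := by gcongr
      _ = r * (1 / Real.sqrt ρ) := by ring
      _ ≤ r * C := by gcongr
      _ = C * r := by ring
  have hkb : ∀ t : ℝ, 0 ≤ t → |k t| ≤ C * r := by
    intro t ht
    have h2 : k t = ∫ s in (0:ℝ)..t, gk s := by rw [hfk t ht, k0, zero_add]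
    rw [h2]
    calc |∫ s in (0:ℝ)..t, gk s| ≤ Real.sqrt Ik / Real.sqrt ρ := by
          rw [hIk]; exact aux_abs_le ρ hρ gk hmk hik t ht
      _ ≤ r / Real.sqrt ρ := by gcongr
      _ = r * (1 / Real.sqrt ρ) := by ring
      _ ≤ r * C := by gcongr
      _ = C * r := by ring
  have hdb : ∀ t : ℝ, 0 ≤ t → |h t - k t| ≤ C * D := by
    intro t ht
    have h2 : h t - k t = ∫ s in (0:ℝ)..t, (gh s - gk s) := by
      rw [intervalIntegral.integral_sub (aux_intervalIntegrable ρ hρ gh hmh hih t ht)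
        (aux_intervalIntegrable ρ hρ gk hmk hik t ht)]
      rw [hfh t ht, hfk t ht, h0, k0]
      ring
    rw [h2]
    calc |∫ s in (0:ℝ)..t, (gh s - gk s)| ≤ Real.sqrt Ihk / Real.sqrt ρ := by
          rw [hIhk]; exact aux_abs_le ρ hρ (fun s => gh s - gk s) hmhk hihk t ht
      _ = D * (1 / Real.sqrt ρ) := by rw [hDdef]; ring
      _ ≤ D * C := by gcongr
      _ = C * D := by ring
  -- pointwise bound
  have hpt : ∀ t ∈ Set.Ici (0:ℝ),
      (Real.exp (h t) * gh t - Real.exp (k t) * gk t) ^ 2 * Real.exp (ρ * t)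
        ≤ 2 * Real.exp (C*r) ^ 2 * ((gh t - gk t) ^ 2 * Real.exp (ρ * t))
          + 2 * Real.exp (C*r) ^ 2 * (C*D) ^ 2 * (gk t ^ 2 * Real.exp (ρ * t)) := by
    intro t ht
    have ht' : (0:ℝ) ≤ t := ht
    have e1 : Real.exp (h t) ≤ Real.exp (C*r) :=
      Real.exp_le_exp.2 (le_trans (le_abs_self _) (hhb t ht'))
    have e2 : |Real.exp (h t) - Real.exp (k t)| ≤ Real.exp (C*r) * (C*D) := by
      calc |Real.exp (h t) - Real.exp (k t)| ≤ Real.exp (C*r) * |h t - k t| :=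
            aux_exp_diff _ _ _ (hhb t ht') (hkb t ht')
        _ ≤ Real.exp (C*r) * (C*D) :=
            mul_le_mul_of_nonneg_left (hdb t ht') (Real.exp_pos _).le
    set A : ℝ := Real.exp (h t) * (gh t - gk t) with hA
    set B : ℝ := (Real.exp (h t) - Real.exp (k t)) * gk t with hB
    have hAB : Real.exp (h t) * gh t - Real.exp (k t) * gk t = A + B := by
      rw [hA, hB]; ring
    have hA2 : A ^ 2 ≤ Real.exp (C*r) ^ 2 * (gh t - gk t) ^ 2 := by
      rw [hA, mul_pow]
      exact mul_le_mul_of_nonneg_right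
        (pow_le_pow_left₀ (Real.exp_pos _).le e1 2) (sq_nonneg _)
    have hB2 : B ^ 2 ≤ (Real.exp (C*r) * (C*D)) ^ 2 * gk t ^ 2 := by
      rw [hB, mul_pow]
      have h3 : (Real.exp (h t) - Real.exp (k t)) ^ 2 ≤ (Real.exp (C*r) * (C*D)) ^ 2 :=
        sq_le_sq' (by linarith [(abs_le.1 e2).1]) (abs_le.1 e2).2
      exact mul_le_mul_of_nonneg_right h3 (sq_nonneg _)
    have hsum : (A + B) ^ 2 ≤ 2 * Real.exp (C*r) ^ 2 * (gh t - gk t) ^ 2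
        + 2 * (Real.exp (C*r) * (C*D)) ^ 2 * gk t ^ 2 := by
      nlinarith [sq_nonneg (A - B), hA2, hB2]
    calc (Real.exp (h t) * gh t - Real.exp (k t) * gk t) ^ 2 * Real.exp (ρ * t)
        = (A + B) ^ 2 * Real.exp (ρ * t) := by rw [hAB]
      _ ≤ (2 * Real.exp (C*r) ^ 2 * (gh t - gk t) ^ 2
            + 2 * (Real.exp (C*r) * (C*D)) ^ 2 * gk t ^ 2) * Real.exp (ρ * t) :=
          mul_le_mul_of_nonneg_right hsum (Real.exp_pos _).le
      _ = 2 * Real.exp (C*r) ^ 2 * ((gh t - gk t) ^ 2 * Real.exp (ρ * t))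
          + 2 * Real.exp (C*r) ^ 2 * (C*D) ^ 2 * (gk t ^ 2 * Real.exp (ρ * t)) := by ring
  -- the majorant is integrable
  have hGint : IntegrableOn (fun t =>
      2 * Real.exp (C*r) ^ 2 * ((gh t - gk t) ^ 2 * Real.exp (ρ * t))
        + 2 * Real.exp (C*r) ^ 2 * (C*D) ^ 2 * (gk t ^ 2 * Real.exp (ρ * t)))
      (Set.Ici (0:ℝ)) :=
    (hihk.const_mul _).add (hik.const_mul _)
  -- integral bound
  have hFG : (∫ t in Set.Ici (0:ℝ),
      (Real.exp (h t) * gh t - Real.exp (k t) * gk t) ^ 2 * Real.exp (ρ * t))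
      ≤ 2 * Real.exp (C*r) ^ 2 * Ihk + 2 * Real.exp (C*r) ^ 2 * (C*D) ^ 2 * Ik := by
    have step1 : (∫ t in Set.Ici (0:ℝ),
        (Real.exp (h t) * gh t - Real.exp (k t) * gk t) ^ 2 * Real.exp (ρ * t))
        ≤ ∫ t in Set.Ici (0:ℝ),
          (2 * Real.exp (C*r) ^ 2 * ((gh t - gk t) ^ 2 * Real.exp (ρ * t))
            + 2 * Real.exp (C*r) ^ 2 * (C*D) ^ 2 * (gk t ^ 2 * Real.exp (ρ * t))) := by
      apply integral_mono_of_nonneg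
      · exact Filter.Eventually.of_forall fun t => by positivity
      · exact hGint
      · exact (ae_restrict_iff' measurableSet_Ici).2 (Filter.Eventually.of_forall hpt)
    have step2 : (∫ t in Set.Ici (0:ℝ),
        (2 * Real.exp (C*r) ^ 2 * ((gh t - gk t) ^ 2 * Real.exp (ρ * t))
          + 2 * Real.exp (C*r) ^ 2 * (C*D) ^ 2 * (gk t ^ 2 * Real.exp (ρ * t))))
        = 2 * Real.exp (C*r) ^ 2 * Ihk + 2 * Real.exp (C*r) ^ 2 * (C*D) ^ 2 * Ik := by
      rw [integral_add (hihk.const_mul _) (hik.const_mul _),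
        integral_const_mul, integral_const_mul, hIhk, hIk]
    linarith [step2 ▸ step1]
  -- final numeric estimate
  have hnum : 2 * Real.exp (C*r) ^ 2 * Ihk + 2 * Real.exp (C*r) ^ 2 * (C*D) ^ 2 * Ik
      ≤ (Real.sqrt 2 * (C * r + 1) * Real.exp (C*r) * D) ^ 2 := by
    have h2 : Real.sqrt 2 ^ 2 = 2 := Real.sq_sqrt (by norm_num)
    have b1 : 2 * Real.exp (C*r) ^ 2 * (C*D) ^ 2 * Ik
        ≤ 2 * Real.exp (C*r) ^ 2 * (C*D) ^ 2 * r ^ 2 :=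
      mul_le_mul_of_nonneg_left hIkr (mul_nonneg (mul_nonneg (by norm_num) (sq_nonneg (Real.exp (C*r)))) (sq_nonneg (C*D)))
    have expand : (Real.sqrt 2 * (C * r + 1) * Real.exp (C*r) * D) ^ 2
        = 2 * (C*r+1) ^ 2 * Real.exp (C*r) ^ 2 * D ^ 2 := by
      rw [mul_pow, mul_pow, mul_pow, h2]
    rw [expand, ← hD2]
    exact aux_num (Real.exp (C*r)) D C r Ik (Real.exp_pos _).le hD0 hCr hIkr
  -- conclude
  have hRHS : filNorm ρ (fun x => h x - k x) (fun t => gh t - gk t) = D := by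
    rw [filNorm, hDdef, hIhk]
    simp [h0, k0]
  rw [hRHS]
  have hLHS : filNorm ρ (fun x => Real.exp (h x) - Real.exp (k x))
      (fun t => Real.exp (h t) * gh t - Real.exp (k t) * gk t)
      = Real.sqrt (∫ t in Set.Ici (0:ℝ),
          (Real.exp (h t) * gh t - Real.exp (k t) * gk t) ^ 2 * Real.exp (ρ * t)) := by
    rw [filNorm]
    simp [h0, k0]
  rw [hLHS]
  calc Real.sqrt (∫ t in Set.Ici (0:ℝ),
        (Real.exp (h t) * gh t - Real.exp (k t) * gk t) ^ 2 * Real.exp (ρ * t))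
      ≤ Real.sqrt ((Real.sqrt 2 * (C * r + 1) * Real.exp (C*r) * D) ^ 2) :=
        Real.sqrt_le_sqrt (le_trans hFG hnum)
    _ = Real.sqrt 2 * (C * r + 1) * Real.exp (C*r) * D := by
        rw [Real.sqrt_sq (mul_nonneg (mul_nonneg (mul_nonneg (Real.sqrt_nonneg 2)
          (by linarith)) (Real.exp_pos _).le) hD0)]
end

section
/- Let ρ > 0, C_ρ = 1 + 1/√ρ, and r ≥ 0. For every function h : [0,∞) → ℝ in the Filipović space H_ρ with derivative g, with h(0) = 0 and ‖h‖_ρ ≤ r, one has ‖exp ∘ h‖_ρ ≤ 1 + r·e^{C_ρ r}, where exp ∘ h ∈ H_ρ has derivative exp(h(·))·g(·); consequently, for every λ > 0, ‖1 − λ·exp ∘ h‖_ρ ≤ 1 + λ + λ·r·e^{C_ρ r}. -/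
open MeasureTheory Filter

lemma my_sqrt_add_le (a b : ℝ) (ha : 0 ≤ a) (hb : 0 ≤ b) :
    Real.sqrt (a + b) ≤ Real.sqrt a + Real.sqrt b := by
  have h : a + b ≤ (Real.sqrt a + Real.sqrt b) ^ 2 := by
    nlinarith [Real.sq_sqrt ha, Real.sq_sqrt hb, Real.sqrt_nonneg a, Real.sqrt_nonneg b]
  calc Real.sqrt (a + b) ≤ Real.sqrt ((Real.sqrt a + Real.sqrt b) ^ 2) := Real.sqrt_le_sqrt h
    _ = Real.sqrt a + Real.sqrt b := Real.sqrt_sq (by positivity)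

/-- for `h ∈ H_ρ` with `h(0) = 0` and `‖h‖_ρ ≤ r`, one has
`‖exp∘h‖_ρ ≤ 1 + r e^{C_ρ r}` and consequently, for every `λ > 0`,
`‖1 − λ exp∘h‖_ρ ≤ 1 + λ + λ r e^{C_ρ r}`, where `C_ρ = 1 + 1/√ρ`. -/
theorem filipovic_exp_bound (ρ r : ℝ) (hρ : 0 < ρ) (hr : 0 ≤ r)
    (h g : ℝ → ℝ) (hmem : MemFil ρ h g) (h0 : h 0 = 0)
    (hnorm : filNorm ρ h g ≤ r) :
    filNorm ρ (fun x => Real.exp (h x)) (fun t => Real.exp (h t) * g t)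
      ≤ 1 + r * Real.exp ((1 + 1 / Real.sqrt ρ) * r) ∧
    ∀ lam : ℝ, 0 < lam →
      filNorm ρ (fun x => 1 - lam * Real.exp (h x))
        (fun t => -(lam * Real.exp (h t) * g t))
        ≤ 1 + lam + lam * r * Real.exp ((1 + 1 / Real.sqrt ρ) * r) := by
  obtain ⟨hmeas, hrep, hint⟩ := hmem
  have hsρ : (0:ℝ) < Real.sqrt ρ := Real.sqrt_pos.2 hρ
  have hsq : Real.sqrt (∫ t in Set.Ici (0:ℝ), (g t) ^ 2 * Real.exp (ρ * t)) ≤ r := by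
    simpa [filNorm, h0] using hnorm
  set I := ∫ t in Set.Ici (0:ℝ), (g t) ^ 2 * Real.exp (ρ * t) with hIdef
  have hI0 : 0 ≤ I := integral_nonneg fun t => by positivity
  -- exponential helpers
  have hsqhalf : ∀ t : ℝ, Real.exp (ρ * t / 2) ^ 2 = Real.exp (ρ * t) := by
    intro t; rw [sq, ← Real.exp_add]; ring_nf
  have hsqhalf' : ∀ t : ℝ, Real.exp (-(ρ * t) / 2) ^ 2 = Real.exp (-(ρ * t)) := by
    intro t; rw [sq, ← Real.exp_add]; ring_nf
  have hprod : ∀ t : ℝ, Real.exp (ρ * t / 2) * Real.exp (-(ρ * t) / 2) = 1 := by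
    intro t; rw [← Real.exp_add]; ring_nf; exact Real.exp_zero
  -- integrability of exp(-(ρ t)) on Ici 0
  have hexp_int : IntegrableOn (fun t => Real.exp (-(ρ * t))) (Set.Ici (0:ℝ)) := by
    rw [integrableOn_Ici_iff_integrableOn_Ioi]
    simpa [neg_mul] using exp_neg_integrableOn_Ioi (0:ℝ) hρ
  have hexp_val : (∫ t in Set.Ici (0:ℝ), Real.exp (-(ρ * t))) = 1 / ρ := by
    rw [MeasureTheory.integral_Ici_eq_integral_Ioi]
    have := integral_comp_mul_left_Ioi (fun x => Real.exp (-x)) 0 hρ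
    simpa [mul_zero, integral_exp_neg_Ioi, integral_exp_Iic_zero, smul_eq_mul, one_div] using this
  -- integrability of g on Ici 0 (AM-GM domination)
  have hdom : ∀ t : ℝ, |g t| ≤ ((g t) ^ 2 * Real.exp (ρ * t) + Real.exp (-(ρ * t))) / 2 := by
    intro t
    nlinarith [sq_nonneg (|g t| * Real.exp (ρ * t / 2) - Real.exp (-(ρ * t) / 2)),
      hsqhalf t, hsqhalf' t, hprod t, sq_abs (g t), abs_nonneg (g t),
      Real.exp_pos (ρ * t / 2), Real.exp_pos (-(ρ * t) / 2)]
  have hg_int : IntegrableOn g (Set.Ici (0:ℝ)) := by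
    refine Integrable.mono' ((hint.add hexp_int).div_const 2) hmeas.aestronglyMeasurable ?_
    exact ae_of_all _ fun t => by simpa [Real.norm_eq_abs] using hdom t
  have hgabs_int : IntegrableOn (fun t => |g t|) (Set.Ici (0:ℝ)) := hg_int.abs
  -- Cauchy–Schwarz : ∫ |g| ≤ √I · (1/√ρ)
  have hcexp : Continuous (fun t : ℝ => Real.exp (ρ * t / 2)) := by
    exact Real.continuous_exp.comp ((continuous_const.mul continuous_id).div_const 2)
  have hcexp' : Continuous (fun t : ℝ => Real.exp (-(ρ * t) / 2)) := by
    exact Real.continuous_exp.comp (((continuous_const.mul continuous_id).neg).div_const 2)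
  have hf2 : MemLp (fun t => |g t| * Real.exp (ρ * t / 2)) (ENNReal.ofReal 2)
      (volume.restrict (Set.Ici (0:ℝ))) := by
    rw [show ENNReal.ofReal (2:ℝ) = 2 by norm_num]
    refine (memLp_two_iff_integrable_sq ?_).mpr ?_
    · exact ((continuous_abs.measurable.comp_aemeasurable hmeas).mul
        hcexp.measurable.aemeasurable).aestronglyMeasurable
    · exact hint.congr (ae_of_all _ fun t => by simp only [mul_pow, sq_abs, hsqhalf t])
  have hk2 : MemLp (fun t => Real.exp (-(ρ * t) / 2)) (ENNReal.ofReal 2)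
      (volume.restrict (Set.Ici (0:ℝ))) := by
    rw [show ENNReal.ofReal (2:ℝ) = 2 by norm_num]
    refine (memLp_two_iff_integrable_sq hcexp'.aestronglyMeasurable).mpr ?_
    exact hexp_int.congr (ae_of_all _ fun t => by simp only [hsqhalf' t])
  have hCS := integral_mul_le_Lp_mul_Lq_of_nonneg
    Real.HolderConjugate.two_two
    (ae_of_all _ fun t => by positivity) (ae_of_all _ fun t => (Real.exp_pos _).le) hf2 hk2
  have hgabs : (∫ t in Set.Ici (0:ℝ), |g t|) ≤ r / Real.sqrt ρ := by
    have hL : (∫ t in Set.Ici (0:ℝ),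
        (|g t| * Real.exp (ρ * t / 2)) * Real.exp (-(ρ * t) / 2))
        = ∫ t in Set.Ici (0:ℝ), |g t| := by
      exact integral_congr_ae (ae_of_all _ fun t => by
        simp only [mul_assoc, hprod t, mul_one])
    have hR1 : (∫ t in Set.Ici (0:ℝ), (|g t| * Real.exp (ρ * t / 2)) ^ (2:ℝ)) = I := by
      exact integral_congr_ae (ae_of_all _ fun t => by
        simp only [Real.rpow_two, mul_pow, sq_abs, hsqhalf t])
    have hR2 : (∫ t in Set.Ici (0:ℝ), (Real.exp (-(ρ * t) / 2)) ^ (2:ℝ)) = 1 / ρ := by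
      rw [← hexp_val]
      exact integral_congr_ae (ae_of_all _ fun t => by
        simp only [Real.rpow_two, hsqhalf' t])
    rw [hL, hR1, hR2] at hCS
    calc (∫ t in Set.Ici (0:ℝ), |g t|)
        ≤ I ^ (1/2:ℝ) * (1/ρ) ^ (1/2:ℝ) := hCS
      _ = Real.sqrt I * Real.sqrt (1/ρ) := by rw [← Real.sqrt_eq_rpow, ← Real.sqrt_eq_rpow]
      _ ≤ r * Real.sqrt (1/ρ) := by
          exact mul_le_mul_of_nonneg_right hsq (Real.sqrt_nonneg _)
      _ = r / Real.sqrt ρ := by rw [one_div, Real.sqrt_inv]; ring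
  -- pointwise bound on h
  have hb : ∀ x : ℝ, 0 ≤ x → h x ≤ (1 + 1 / Real.sqrt ρ) * r := by
    intro x hx
    rw [hrep x hx, h0, zero_add]
    have h1 : (∫ t in (0:ℝ)..x, g t) ≤ ∫ t in (0:ℝ)..x, |g t| := by
      have := intervalIntegral.abs_integral_le_integral_abs (μ := volume) (f := g) hx
      exact (le_abs_self _).trans this
    have h2 : (∫ t in (0:ℝ)..x, |g t|) ≤ ∫ t in Set.Ici (0:ℝ), |g t| := by
      rw [intervalIntegral.integral_of_le hx]
      refine setIntegral_mono_set hgabs_int (ae_of_all _ fun t => abs_nonneg _) ?_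
      exact HasSubset.Subset.eventuallyLE (fun t ht => ht.1.le)
    have h3 : r / Real.sqrt ρ ≤ (1 + 1 / Real.sqrt ρ) * r := by
      rw [div_eq_mul_one_div r (Real.sqrt ρ), mul_comm]
      exact mul_le_mul_of_nonneg_right (by linarith) hr
    linarith [hgabs]
  set E := Real.exp ((1 + 1 / Real.sqrt ρ) * r) with hEdef
  have hE0 : (0:ℝ) < E := Real.exp_pos _
  -- bound on the new integral J
  have hJ0 : (0:ℝ) ≤ ∫ t in Set.Ici (0:ℝ), (Real.exp (h t) * g t) ^ 2 * Real.exp (ρ * t) :=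
    integral_nonneg fun t => by positivity
  set J := ∫ t in Set.Ici (0:ℝ), (Real.exp (h t) * g t) ^ 2 * Real.exp (ρ * t) with hJdef
  have hJle : J ≤ E ^ 2 * I := by
    rw [hJdef, hIdef, ← MeasureTheory.integral_const_mul]
    refine integral_mono_of_nonneg (ae_of_all _ fun t => by positivity)
      (hint.const_mul _) ?_
    filter_upwards [ae_restrict_mem measurableSet_Ici] with t ht
    have hexph : Real.exp (h t) ≤ E := Real.exp_le_exp.2 (hb t ht)
    have : (Real.exp (h t) * g t) ^ 2 * Real.exp (ρ * t)
        = Real.exp (h t) ^ 2 * ((g t) ^ 2 * Real.exp (ρ * t)) := by ring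
    rw [this]
    exact mul_le_mul_of_nonneg_right
      (pow_le_pow_left₀ (Real.exp_pos _).le hexph 2) (by positivity)
  have hsqrtJ : Real.sqrt J ≤ r * E := by
    calc Real.sqrt J ≤ Real.sqrt (E ^ 2 * I) := Real.sqrt_le_sqrt hJle
      _ = E * Real.sqrt I := by
          rw [Real.sqrt_mul (sq_nonneg E), Real.sqrt_sq hE0.le]
      _ ≤ E * r := mul_le_mul_of_nonneg_left hsq hE0.le
      _ = r * E := mul_comm _ _
  constructor
  · show Real.sqrt (Real.exp (h 0) ^ 2 + _) ≤ _
    rw [h0, Real.exp_zero, one_pow]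
    calc Real.sqrt (1 + J) ≤ Real.sqrt 1 + Real.sqrt J := my_sqrt_add_le _ _ zero_le_one hJ0
      _ = 1 + Real.sqrt J := by rw [Real.sqrt_one]
      _ ≤ 1 + r * E := by linarith
  · intro lam hlam
    show Real.sqrt ((1 - lam * Real.exp (h 0)) ^ 2 + _) ≤ _
    rw [h0, Real.exp_zero, mul_one]
    have hval : (∫ t in Set.Ici (0:ℝ),
        (-(lam * Real.exp (h t) * g t)) ^ 2 * Real.exp (ρ * t)) = lam ^ 2 * J := by
      rw [hJdef, ← MeasureTheory.integral_const_mul]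
      exact integral_congr_ae (ae_of_all _ fun t => by ring)
    rw [hval]
    calc Real.sqrt ((1 - lam) ^ 2 + lam ^ 2 * J)
        ≤ Real.sqrt ((1 - lam) ^ 2) + Real.sqrt (lam ^ 2 * J) :=
          my_sqrt_add_le _ _ (sq_nonneg _) (by positivity)
      _ = |1 - lam| + lam * Real.sqrt J := by
          rw [Real.sqrt_sq_eq_abs, Real.sqrt_mul (sq_nonneg lam), Real.sqrt_sq hlam.le]
      _ ≤ (1 + lam) + lam * (r * E) := by
          have h1 : |1 - lam| ≤ 1 + lam := by
            calc |1 - lam| ≤ |(1:ℝ)| + |lam| := abs_sub _ _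
              _ = 1 + lam := by rw [abs_one, abs_of_pos hlam]
          have h2 : lam * Real.sqrt J ≤ lam * (r * E) :=
            mul_le_mul_of_nonneg_left hsqrtJ hlam.le
          linarith
      _ = 1 + lam + lam * r * E := by ring
end

section
/- Let 0 < ρ < ρ', let X be a normed space, let (E, 𝓔, F) be a measure space, let κ : E → [0,∞) with ∫_E κ(e)² F(de) < ∞, and let M : [0,∞) → [0,∞) be increasing. Set K := (1 + 1/√ρ)·√(1/(ρ'(ρ'−ρ))), let V_K(r) := r(1+r)e^{Kr} with inverse W_K : [0,∞) → [0,∞), and w_K(r) := min(W_K(r), r). Suppose γ assigns to each x ∈ X and e ∈ E a function γ(x,e) in the Filipović space H_{ρ'} with lim_{ξ→∞} γ(x,e)(ξ) = 0, such that for every e ∈ E, r ≥ 0 and x₁, x₂ ∈ X with ‖x₁‖_X ≤ r and ‖x₂‖_X ≤ r one has ‖γ(x₁,e) − γ(x₂,e)‖_{ρ'} ≤ κ(e)·M(r)·‖x₁ − x₂‖_X, and for every x ∈ X and e ∈ E one has ‖γ(x,e)‖_{ρ'} ≤ w_K(κ(e)·(1 + ‖x‖_X)). Then: (i) for every r ≥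 0 and all x₁, x₂ ∈ X with ‖x₁‖_X ≤ r and ‖x₂‖_X ≤ r, ∫_E ‖γ(x₁,e) − γ(x₂,e)‖_ρ² F(de) ≤ M(r)²·(∫_E κ(e)² F(de))·‖x₁ − x₂‖_X²; and (ii) for every x ∈ X, ∫_E ‖γ(x,e)‖_ρ² F(de) ≤ 2·(∫_E κ(e)² F(de))·(1 + ‖x‖_X²). -/
open MeasureTheory Filter

/-- The constant `K_{ρ,ρ'} = (1 + 1/√ρ)·√(1/(ρ'(ρ'−ρ)))`. -/
noncomputable def Krr (ρ ρ' : ℝ) : ℝ :=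
  (1 + 1 / Real.sqrt ρ) * Real.sqrt (1 / (ρ' * (ρ' - ρ)))

/-- The strictly increasing function `V_K(r) = r(1+r)e^{Kr}`. -/
noncomputable def VK (K r : ℝ) : ℝ := r * (1 + r) * Real.exp (K * r)

lemma filNorm_nonneg (ρ : ℝ) (h g : ℝ → ℝ) : 0 ≤ filNorm ρ h g :=
  Real.sqrt_nonneg _

lemma filNorm_mono_rho (ρ ρ' : ℝ) (hρρ' : ρ ≤ ρ') (h g : ℝ → ℝ)
    (hint : IntegrableOn (fun t => (g t) ^ 2 * Real.exp (ρ' * t)) (Set.Ici (0:ℝ))) :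
    filNorm ρ h g ≤ filNorm ρ' h g := by
  unfold filNorm
  apply Real.sqrt_le_sqrt
  have hle : (∫ t in Set.Ici (0:ℝ), (g t) ^ 2 * Real.exp (ρ * t))
      ≤ ∫ t in Set.Ici (0:ℝ), (g t) ^ 2 * Real.exp (ρ' * t) := by
    apply integral_mono_of_nonneg
    · filter_upwards with t
      positivity
    · exact hint
    · filter_upwards [ae_restrict_mem measurableSet_Ici] with t ht
      have : Real.exp (ρ * t) ≤ Real.exp (ρ' * t) :=
        Real.exp_le_exp.2 (mul_le_mul_of_nonneg_right hρρ' ht)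
      exact mul_le_mul_of_nonneg_left this (sq_nonneg _)
  linarith

/-- square-integral estimates in `H_ρ` for a family
`γ : X × E → H⁰_{ρ'}` satisfying the Lipschitz bound `‖γ(x₁,e) − γ(x₂,e)‖_{ρ'} ≤
κ(e) M(r) ‖x₁ − x₂‖` and the growth bound `‖γ(x,e)‖_{ρ'} ≤ w_K(κ(e)(1+‖x‖))`, where
`w_K(r) = min(W_K(r), r)` and `W_K` is the inverse of `V_K(r) = r(1+r)e^{Kr}` with
`K = K_{ρ,ρ'}`. -/
theorem filipovic_square_integral_estimates (ρ ρ' : ℝ) (hρ : 0 < ρ) (hρρ' : ρ < ρ')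
    {X : Type*} [NormedAddCommGroup X] [NormedSpace ℝ X]
    {E : Type*} [MeasurableSpace E] (F : Measure E)
    (κ : E → ℝ) (hκnn : ∀ e : E, 0 ≤ κ e)
    (hκ2 : Integrable (fun e => (κ e) ^ 2) F)
    (M : ℝ → ℝ) (hMmono : MonotoneOn M (Set.Ici 0))
    (hMnn : ∀ r : ℝ, 0 ≤ r → 0 ≤ M r)
    (W : ℝ → ℝ) (hWnn : ∀ r : ℝ, 0 ≤ r → 0 ≤ W r)
    (hWinv : ∀ r : ℝ, 0 ≤ r → VK (Krr ρ ρ') (W r) = r)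
    (γ dγ : X → E → ℝ → ℝ)
    (hmem : ∀ (x : X) (e : E), MemFil ρ' (γ x e) (dγ x e))
    (hlim : ∀ (x : X) (e : E), Tendsto (γ x e) atTop (nhds 0))
    (hLip : ∀ e : E, ∀ r : ℝ, 0 ≤ r → ∀ x₁ x₂ : X, ‖x₁‖ ≤ r → ‖x₂‖ ≤ r →
      filNorm ρ' (fun t => γ x₁ e t - γ x₂ e t) (fun t => dγ x₁ e t - dγ x₂ e t)
        ≤ κ e * M r * ‖x₁ - x₂‖)
    (hBd : ∀ (x : X) (e : E),
      filNorm ρ' (γ x e) (dγ x e)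
        ≤ min (W (κ e * (1 + ‖x‖))) (κ e * (1 + ‖x‖))) :
    (∀ r : ℝ, 0 ≤ r → ∀ x₁ x₂ : X, ‖x₁‖ ≤ r → ‖x₂‖ ≤ r →
      (∫ e, (filNorm ρ (fun t => γ x₁ e t - γ x₂ e t)
          (fun t => dγ x₁ e t - dγ x₂ e t)) ^ 2 ∂F)
        ≤ (M r) ^ 2 * (∫ e, (κ e) ^ 2 ∂F) * ‖x₁ - x₂‖ ^ 2) ∧
    (∀ x : X,
      (∫ e, (filNorm ρ (γ x e) (dγ x e)) ^ 2 ∂F)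
        ≤ 2 * (∫ e, (κ e) ^ 2 ∂F) * (1 + ‖x‖ ^ 2)) := by
  have hκint : (0:ℝ) ≤ ∫ e, (κ e) ^ 2 ∂F :=
    integral_nonneg fun e => sq_nonneg _
  constructor
  · intro r hr x₁ x₂ h₁ h₂
    have key : ∀ e : E,
        (filNorm ρ (fun t => γ x₁ e t - γ x₂ e t)
          (fun t => dγ x₁ e t - dγ x₂ e t)) ^ 2
          ≤ (κ e) ^ 2 * ((M r) ^ 2 * ‖x₁ - x₂‖ ^ 2) := by
      intro e
      obtain ⟨hm1, -, hi1⟩ := hmem x₁ e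
      obtain ⟨hm2, -, hi2⟩ := hmem x₂ e
      have hint : IntegrableOn
          (fun t => (dγ x₁ e t - dγ x₂ e t) ^ 2 * Real.exp (ρ' * t))
          (Set.Ici (0:ℝ)) := by
        apply Integrable.mono' ((hi1.const_mul 2).add (hi2.const_mul 2))
        · exact (((hm1.sub hm2).pow_const 2).mul
            (Real.measurable_exp.comp (measurable_const.mul measurable_id)).aemeasurable).aestronglyMeasurable
        · filter_upwards with t
          have hexp : (0:ℝ) < Real.exp (ρ' * t) := Real.exp_pos _
          simp only [Pi.add_apply, Real.norm_eq_abs]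
          rw [abs_of_nonneg (by positivity)]
          have : (dγ x₁ e t - dγ x₂ e t) ^ 2
              ≤ 2 * (dγ x₁ e t) ^ 2 + 2 * (dγ x₂ e t) ^ 2 := by
            nlinarith [sq_nonneg (dγ x₁ e t + dγ x₂ e t)]
          calc (dγ x₁ e t - dγ x₂ e t) ^ 2 * Real.exp (ρ' * t)
              ≤ (2 * (dγ x₁ e t) ^ 2 + 2 * (dγ x₂ e t) ^ 2) * Real.exp (ρ' * t) :=
                mul_le_mul_of_nonneg_right this hexp.le
            _ = 2 * ((dγ x₁ e t) ^ 2 * Real.exp (ρ' * t))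
                + 2 * ((dγ x₂ e t) ^ 2 * Real.exp (ρ' * t)) := by ring
      have h1 : filNorm ρ (fun t => γ x₁ e t - γ x₂ e t)
          (fun t => dγ x₁ e t - dγ x₂ e t)
          ≤ κ e * M r * ‖x₁ - x₂‖ :=
        (filNorm_mono_rho ρ ρ' hρρ'.le _ _ hint).trans
          (hLip e r hr x₁ x₂ h₁ h₂)
      have h2 := pow_le_pow_left₀ (filNorm_nonneg ρ _ _) h1 2
      calc (filNorm ρ (fun t => γ x₁ e t - γ x₂ e t)
            (fun t => dγ x₁ e t - dγ x₂ e t)) ^ 2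
          ≤ (κ e * M r * ‖x₁ - x₂‖) ^ 2 := h2
        _ = (κ e) ^ 2 * ((M r) ^ 2 * ‖x₁ - x₂‖ ^ 2) := by ring
    calc (∫ e, (filNorm ρ (fun t => γ x₁ e t - γ x₂ e t)
            (fun t => dγ x₁ e t - dγ x₂ e t)) ^ 2 ∂F)
        ≤ ∫ e, (κ e) ^ 2 * ((M r) ^ 2 * ‖x₁ - x₂‖ ^ 2) ∂F := by
          apply integral_mono_of_nonneg
          · filter_upwards with e
            exact sq_nonneg _
          · exact hκ2.mul_const _
          · filter_upwards with e
            exact key e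
      _ = (∫ e, (κ e) ^ 2 ∂F) * ((M r) ^ 2 * ‖x₁ - x₂‖ ^ 2) :=
          integral_mul_const _ _
      _ = (M r) ^ 2 * (∫ e, (κ e) ^ 2 ∂F) * ‖x₁ - x₂‖ ^ 2 := by ring
  · intro x
    have key : ∀ e : E,
        (filNorm ρ (γ x e) (dγ x e)) ^ 2 ≤ (κ e) ^ 2 * (1 + ‖x‖) ^ 2 := by
      intro e
      obtain ⟨-, -, hi⟩ := hmem x e
      have h1 : filNorm ρ (γ x e) (dγ x e) ≤ κ e * (1 + ‖x‖) :=
        (filNorm_mono_rho ρ ρ' hρρ'.le _ _ hi).trans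
          ((hBd x e).trans (min_le_right _ _))
      have h2 := pow_le_pow_left₀ (filNorm_nonneg ρ _ _) h1 2
      calc (filNorm ρ (γ x e) (dγ x e)) ^ 2
          ≤ (κ e * (1 + ‖x‖)) ^ 2 := h2
        _ = (κ e) ^ 2 * (1 + ‖x‖) ^ 2 := by ring
    have hsq : (1 + ‖x‖) ^ 2 ≤ 2 * (1 + ‖x‖ ^ 2) := by
      nlinarith [sq_nonneg (1 - ‖x‖)]
    calc (∫ e, (filNorm ρ (γ x e) (dγ x e)) ^ 2 ∂F)
        ≤ ∫ e, (κ e) ^ 2 * (1 + ‖x‖) ^ 2 ∂F := by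
          apply integral_mono_of_nonneg
          · filter_upwards with e
            exact sq_nonneg _
          · exact hκ2.mul_const _
          · filter_upwards with e
            exact key e
      _ = (∫ e, (κ e) ^ 2 ∂F) * (1 + ‖x‖) ^ 2 := integral_mul_const _ _
      _ ≤ (∫ e, (κ e) ^ 2 ∂F) * (2 * (1 + ‖x‖ ^ 2)) :=
          mul_le_mul_of_nonneg_left hsq hκint
      _ = 2 * (∫ e, (κ e) ^ 2 ∂F) * (1 + ‖x‖ ^ 2) := by ring
end
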